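/- arXiv:1410.1997 — 7 statements merged into one kernel-verified Lean document; each statement's English description precedes it below -/
import Mathlib

section
/- For any θ with 1 < θ < γ, with probability 1 − O(n^{1−θ}) the quantity E(G_n) = (ξ_1 + … + ξ_n)/2 satisfies n·E[ξ]/4 ≤ E(G_n) ≤ 3n·E[ξ]/4. -/
open MeasureTheory ProbabilityTheory Filter Finset

lemma aux_sum_odd (m : ℕ) : ∑ k ∈ range m, (2 * (k:ℝ) + 1) = (m:ℝ)^2 := by
  induction m with
  | zero => simp
  | succ m ih => rw [Finset.sum_range_succ, ih]; push_cast; ring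

lemma aux_toReal_prob_le_one {Ω : Type*} [MeasureSpace Ω] [IsProbabilityMeasure (ℙ : Measure Ω)]
    (s : Set Ω) : (ℙ s).toReal ≤ 1 := by
  simpa using ENNReal.toReal_mono ENNReal.one_ne_top (prob_le_one (μ := (ℙ : Measure Ω)) (s := s))

lemma aux_sum_rpow {p : ℝ} (hp : -1 < p) (hp0 : p < 0) (n : ℕ) :
    ∑ k ∈ range n, ((k:ℝ)+1) ^ p ≤ 1 + (n:ℝ) ^ (p+1) / (p+1) := by
  have hp1 : 0 < p + 1 := by linarith
  cases n with
  | zero => simp [Real.zero_rpow hp1.ne']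
  | succ m =>
    rw [Finset.sum_range_succ']
    have hanti : AntitoneOn (fun x : ℝ => x ^ p) (Set.Icc 1 (1 + m)) := by
      intro a ha b hb hab
      exact Real.rpow_le_rpow_of_nonpos (lt_of_lt_of_le one_pos ha.1) hab hp0.le
    have h1 := hanti.sum_le_integral
    have h2 : ∫ x in (1:ℝ)..(1+m), x ^ p = ((1+(m:ℝ)) ^ (p+1) - 1) / (p+1) := by
      rw [integral_rpow (Or.inl hp), Real.one_rpow]
    have h3 : (∑ i ∈ range m, ((1:ℝ) + (i + 1 : ℕ)) ^ p) ≤ ((1+(m:ℝ)) ^ (p+1) - 1) / (p+1) :=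
      h2 ▸ h1
    have hend : (((0:ℕ):ℝ) + 1) ^ p = 1 := by norm_num
    rw [hend]
    have heq : (∑ i ∈ range m, (((i+1:ℕ):ℝ)+1) ^ p)
        = ∑ i ∈ range m, ((1:ℝ) + (i + 1 : ℕ)) ^ p :=
      Finset.sum_congr rfl (fun i _ => by rw [add_comm])
    rw [heq]
    have hfact : ((1+(m:ℝ))^(p+1) - 1)/(p+1) ≤ (1+(m:ℝ))^(p+1)/(p+1) := by
      gcongr; linarith
    have hcast2 : ((m+1:ℕ):ℝ) = 1+(m:ℝ) := by push_cast; ring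
    rw [hcast2]
    linarith [h3, hfact]

lemma aux_tail_bound {Ω : Type*} [MeasureSpace Ω] [IsProbabilityMeasure (ℙ : Measure Ω)]
    (X : Ω → ℕ) (γ : ℝ) (hγ : 0 < γ) (L : ℝ → ℝ)
    (hsv : ∀ t : ℝ, 0 < t → Tendsto (fun x => L (t * x) / L x) atTop (nhds 1))
    (htail : ∀ x : ℝ, 0 < x → ℙ {ω | x < (X ω : ℝ)} = ENNReal.ofReal (L x * x ^ (-γ)))
    (ε : ℝ) (hε : 0 < ε) (hεγ : ε < γ) :
    ∃ C : ℝ, 1 ≤ C ∧ ∀ x : ℝ, 1 ≤ x → (ℙ {ω | x < (X ω : ℝ)}).toReal ≤ C * x ^ (ε - γ) := by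
  have h2 := hsv 2 two_pos
  have hr : (1:ℝ) < 2 ^ ε := Real.one_lt_rpow_iff_of_pos two_pos |>.mpr (Or.inl ⟨one_lt_two, hε⟩)
  have hr0 : (0:ℝ) < 2 ^ ε := lt_trans one_pos hr
  have hev : ∀ᶠ x in atTop, L (2*x)/L x ∈ Set.Ioo (1/2 : ℝ) (2^ε) :=
    h2.eventually (Ioo_mem_nhds (by norm_num) hr)
  obtain ⟨a, ha⟩ := eventually_atTop.mp hev
  set x0 : ℝ := max a 1 with hx0def
  have hx01 : (1:ℝ) ≤ x0 := le_max_right a 1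
  have hx0pos : (0:ℝ) < x0 := lt_of_lt_of_le one_pos hx01
  set maxL : ℝ → ℝ := fun x => max (L x) 0 with hmaxLdef
  have hstep : ∀ x : ℝ, x0 ≤ x → maxL (2*x) ≤ 2^ε * maxL x := by
    intro x hx
    have hxa : a ≤ x := le_trans (le_max_left a 1) hx
    obtain ⟨hq1, hq2⟩ := ha x hxa
    have hLne : L x ≠ 0 := by
      intro h0
      rw [h0, div_zero] at hq1; norm_num at hq1
    have hL2 : L (2*x) = (L (2*x) / L x) * L x := (div_mul_cancel₀ _ hLne).symm
    rcases lt_or_gt_of_ne hLne with hneg | hpos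
    · have : L (2*x) < 0 := by
        rw [hL2]
        exact mul_neg_of_pos_of_neg (lt_trans (by norm_num) hq1) hneg
      simp only [hmaxLdef]
      rw [max_eq_right this.le]
      positivity
    · have h1 : L (2*x) ≤ 2^ε * L x := by
        rw [hL2]
        exact mul_le_mul_of_nonneg_right hq2.le hpos.le
      have h2' : (0:ℝ) ≤ 2^ε * L x := by positivity
      simp only [hmaxLdef]
      rw [max_eq_left hpos.le]
      exact max_le h1 h2'
  have hchain : ∀ k : ℕ, ∀ x : ℝ, x0 ≤ x → maxL (2^k * x) ≤ (2^ε)^k * maxL x := by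
    intro k
    induction k with
    | zero => intro x hx; simp
    | succ j ih =>
      intro x hx
      have h2x : x0 ≤ 2*x := by nlinarith
      have : (2:ℝ)^(j+1) * x = 2^j * (2*x) := by ring
      rw [this, pow_succ]
      calc maxL (2^j * (2*x)) ≤ (2^ε)^j * maxL (2*x) := ih (2*x) h2x
        _ ≤ (2^ε)^j * (2^ε * maxL x) := by
            exact mul_le_mul_of_nonneg_left (hstep x hx) (by positivity)
        _ = (2^ε)^j * 2^ε * maxL x := by ring
  have hbound : ∀ y : ℝ, 0 < y → maxL y ≤ y ^ γ := by
    intro y hy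
    rcases le_or_gt (L y) 0 with hL | hL
    · simp only [hmaxLdef]; rw [max_eq_right hL]; positivity
    · have h := htail y hy
      have hle : ℙ {ω | y < (X ω : ℝ)} ≤ 1 := prob_le_one
      rw [h, ENNReal.ofReal_le_one] at hle
      have hyγ : (0:ℝ) < y ^ γ := Real.rpow_pos_of_pos hy γ
      have hLy : L y ≤ y ^ γ := by
        have : L y = (L y * y^(-γ)) * y^γ := by
          rw [mul_assoc, ← Real.rpow_add hy]; simp
        rw [this]
        calc (L y * y^(-γ)) * y^γ ≤ 1 * y^γ :=
              mul_le_mul_of_nonneg_right hle hyγ.le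
          _ = y ^ γ := one_mul _
      simp only [hmaxLdef]; rw [max_eq_left hL.le]; exact hLy
  set C1 : ℝ := (2*x0)^γ / x0^ε with hC1def
  set C2 : ℝ := x0^(γ-ε) with hC2def
  refine ⟨max (max C1 C2) 1, le_max_right _ 1, fun x hx => ?_⟩
  have hxpos : (0:ℝ) < x := lt_of_lt_of_le one_pos hx
  have hxeγ : (0:ℝ) ≤ x ^ (ε - γ) := Real.rpow_nonneg hxpos.le _
  rcases lt_or_ge x x0 with hlt | hge
  · -- small x : probability ≤ 1 ≤ C2 * x^(ε-γ)
    have h1 : (ℙ {ω | x < (X ω : ℝ)}).toReal ≤ 1 := by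
      have := prob_le_one (μ := (ℙ : Measure Ω)) (s := {ω | x < (X ω : ℝ)})
      simpa using ENNReal.toReal_mono (by norm_num) this
    have h2' : (1:ℝ) ≤ C2 * x ^ (ε-γ) := by
      have hmon : x0 ^ (ε-γ) ≤ x ^ (ε-γ) :=
        Real.rpow_le_rpow_of_nonpos hxpos hlt.le (by linarith)
      have hone : C2 * x0 ^ (ε-γ) = 1 := by
        rw [hC2def, ← Real.rpow_add hx0pos]; norm_num
      calc (1:ℝ) = C2 * x0 ^ (ε-γ) := hone.symm
        _ ≤ C2 * x ^ (ε-γ) := by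
            refine mul_le_mul_of_nonneg_left hmon ?_
            rw [hC2def]; positivity
    calc (ℙ {ω | x < (X ω : ℝ)}).toReal ≤ 1 := h1
      _ ≤ C2 * x ^ (ε-γ) := h2'
      _ ≤ max (max C1 C2) 1 * x ^ (ε-γ) := by
          refine mul_le_mul_of_nonneg_right ?_ hxeγ
          exact le_trans (le_max_right C1 C2) (le_max_left _ 1)
  · -- large x
    have hex : ∃ k : ℕ, x < 2^(k+1) * x0 := by
      obtain ⟨n, hn⟩ := pow_unbounded_of_one_lt x (one_lt_two (α := ℝ))
      refine ⟨n, lt_of_lt_of_le hn ?_⟩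
      have h1 : (2:ℝ)^n ≤ 2^(n+1) := by
        apply pow_le_pow_right₀ (by norm_num) (Nat.le_succ n)
      nlinarith [pow_pos (two_pos (α := ℝ)) (n+1)]
    set k := Nat.find hex with hkdef
    have hk1 : x < 2^(k+1) * x0 := Nat.find_spec hex
    have hk2 : 2^k * x0 ≤ x := by
      cases hk : k with
      | zero => simpa using hge
      | succ j =>
        have := Nat.find_min hex (by omega : j < k)
        push_neg at this
        simpa [hk] using this
    set y : ℝ := x / 2^k with hydef
    have h2kpos : (0:ℝ) < 2^k := pow_pos two_pos k
    have hy1 : x0 ≤ y := by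
      rw [hydef, le_div_iff₀ h2kpos]; linarith [hk2]
    have hy2 : y ≤ 2*x0 := by
      rw [hydef, div_le_iff₀ h2kpos]
      have : (2:ℝ)^(k+1) = 2 * 2^k := by ring
      nlinarith [hk1]
    have hypos : (0:ℝ) < y := lt_of_lt_of_le hx0pos hy1
    have hxy : x = 2^k * y := by rw [hydef, mul_div_assoc', eq_div_iff h2kpos.ne', mul_comm]
    have hb1 : maxL x ≤ (2^ε)^k * maxL y := by rw [hxy]; exact hchain k y hy1
    have hb2 : maxL y ≤ (2*x0)^γ := by
      calc maxL y ≤ y ^ γ := hbound y hypos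
        _ ≤ (2*x0)^γ := Real.rpow_le_rpow hypos.le hy2 hγ.le
    have hb3 : ((2:ℝ)^ε)^k = ((2:ℝ)^(k:ℕ) : ℝ)^ε := by
      rw [← Real.rpow_natCast ((2:ℝ)^ε) k, ← Real.rpow_natCast (2:ℝ) k,
        ← Real.rpow_mul (by norm_num), ← Real.rpow_mul (by norm_num), mul_comm]
    have hb4 : ((2:ℝ)^(k:ℕ) : ℝ)^ε ≤ (x/x0)^ε := by
      refine Real.rpow_le_rpow (by positivity) ?_ hε.le
      rw [le_div_iff₀ hx0pos]; exact hk2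
    have hmaxLx : maxL x ≤ (x/x0)^ε * (2*x0)^γ := by
      calc maxL x ≤ (2^ε)^k * maxL y := hb1
        _ ≤ (2^ε)^k * (2*x0)^γ := by
            refine mul_le_mul_of_nonneg_left hb2 (by positivity)
        _ ≤ (x/x0)^ε * (2*x0)^γ := by
            refine mul_le_mul_of_nonneg_right ?_ (by positivity)
            rw [hb3]; exact hb4
    have hPto : (ℙ {ω | x < (X ω : ℝ)}).toReal ≤ maxL x * x ^ (-γ) := by
      rw [htail x hxpos]
      rcases le_or_gt (L x * x^(-γ)) 0 with hneg | hpos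
      · rw [ENNReal.ofReal_eq_zero.mpr hneg]
        simp only [ENNReal.toReal_zero]
        have : (0:ℝ) ≤ maxL x * x^(-γ) := by
          refine mul_nonneg (le_max_right _ _) (Real.rpow_nonneg hxpos.le _)
        exact this
      · rw [ENNReal.toReal_ofReal hpos.le]
        refine mul_le_mul_of_nonneg_right (le_max_left _ _) (Real.rpow_nonneg hxpos.le _)
    have hfinal : maxL x * x ^ (-γ) ≤ C1 * x ^ (ε - γ) := by
      have hdr : (x/x0)^ε = x^ε / x0^ε := Real.div_rpow hxpos.le hx0pos.le ε
      have hxx : x^ε * x^(-γ) = x^(ε-γ) := by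
        rw [← Real.rpow_add hxpos]; ring_nf
      calc maxL x * x ^ (-γ) ≤ ((x/x0)^ε * (2*x0)^γ) * x ^ (-γ) :=
            mul_le_mul_of_nonneg_right hmaxLx (Real.rpow_nonneg hxpos.le _)
        _ = C1 * (x^ε * x^(-γ)) := by rw [hdr, hC1def]; ring
        _ = C1 * x ^ (ε-γ) := by rw [hxx]
    calc (ℙ {ω | x < (X ω : ℝ)}).toReal ≤ C1 * x ^ (ε-γ) := le_trans hPto hfinal
      _ ≤ max (max C1 C2) 1 * x ^ (ε-γ) := by
          refine mul_le_mul_of_nonneg_right ?_ hxeγ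
          exact le_trans (le_max_left C1 C2) (le_max_left _ 1)

set_option maxHeartbeats 1000000 in
/-- **Lemma (number of edges).** For any `1 < θ < γ`, with probability `1 - O(n^{1-θ})`
the number of edges `E(G_n) = (ξ₁ + … + ξₙ)/2` satisfies
`n E[ξ]/4 ≤ E(G_n) ≤ 3 n E[ξ]/4`. -/
theorem edges_concentration
    {Ω : Type*} [MeasureSpace Ω] [IsProbabilityMeasure (ℙ : Measure Ω)]
    (ξ : ℕ → Ω → ℕ) (hmeas : ∀ i, Measurable (ξ i))
    (hindep : iIndepFun ξ ℙ)
    (hident : ∀ i, IdentDistrib (ξ i) (ξ 0) ℙ ℙ)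
    (hpos : ∀ i ω, 1 ≤ ξ i ω)
    (γ : ℝ) (hγ1 : 1 < γ) (hγ2 : γ < 2)
    (L : ℝ → ℝ)
    (hsv : ∀ t : ℝ, 0 < t → Tendsto (fun x => L (t * x) / L x) atTop (nhds 1))
    (htail : ∀ x : ℝ, 0 < x →
      ℙ {ω | x < (ξ 0 ω : ℝ)} = ENNReal.ofReal (L x * x ^ (-γ)))
    (hint : Integrable (fun ω => (ξ 0 ω : ℝ)) ℙ)
    (θ : ℝ) (hθ1 : 1 < θ) (hθγ : θ < γ) :
    ∃ C : ℝ, ∀ n : ℕ, 1 ≤ n →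
      (ℙ {ω | ¬ ((n : ℝ) * (∫ ω', (ξ 0 ω' : ℝ) ∂ℙ) / 4 ≤ (∑ i ∈ range n, (ξ i ω : ℝ)) / 2 ∧
          (∑ i ∈ range n, (ξ i ω : ℝ)) / 2 ≤ 3 * (n : ℝ) * (∫ ω', (ξ 0 ω' : ℝ) ∂ℙ) / 4)}).toReal
        ≤ C * (n : ℝ) ^ ((1 : ℝ) - θ) := by
  classical
  set μ := ∫ ω', (ξ 0 ω' : ℝ) ∂ℙ with hμdef
  set θ' : ℝ := (θ + γ)/2 with hθ'def
  have hθ'1 : 1 < θ' := by rw [hθ'def]; linarith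
  have hθ'2 : θ' < 2 := by rw [hθ'def]; linarith
  have hθθ' : θ < θ' := by rw [hθ'def]; linarith
  have hθ'γ : θ' < γ := by rw [hθ'def]; linarith
  -- tail bound
  obtain ⟨C0, hC01, hC0⟩ := aux_tail_bound (ξ 0) γ (by linarith) L hsv htail (γ - θ')
    (by linarith) (by linarith)
  have hC0' : ∀ x : ℝ, 1 ≤ x → (ℙ {ω | x < (ξ 0 ω : ℝ)}).toReal ≤ C0 * x ^ (-θ') := by
    intro x hx
    have h := hC0 x hx
    rwa [show γ - θ' - γ = -θ' by ring] at h
  set C2 : ℝ := C0 * 2 ^ θ' with hC2def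
  have h2θ' : (1:ℝ) ≤ 2 ^ θ' := Real.one_le_rpow one_le_two (by linarith)
  have hC21 : 1 ≤ C2 := by
    calc (1:ℝ) = 1 * 1 := by norm_num
      _ ≤ C0 * 2^θ' := mul_le_mul hC01 h2θ' (by norm_num) (by linarith)
  have hC2pos : 0 < C2 := lt_of_lt_of_le one_pos hC21
  -- basic facts about μ
  have hμ1 : 1 ≤ μ := by
    have h := integral_mono (μ := (ℙ : Measure Ω)) (integrable_const (1:ℝ)) hint
      (fun ω => by simpa using hpos 0 ω)
    simpa using h
  have hμpos : 0 < μ := lt_of_lt_of_le one_pos hμ1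
  -- truncated means converge
  set μN : ℕ → ℝ := fun k => ∫ ω, ((min (ξ 0 ω) k : ℕ) : ℝ) ∂ℙ with hμNdef
  have hμNconv : Tendsto μN atTop (nhds μ) := by
    refine tendsto_integral_of_dominated_convergence (fun ω => (ξ 0 ω : ℝ))
      (fun k => ((measurable_from_nat (f := fun m : ℕ => ((min m k : ℕ) : ℝ))).comp
        (hmeas 0)).aestronglyMeasurable)
      hint (fun k => ae_of_all _ fun ω => ?_) (ae_of_all _ fun ω => ?_)
    · rw [Real.norm_eq_abs, abs_of_nonneg (Nat.cast_nonneg _)]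
      show ((min (ξ 0 ω) k : ℕ) : ℝ) ≤ ((ξ 0 ω : ℕ) : ℝ)
      exact_mod_cast min_le_left (ξ 0 ω) k
    · refine tendsto_const_nhds.congr' ?_
      filter_upwards [eventually_ge_atTop (ξ 0 ω)] with k hk
      simp [min_eq_left hk]
  obtain ⟨N0, hN0⟩ := Metric.tendsto_atTop.mp hμNconv (μ/4) (by positivity)
  -- the constant
  refine ⟨C0 + 48*C2 + 48*C2/(2-θ') + (N0:ℝ)^(θ-1) + 1, fun n hn1 => ?_⟩
  have hn1R : (1:ℝ) ≤ (n:ℝ) := by exact_mod_cast hn1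
  have hnpos : (0:ℝ) < n := lt_of_lt_of_le one_pos hn1R
  have htpos : (0:ℝ) ≤ (n:ℝ) ^ ((1:ℝ) - θ) := Real.rpow_nonneg hnpos.le _
  have h2mθ' : (0:ℝ) < 2 - θ' := by linarith
  have hCextra : (0:ℝ) ≤ C0 + 48*C2 + 48*C2/(2-θ') := by
    have : (0:ℝ) ≤ 48*C2/(2-θ') := div_nonneg (by linarith) h2mθ'.le
    linarith
  have hN0nonneg : (0:ℝ) ≤ (N0:ℝ)^(θ-1) := Real.rpow_nonneg (Nat.cast_nonneg N0) _
  rcases lt_or_ge n N0 with hsmall | hbig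
  · -- small n
    refine le_trans (aux_toReal_prob_le_one _) ?_
    have h2 : (1:ℝ) ≤ (N0:ℝ)^(θ-1) * (n:ℝ)^((1:ℝ)-θ) := by
      have hmon : (n:ℝ)^(θ-1) ≤ (N0:ℝ)^(θ-1) :=
        Real.rpow_le_rpow hnpos.le (by exact_mod_cast hsmall.le) (by linarith)
      have hid : (n:ℝ)^(θ-1) * (n:ℝ)^((1:ℝ)-θ) = 1 := by
        rw [← Real.rpow_add hnpos, show θ-1+((1:ℝ)-θ) = 0 by ring, Real.rpow_zero]
      calc (1:ℝ) = (n:ℝ)^(θ-1) * (n:ℝ)^((1:ℝ)-θ) := hid.symm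
        _ ≤ (N0:ℝ)^(θ-1) * (n:ℝ)^((1:ℝ)-θ) := mul_le_mul_of_nonneg_right hmon htpos
    refine le_trans h2 ?_
    refine mul_le_mul_of_nonneg_right ?_ htpos
    linarith
  · -- main case : n ≥ N0
    set Yf : ℕ → Ω → ℝ := fun i => (fun m : ℕ => ((min m n : ℕ) : ℝ)) ∘ ξ i with hYfdef
    have hYmeas : ∀ i, Measurable (Yf i) := fun i => measurable_from_nat.comp (hmeas i)
    have hYmem : ∀ i, MemLp (Yf i) 2 ℙ := by
      intro i
      refine MemLp.of_bound (hYmeas i).aestronglyMeasurable (n:ℝ) (ae_of_all _ fun ω => ?_)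
      rw [Real.norm_eq_abs, abs_of_nonneg (Nat.cast_nonneg _)]
      show ((min (ξ i ω) n : ℕ) : ℝ) ≤ ((n : ℕ) : ℝ)
      exact_mod_cast min_le_right (ξ i ω) n
    have hYint : ∀ i, Integrable (Yf i) ℙ := fun i => (hYmem i).integrable one_le_two
    have hYid : ∀ i, IdentDistrib (Yf i) (Yf 0) ℙ ℙ := fun i =>
      (hident i).comp measurable_from_nat
    have hYpair : Set.Pairwise ↑(range n) fun i j => IndepFun (Yf i) (Yf j) ℙ :=
      fun i _ j _ hij =>
        (hindep.comp (fun _ (m : ℕ) => ((min m n : ℕ) : ℝ))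
          (fun _ => measurable_from_nat)).indepFun hij
    have hμNn : μN n = ∫ ω, Yf 0 ω ∂ℙ := rfl
    have hμNle : μN n ≤ μ := by
      rw [hμNn, hμdef]
      exact integral_mono (hYint 0) hint (fun ω => by
        simp only [hYfdef, Function.comp_apply]
        exact_mod_cast min_le_left (ξ 0 ω) n)
    have hμNclose : μ - μN n ≤ μ/4 := by
      have h := hN0 n hbig
      rw [Real.dist_eq] at h
      have h' := abs_lt.mp h
      linarith [h'.1]
    -- the truncated sum
    set S' : Ω → ℝ := ∑ i ∈ range n, Yf i with hS'def
    have hS'mem : MemLp S' 2 ℙ := memLp_finsetSum' _ (fun i _ => hYmem i)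
    have hES' : ∫ ω, S' ω ∂ℙ = (n:ℝ) * μN n := by
      rw [hS'def]
      simp only [Finset.sum_apply]
      rw [integral_finset_sum _ (fun i _ => hYint i)]
      rw [Finset.sum_congr rfl (fun i _ => (hYid i).integral_eq)]
      rw [Finset.sum_const, card_range, nsmul_eq_mul, hμNn]
    -- second moment of the truncated variable
    have hA : ∀ k : ℕ, MeasurableSet {ω | ((k:ℕ):ℝ) < (ξ 0 ω : ℝ)} := fun k =>
      (measurable_from_nat.comp (hmeas 0) :
        Measurable fun ω => ((ξ 0 ω : ℕ) : ℝ)) measurableSet_Ioi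
    have hsq : ∫ ω, (Yf 0 ω)^2 ∂ℙ ≤
        ∑ k ∈ range n, (2*(k:ℝ)+1) * (ℙ {ω | ((k:ℕ):ℝ) < (ξ 0 ω : ℝ)}).toReal := by
      set R : Ω → ℝ := fun ω =>
        ∑ k ∈ range n, Set.indicator {ω' | ((k:ℕ):ℝ) < (ξ 0 ω' : ℝ)}
          (fun _ => 2*(k:ℝ)+1) ω with hRdef
      have hRint : Integrable R ℙ :=
        integrable_finset_sum _ (fun k _ => (integrable_const _).indicator (hA k))
      have hpt : ∀ ω, (Yf 0 ω)^2 ≤ R ω := by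
        intro ω
        have hmn : min (ξ 0 ω) n ≤ n := min_le_right _ _
        have hmξ : min (ξ 0 ω) n ≤ ξ 0 ω := min_le_left _ _
        have h1 : (Yf 0 ω)^2 = ∑ k ∈ range (min (ξ 0 ω) n), (2*(k:ℝ)+1) :=
          (aux_sum_odd _).symm
        rw [h1]
        have h2 : ∑ k ∈ range (min (ξ 0 ω) n), (2*(k:ℝ)+1)
            = ∑ k ∈ range n, (if k < min (ξ 0 ω) n then 2*(k:ℝ)+1 else 0) := by
          rw [Finset.sum_congr rfl
            (fun k hk => (if_pos (mem_range.mp hk)).symm :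
              ∀ k ∈ range (min (ξ 0 ω) n), (2*(k:ℝ)+1)
                = if k < min (ξ 0 ω) n then 2*(k:ℝ)+1 else 0)]
          exact Finset.sum_subset (range_subset_range.mpr hmn)
            (fun k _ hk => if_neg (fun h => hk (mem_range.mpr h)))
        rw [h2, hRdef]
        refine Finset.sum_le_sum (fun k hk => ?_)
        by_cases hkm : k < min (ξ 0 ω) n
        · rw [if_pos hkm]
          have hmem : ω ∈ {ω' | ((k:ℕ):ℝ) < (ξ 0 ω' : ℝ)} := by
            simp only [Set.mem_setOf_eq]
            exact_mod_cast lt_of_lt_of_le hkm hmξ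
          rw [Set.indicator_of_mem hmem]
        · rw [if_neg hkm]
          exact Set.indicator_nonneg (fun _ _ => by positivity) ω
      refine le_trans (integral_mono (hYmem 0).integrable_sq hRint hpt) (le_of_eq ?_)
      rw [hRdef, integral_finset_sum _ (fun k _ => (integrable_const _).indicator (hA k))]
      refine Finset.sum_congr rfl (fun k _ => ?_)
      rw [integral_indicator_const _ (hA k), smul_eq_mul, mul_comm, measureReal_def]
    -- bound each tail term
    have hterm : ∀ k ∈ range n,
        (2*(k:ℝ)+1) * (ℙ {ω | ((k:ℕ):ℝ) < (ξ 0 ω : ℝ)}).toReal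
          ≤ 3*C2 * ((k:ℝ)+1)^((1:ℝ)-θ') := by
      intro k _
      rcases Nat.eq_zero_or_pos k with hk0 | hkpos
      · subst hk0
        have h1 : (2*((0:ℕ):ℝ)+1) * (ℙ {ω | (((0:ℕ)):ℝ) < (ξ 0 ω : ℝ)}).toReal ≤ 1 := by
          have := aux_toReal_prob_le_one (Ω := Ω) {ω | (((0:ℕ)):ℝ) < (ξ 0 ω : ℝ)}
          simpa using this
        have h2 : (1:ℝ) ≤ 3*C2 * (((0:ℕ):ℝ)+1)^((1:ℝ)-θ') := by
          simp only [Nat.cast_zero, zero_add, Real.one_rpow]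
          linarith
        exact le_trans h1 h2
      · have hk1 : (1:ℝ) ≤ (k:ℝ) := by exact_mod_cast hkpos
        have hkposR : (0:ℝ) < k := lt_of_lt_of_le one_pos hk1
        have hp := hC0' (k:ℝ) hk1
        have hck : (k:ℝ)^(-θ') ≤ 2^θ' * ((k:ℝ)+1)^(-θ') := by
          have h1 : ((2:ℝ)*k)^(-θ') ≤ ((k:ℝ)+1)^(-θ') :=
            Real.rpow_le_rpow_of_nonpos (by linarith) (by linarith) (by linarith)
          have h2 : ((2:ℝ)*k)^(-θ') = 2^(-θ') * (k:ℝ)^(-θ') :=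
            Real.mul_rpow (by norm_num) hkposR.le
          have h3 : (0:ℝ) < 2^(-θ') := Real.rpow_pos_of_pos two_pos _
          have h4 : (2:ℝ)^θ' * 2^(-θ') = 1 := by
            rw [← Real.rpow_add two_pos]; norm_num
          calc (k:ℝ)^(-θ') = 2^θ' * (2^(-θ') * (k:ℝ)^(-θ')) := by
                rw [← mul_assoc, h4, one_mul]
            _ = 2^θ' * ((2:ℝ)*k)^(-θ') := by rw [h2]
            _ ≤ 2^θ' * ((k:ℝ)+1)^(-θ') := by
                refine mul_le_mul_of_nonneg_left h1 ?_
                positivity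
        have hsplit : ((k:ℝ)+1)^((1:ℝ)-θ') = ((k:ℝ)+1) * ((k:ℝ)+1)^(-θ') := by
          rw [show (1:ℝ)-θ' = 1 + (-θ') by ring, Real.rpow_add (by positivity),
            Real.rpow_one]
        have hPnonneg : (0:ℝ) ≤ (ℙ {ω | ((k:ℕ):ℝ) < (ξ 0 ω : ℝ)}).toReal :=
          ENNReal.toReal_nonneg
        have hknn : (0:ℝ) ≤ ((k:ℝ)+1)^(-θ') := Real.rpow_nonneg (by positivity) _
        calc (2*(k:ℝ)+1) * (ℙ {ω | ((k:ℕ):ℝ) < (ξ 0 ω : ℝ)}).toReal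
            ≤ (3*(k:ℝ)) * (C0 * (k:ℝ)^(-θ')) := by
              refine mul_le_mul (by linarith) hp hPnonneg (by linarith)
          _ ≤ (3*((k:ℝ)+1)) * (C0 * (2^θ' * ((k:ℝ)+1)^(-θ'))) := by
              refine mul_le_mul (by linarith) ?_ (by positivity) (by linarith)
              exact mul_le_mul_of_nonneg_left hck (by linarith)
          _ = 3*C2 * (((k:ℝ)+1) * ((k:ℝ)+1)^(-θ')) := by rw [hC2def]; ring
          _ = 3*C2 * ((k:ℝ)+1)^((1:ℝ)-θ') := by rw [hsplit]
    have hp1 : (-1:ℝ) < 1 - θ' := by linarith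
    have hp0 : (1:ℝ) - θ' < 0 := by linarith
    have hsum2 : ∫ ω, (Yf 0 ω)^2 ∂ℙ ≤ 3*C2*(1 + (n:ℝ)^((2:ℝ)-θ')/(2-θ')) := by
      have h1 := Finset.sum_le_sum hterm
      have h2 := aux_sum_rpow hp1 hp0 n
      have h3 : ∑ k ∈ range n, 3*C2 * ((k:ℝ)+1)^((1:ℝ)-θ')
          = 3*C2 * ∑ k ∈ range n, ((k:ℝ)+1)^((1:ℝ)-θ') := by
        rw [Finset.mul_sum]
      have h4 : (1:ℝ) - θ' + 1 = 2 - θ' := by ring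
      calc ∫ ω, (Yf 0 ω)^2 ∂ℙ
          ≤ ∑ k ∈ range n, 3*C2 * ((k:ℝ)+1)^((1:ℝ)-θ') := le_trans hsq h1
        _ = 3*C2 * ∑ k ∈ range n, ((k:ℝ)+1)^((1:ℝ)-θ') := h3
        _ ≤ 3*C2 * (1 + (n:ℝ)^((1:ℝ)-θ'+1)/((1:ℝ)-θ'+1)) := by
            refine mul_le_mul_of_nonneg_left h2 (by positivity)
        _ = 3*C2*(1 + (n:ℝ)^((2:ℝ)-θ')/(2-θ')) := by rw [h4]
    -- variance bound
    have hvar0 : variance (Yf 0) ℙ ≤ ∫ ω, (Yf 0 ω)^2 ∂ℙ := by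
      have h := variance_le_expectation_sq (μ := (ℙ : Measure Ω)) (X := Yf 0)
        (hYmeas 0).aestronglyMeasurable
      simpa using h
    have hvarS' : variance S' ℙ ≤ (n:ℝ) * (3*C2*(1 + (n:ℝ)^((2:ℝ)-θ')/(2-θ'))) := by
      rw [hS'def, IndepFun.variance_sum (fun i _ => hYmem i) hYpair]
      rw [Finset.sum_congr rfl (fun i _ => (hYid i).variance_eq)]
      rw [Finset.sum_const, card_range, nsmul_eq_mul]
      exact mul_le_mul_of_nonneg_left (le_trans hvar0 hsum2) hnpos.le
    -- Chebyshev
    have hc : (0:ℝ) < (n:ℝ)*μ/4 := by positivity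
    have hcheb := meas_ge_le_variance_div_sq (μ := (ℙ : Measure Ω)) hS'mem hc
    -- event inclusion
    set A : Set Ω := ⋃ i ∈ range n, {ω | (n:ℝ) < (ξ i ω : ℝ)} with hAdef
    set B : Set Ω := {ω | (n:ℝ)*μ/4 ≤ |S' ω - ∫ x, S' x ∂ℙ|} with hBdef
    have hsub : {ω | ¬ ((n : ℝ) * μ / 4 ≤ (∑ i ∈ range n, (ξ i ω : ℝ)) / 2 ∧
          (∑ i ∈ range n, (ξ i ω : ℝ)) / 2 ≤ 3 * (n : ℝ) * μ / 4)} ⊆ A ∪ B := by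
      intro ω hω
      by_contra hcon
      rw [Set.mem_union] at hcon
      push_neg at hcon
      obtain ⟨hA', hB'⟩ := hcon
      refine hω ?_
      have hYX : ∀ i ∈ range n, Yf i ω = (ξ i ω : ℝ) := by
        intro i hi
        have h1 : ¬ ((n:ℝ) < (ξ i ω : ℝ)) := by
          intro h
          exact hA' (Set.mem_biUnion hi h)
        push_neg at h1
        have h2 : ξ i ω ≤ n := by exact_mod_cast h1
        simp only [hYfdef, Function.comp_apply]
        rw [min_eq_left h2]
      have hS'ω : S' ω = ∑ i ∈ range n, (ξ i ω : ℝ) := by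
        rw [hS'def]
        simp only [Finset.sum_apply]
        exact Finset.sum_congr rfl hYX
      have hB'' : |S' ω - (n:ℝ) * μN n| < (n:ℝ)*μ/4 := by
        rw [hBdef] at hB'
        simp only [Set.mem_setOf_eq, not_le] at hB'
        rwa [hES'] at hB'
      have habs := abs_lt.mp hB''
      rw [hS'ω] at habs
      have hdiff : (0:ℝ) ≤ (n:ℝ) * μ - (n:ℝ) * μN n := by
        have := mul_le_mul_of_nonneg_left hμNle hnpos.le
        linarith
      have hdiff2 : (n:ℝ) * μ - (n:ℝ) * μN n ≤ (n:ℝ)*μ/4 := by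
        have h := mul_le_mul_of_nonneg_left hμNclose hnpos.le
        calc (n:ℝ) * μ - (n:ℝ) * μN n = (n:ℝ) * (μ - μN n) := by ring
          _ ≤ (n:ℝ) * (μ/4) := h
          _ = (n:ℝ)*μ/4 := by ring
      constructor
      · linarith [habs.1]
      · linarith [habs.2]
    -- measure arithmetic
    have hm1 : ℙ {ω | ¬ ((n : ℝ) * μ / 4 ≤ (∑ i ∈ range n, (ξ i ω : ℝ)) / 2 ∧
          (∑ i ∈ range n, (ξ i ω : ℝ)) / 2 ≤ 3 * (n : ℝ) * μ / 4)} ≤ ℙ A + ℙ B :=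
      le_trans (measure_mono hsub) (measure_union_le A B)
    have hAne : ℙ A ≠ ⊤ := measure_ne_top _ _
    have hBne : ℙ B ≠ ⊤ := measure_ne_top _ _
    have hm2 : (ℙ {ω | ¬ ((n : ℝ) * μ / 4 ≤ (∑ i ∈ range n, (ξ i ω : ℝ)) / 2 ∧
          (∑ i ∈ range n, (ξ i ω : ℝ)) / 2 ≤ 3 * (n : ℝ) * μ / 4)}).toReal
        ≤ (ℙ A).toReal + (ℙ B).toReal := by
      have h := ENNReal.toReal_mono (by
        rw [ENNReal.add_ne_top]; exact ⟨hAne, hBne⟩) hm1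
      rwa [ENNReal.toReal_add hAne hBne] at h
    -- bound ℙ A
    have hAbound : (ℙ A).toReal ≤ (n:ℝ) * (C0 * (n:ℝ)^(-θ')) := by
      have h1 : ℙ A ≤ ∑ i ∈ range n, ℙ {ω | (n:ℝ) < (ξ i ω : ℝ)} :=
        measure_biUnion_finset_le _ _
      have h2 : ∀ i ∈ range n, ℙ {ω | (n:ℝ) < (ξ i ω : ℝ)} = ℙ {ω | (n:ℝ) < (ξ 0 ω : ℝ)} :=
        fun i _ => (hident i).measure_mem_eq (s := {m : ℕ | (n:ℝ) < (m:ℝ)})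
          MeasurableSet.of_discrete
      have hsumne : (∑ i ∈ range n, ℙ {ω | (n:ℝ) < (ξ i ω : ℝ)}) ≠ ⊤ :=
        (ENNReal.sum_lt_top.mpr fun i _ => measure_lt_top _ _).ne
      have h3 := ENNReal.toReal_mono hsumne h1
      rw [ENNReal.toReal_sum (fun i _ => measure_ne_top _ _)] at h3
      have h4 : ∑ i ∈ range n, (ℙ {ω | (n:ℝ) < (ξ i ω : ℝ)}).toReal
          = (n:ℝ) * (ℙ {ω | (n:ℝ) < (ξ 0 ω : ℝ)}).toReal := by
        rw [Finset.sum_congr rfl (fun i hi => by rw [h2 i hi])]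
        rw [Finset.sum_const, card_range, nsmul_eq_mul]
      rw [h4] at h3
      refine le_trans h3 (mul_le_mul_of_nonneg_left ?_ hnpos.le)
      exact hC0' (n:ℝ) hn1R
    -- bound ℙ B via Chebyshev
    have hBbound : (ℙ B).toReal ≤ variance S' ℙ / ((n:ℝ)*μ/4)^2 := by
      have h := ENNReal.toReal_mono ENNReal.ofReal_ne_top hcheb
      rwa [ENNReal.toReal_ofReal (div_nonneg (variance_nonneg _ _) (sq_nonneg _))] at h
    -- final real arithmetic
    set t : ℝ := (n:ℝ) ^ ((1:ℝ) - θ) with htdef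
    have h2θ'pos : (0:ℝ) < 2 - θ' := by linarith
    have hunn : (0:ℝ) ≤ (n:ℝ)^((2:ℝ)-θ') := Real.rpow_nonneg hnpos.le _
    have hMnonneg : (0:ℝ) ≤ 3*C2*(1 + (n:ℝ)^((2:ℝ)-θ')/(2-θ')) := by
      have h1 : (0:ℝ) ≤ (n:ℝ)^((2:ℝ)-θ')/(2-θ') := div_nonneg hunn h2θ'pos.le
      have h2 : (0:ℝ) ≤ 3*C2 := by linarith
      have h3 : (0:ℝ) ≤ 1 + (n:ℝ)^((2:ℝ)-θ')/(2-θ') := by linarith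
      exact mul_nonneg h2 h3
    have hA' : (ℙ A).toReal ≤ C0 * t := by
      have e1 : (n:ℝ) * (C0 * (n:ℝ)^(-θ')) = C0 * (n:ℝ)^((1:ℝ)-θ') := by
        rw [show (1:ℝ)-θ' = 1 + (-θ') by ring, Real.rpow_add hnpos, Real.rpow_one]
        ring
      have e2 : (n:ℝ)^((1:ℝ)-θ') ≤ t :=
        Real.rpow_le_rpow_of_exponent_le hn1R (by linarith)
      calc (ℙ A).toReal ≤ (n:ℝ) * (C0 * (n:ℝ)^(-θ')) := hAbound
        _ = C0 * (n:ℝ)^((1:ℝ)-θ') := e1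
        _ ≤ C0 * t := mul_le_mul_of_nonneg_left e2 (by linarith)
    have hB' : (ℙ B).toReal ≤ 48*C2*t + (48*C2/(2-θ'))*t := by
      have e3 : variance S' ℙ / ((n:ℝ)*μ/4)^2
          ≤ ((n:ℝ) * (3*C2*(1 + (n:ℝ)^((2:ℝ)-θ')/(2-θ')))) / ((n:ℝ)^2/16) := by
        refine div_le_div₀ (mul_nonneg hnpos.le hMnonneg) hvarS' (by positivity) ?_
        have hμsq : (1:ℝ) ≤ μ^2 := by
          have h := mul_le_mul hμ1 hμ1 zero_le_one hμpos.le
          rw [one_mul] at h; rwa [sq]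
        have heq : ((n:ℝ)*μ/4)^2 = (n:ℝ)^2 * μ^2 / 16 := by ring
        rw [heq]
        have h16 : (0:ℝ) < 16 := by norm_num
        rw [div_le_div_iff₀ h16 h16]
        have h5 : (n:ℝ)^2 ≤ (n:ℝ)^2 * μ^2 := le_mul_of_one_le_right (sq_nonneg _) hμsq
        have h6 := mul_le_mul_of_nonneg_right h5 (by norm_num : (0:ℝ) ≤ 16)
        linarith
      have e4 : ((n:ℝ) * (3*C2*(1 + (n:ℝ)^((2:ℝ)-θ')/(2-θ')))) / ((n:ℝ)^2/16)
          = 48*C2*(1/(n:ℝ)) + (48*C2/(2-θ')) * ((n:ℝ)^((2:ℝ)-θ')/(n:ℝ)) := by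
        field_simp
        ring
      have e5 : (1:ℝ)/(n:ℝ) ≤ t := by
        have h := Real.rpow_le_rpow_of_exponent_le hn1R (by linarith : (-1:ℝ) ≤ 1-θ)
        rwa [Real.rpow_neg_one, inv_eq_one_div] at h
      have e6 : (n:ℝ)^((2:ℝ)-θ')/(n:ℝ) ≤ t := by
        have h0 : (n:ℝ)^((1:ℝ)-θ') * (n:ℝ)^(1:ℝ) = (n:ℝ)^((2:ℝ)-θ') := by
          rw [← Real.rpow_add hnpos]; congr 1; ring
        have h1 : (n:ℝ)^((2:ℝ)-θ')/(n:ℝ) = (n:ℝ)^((1:ℝ)-θ') := by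
          rw [div_eq_iff hnpos.ne', ← h0, Real.rpow_one]
        rw [h1]
        exact Real.rpow_le_rpow_of_exponent_le hn1R (by linarith)
      calc (ℙ B).toReal ≤ variance S' ℙ / ((n:ℝ)*μ/4)^2 := hBbound
        _ ≤ ((n:ℝ) * (3*C2*(1 + (n:ℝ)^((2:ℝ)-θ')/(2-θ')))) / ((n:ℝ)^2/16) := e3
        _ = 48*C2*(1/(n:ℝ)) + (48*C2/(2-θ')) * ((n:ℝ)^((2:ℝ)-θ')/(n:ℝ)) := e4
        _ ≤ 48*C2*t + (48*C2/(2-θ'))*t := by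
            refine add_le_add ?_ ?_
            · exact mul_le_mul_of_nonneg_left e5 (by linarith)
            · refine mul_le_mul_of_nonneg_left e6 ?_
              positivity
    have hexp : (C0 + 48*C2 + 48*C2/(2-θ') + (N0:ℝ)^(θ-1) + 1)*t
        = C0*t + 48*C2*t + (48*C2/(2-θ'))*t + ((N0:ℝ)^(θ-1) + 1)*t := by ring
    have hlast : (0:ℝ) ≤ ((N0:ℝ)^(θ-1) + 1)*t :=
      mul_nonneg (by linarith [hN0nonneg]) htpos
    calc (ℙ {ω | ¬ ((n : ℝ) * μ / 4 ≤ (∑ i ∈ range n, (ξ i ω : ℝ)) / 2 ∧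
          (∑ i ∈ range n, (ξ i ω : ℝ)) / 2 ≤ 3 * (n : ℝ) * μ / 4)}).toReal
        ≤ (ℙ A).toReal + (ℙ B).toReal := hm2
      _ ≤ (C0 + 48*C2 + 48*C2/(2-θ') + (N0:ℝ)^(θ-1) + 1)*t := by
          rw [hexp]; linarith
end

section
/- For any δ > 0 and any α with 1 < α < γ, the probability that |{i ≤ n : ξ_i ≥ √(E[ξ]·n/4)}| ≤ n^{1−γ/2+δ} is 1 − O(n^{1−α}). -/
open MeasureTheory ProbabilityTheory Filter Finset
open scoped Classical ENNReal NNReal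


lemma aux_tail {Ω : Type*} [MeasureSpace Ω] [IsProbabilityMeasure (ℙ : Measure Ω)]
    (f : Ω → ℕ) (γ : ℝ) (hγ1 : 1 < γ) (L : ℝ → ℝ)
    (hsv : ∀ t : ℝ, 0 < t → Tendsto (fun x => L (t * x) / L x) atTop (nhds 1))
    (htail : ∀ x : ℝ, 0 < x → ℙ {ω | x < (f ω : ℝ)} = ENNReal.ofReal (L x * x ^ (-γ)))
    (ε : ℝ) (hε : 0 < ε) :
    ∃ X C : ℝ, 1 ≤ X ∧ 0 < C ∧ ∀ x, X ≤ x →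
      ℙ {ω | x < (f ω : ℝ)} ≤ ENNReal.ofReal (C * x ^ (ε - γ)) := by
  have hmono : ∀ {x y : ℝ}, x ≤ y → ℙ {ω | y < (f ω : ℝ)} ≤ ℙ {ω | x < (f ω : ℝ)} :=
    fun {x y} h => measure_mono (fun ω hω => lt_of_le_of_lt h hω)
  by_cases hdeg : ∃ x₀, 1 ≤ x₀ ∧ L x₀ * x₀ ^ (-γ) ≤ 0
  · obtain ⟨x₀, hx₀, hL0⟩ := hdeg
    refine ⟨x₀, 1, hx₀, one_pos, fun x hx => ?_⟩
    have h1 : ℙ {ω | x < (f ω : ℝ)} ≤ ℙ {ω | x₀ < (f ω : ℝ)} := hmono hx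
    rw [htail x₀ (by linarith), ENNReal.ofReal_eq_zero.mpr hL0] at h1
    exact le_trans h1 zero_le
  · push_neg at hdeg
    have hLpos : ∀ x, 1 ≤ x → 0 < L x := by
      intro x hx
      by_contra h
      push_neg at h
      have h1 := hdeg x hx
      have h2 : (0:ℝ) < x ^ (-γ) := Real.rpow_pos_of_pos (by linarith) _
      nlinarith
    have h2ε : (1:ℝ) < 2 ^ ε :=
      (Real.one_lt_rpow_iff_of_pos two_pos).mpr (Or.inl ⟨one_lt_two, hε⟩)
    have hev := (hsv 2 two_pos).eventually_lt_const h2ε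
    rw [eventually_atTop] at hev
    obtain ⟨X₀, hX₀⟩ := hev
    set X := max X₀ 1 with hXdef
    have hX1 : (1:ℝ) ≤ X := le_max_right _ _
    have hX0 : (0:ℝ) < X := by linarith
    have hdouble : ∀ x, X ≤ x → L (2 * x) ≤ 2 ^ ε * L x := by
      intro x hx
      have hx1 : (1:ℝ) ≤ x := le_trans hX1 hx
      have h1 := hX₀ x (le_trans (le_max_left _ _) hx)
      have hp := hLpos x hx1
      rw [div_lt_iff₀ hp] at h1
      linarith
    have hiter : ∀ k : ℕ, L (2 ^ k * X) ≤ 2 ^ (ε * k) * L X := by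
      intro k
      induction k with
      | zero => simp
      | succ k ih =>
        have hpk : (1:ℝ) ≤ 2 ^ k := one_le_pow₀ one_le_two
        have hXk : X ≤ 2 ^ k * X := le_mul_of_one_le_left hX0.le hpk
        have step := hdouble _ hXk
        have h2e : (0:ℝ) < 2 ^ ε := Real.rpow_pos_of_pos two_pos _
        calc L (2 ^ (k+1) * X) = L (2 * (2 ^ k * X)) := by ring_nf
          _ ≤ 2 ^ ε * L (2 ^ k * X) := step
          _ ≤ 2 ^ ε * (2 ^ (ε * k) * L X) := by
              exact mul_le_mul_of_nonneg_left ih h2e.le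
          _ = 2 ^ (ε * (k+1:ℕ)) * L X := by
              rw [← mul_assoc, ← Real.rpow_add two_pos]
              push_cast
              ring_nf
    refine ⟨X, L X * 2 ^ γ / X ^ ε, hX1,
      div_pos (mul_pos (hLpos X hX1) (Real.rpow_pos_of_pos two_pos _))
        (Real.rpow_pos_of_pos hX0 _), fun x hx => ?_⟩
    have hx0 : (0:ℝ) < x := lt_of_lt_of_le hX0 hx
    have hxX1 : (1:ℝ) ≤ x / X := (one_le_div hX0).mpr hx
    have hxX0 : (0:ℝ) < x / X := by positivity
    set k := ⌊Real.logb 2 (x / X)⌋₊ with hk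
    have hlogb0 : 0 ≤ Real.logb 2 (x/X) := Real.logb_nonneg one_lt_two hxX1
    have hlow : (2:ℝ) ^ k ≤ x / X := by
      have h1 : ((k:ℝ)) ≤ Real.logb 2 (x/X) := Nat.floor_le hlogb0
      calc (2:ℝ) ^ k = (2:ℝ) ^ ((k:ℝ)) := (Real.rpow_natCast 2 k).symm
        _ ≤ 2 ^ Real.logb 2 (x/X) := Real.rpow_le_rpow_of_exponent_le one_le_two h1
        _ = x / X := Real.rpow_logb two_pos (by norm_num) hxX0
    have hhigh : x / X < 2 ^ (k+1) := by
      have h1 : Real.logb 2 (x/X) < (k:ℝ) + 1 := Nat.lt_floor_add_one _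
      calc x / X = 2 ^ Real.logb 2 (x/X) := (Real.rpow_logb two_pos (by norm_num) hxX0).symm
        _ < 2 ^ (((k:ℝ)) + 1) := Real.rpow_lt_rpow_of_exponent_lt one_lt_two h1
        _ = 2 ^ (k+1) := by
            rw [show ((k:ℝ) + 1) = ((k+1 : ℕ) : ℝ) by push_cast; ring, Real.rpow_natCast]
    set B := (2:ℝ) ^ k * X with hB
    have hB0 : (0:ℝ) < B := by positivity
    have hBx : B ≤ x := by
      calc (2:ℝ) ^ k * X ≤ (x / X) * X := mul_le_mul_of_nonneg_right hlow hX0.le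
        _ = x := div_mul_cancel₀ x hX0.ne'
    have hxB : x < 2 * B := by
      have h1 : x < 2 ^ (k+1) * X := by
        rw [← div_lt_iff₀ hX0] at *
        exact hhigh
      calc x < 2 ^ (k+1) * X := h1
        _ = 2 * B := by rw [hB]; ring
    refine le_trans (hmono hBx) ?_
    rw [htail B hB0]
    apply ENNReal.ofReal_le_ofReal
    have h1 : L B ≤ 2 ^ (ε * k) * L X := hiter k
    have h2 : (2:ℝ) ^ (ε * k) ≤ (x / X) ^ ε := by
      have e1 : (2:ℝ) ^ (ε * k) = ((2:ℝ) ^ k) ^ ε := by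
        rw [← Real.rpow_natCast 2 k, ← Real.rpow_mul two_pos.le]
        ring_nf
      rw [e1]
      exact Real.rpow_le_rpow (by positivity) hlow hε.le
    have h3 : B ^ (-γ) ≤ (x/2) ^ (-γ) :=
      Real.rpow_le_rpow_of_nonpos (by positivity) (by linarith) (by linarith)
    have hBnn : (0:ℝ) ≤ B ^ (-γ) := (Real.rpow_pos_of_pos hB0 _).le
    have hbnn : (0:ℝ) ≤ (x/X) ^ ε * L X :=
      mul_nonneg (Real.rpow_nonneg hxX0.le _) (hLpos X hX1).le
    calc L B * B ^ (-γ) ≤ (2 ^ (ε * k) * L X) * B ^ (-γ) :=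
          mul_le_mul_of_nonneg_right h1 hBnn
      _ ≤ ((x/X) ^ ε * L X) * (x/2) ^ (-γ) :=
          mul_le_mul (mul_le_mul_of_nonneg_right h2 (hLpos X hX1).le) h3 hBnn hbnn
      _ = (L X * 2 ^ γ / X ^ ε) * x ^ (ε - γ) := by
          rw [Real.div_rpow hx0.le hX0.le, Real.div_rpow hx0.le (by norm_num : (0:ℝ) ≤ 2),
            Real.rpow_sub hx0, Real.rpow_neg hx0.le, Real.rpow_neg (by norm_num : (0:ℝ) ≤ 2)]
          have hXe : X ^ ε ≠ 0 := (Real.rpow_pos_of_pos hX0 _).ne'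
          have hxg : x ^ γ ≠ 0 := (Real.rpow_pos_of_pos hx0 _).ne'
          have h2g : (2:ℝ) ^ γ ≠ 0 := (Real.rpow_pos_of_pos two_pos _).ne'
          field_simp


lemma aux_integrable {Ω : Type*} [MeasureSpace Ω] [IsProbabilityMeasure (ℙ : Measure Ω)]
    (f : Ω → ℕ) (hm : Measurable f) (γ : ℝ) (hγ1 : 1 < γ)
    (X C : ℝ) (hX1 : 1 ≤ X) (hC0 : 0 < C)
    (hbound : ∀ x, X ≤ x →
      ℙ {ω | x < (f ω : ℝ)} ≤ ENNReal.ofReal (C * x ^ ((γ-1)/2 - γ))) :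
    Integrable (fun ω => (f ω : ℝ)) ℙ := by
  set N : ℕ := ⌈X⌉₊ with hN
  have hmeasset : ∀ k : ℕ, MeasurableSet {ω | k < f ω} :=
    fun k => hm ((Set.to_countable {m | k < m}).measurableSet)
  have hrep : ∀ ω, ((f ω : ℝ≥0∞)) = ∑' k : ℕ, ({ω' | k < f ω'}.indicator (fun _ => (1:ℝ≥0∞)) ω) := by
    intro ω
    have h0 : ∑' k : ℕ, ({ω' | k < f ω'}.indicator (fun _ => (1:ℝ≥0∞)) ω)
        = ∑ k ∈ Finset.range (f ω), ({ω' | k < f ω'}.indicator (fun _ => (1:ℝ≥0∞)) ω) :=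
      tsum_eq_sum (fun k hk => by
        apply Set.indicator_of_notMem
        exact fun h => hk (Finset.mem_range.mpr h))
    rw [h0]
    calc ((f ω : ℕ) : ℝ≥0∞) = ∑ _k ∈ Finset.range (f ω), 1 := by simp
      _ = ∑ k ∈ Finset.range (f ω), {ω' | k < f ω'}.indicator (fun _ => (1:ℝ≥0∞)) ω :=
        Finset.sum_congr rfl (fun k hk =>
          (Set.indicator_of_mem (s := {ω' | k < f ω'}) (a := ω) (Finset.mem_range.mp hk) (fun _ => (1:ℝ≥0∞))).symm)
  have hlint : ∫⁻ ω, (f ω : ℝ≥0∞) ∂ℙ = ∑' k : ℕ, ℙ {ω | k < f ω} := by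
    rw [lintegral_congr hrep,
      lintegral_tsum (fun k => ((measurable_const.indicator (hmeasset k)).aemeasurable))]
    exact tsum_congr (fun k => lintegral_indicator_one (hmeasset k))
  have hterm : ∀ k : ℕ, ℙ {ω | k < f ω} ≤
      (if k < N then (1:ℝ≥0∞) else 0) + ENNReal.ofReal (C * (k:ℝ) ^ ((γ-1)/2 - γ)) := by
    intro k
    by_cases hk : k < N
    · simp only [hk, if_true]
      exact le_add_right prob_le_one
    · have hkX : X ≤ (k:ℝ) := le_trans (Nat.le_ceil X) (by exact_mod_cast Nat.not_lt.mp hk)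
      have hset : {ω | (k:ℝ) < ((f ω : ℕ) : ℝ)} = {ω | k < f ω} := by
        ext ω; simp [Nat.cast_lt]
      have h1 := hbound (k:ℝ) hkX
      rw [hset] at h1
      simp only [hk, if_false, zero_add]
      exact h1
  have hsumm : Summable (fun k : ℕ => C * (k:ℝ) ^ ((γ-1)/2 - γ)) :=
    (Real.summable_nat_rpow.mpr (by linarith)).mul_left C
  have hnn : ∀ k : ℕ, 0 ≤ C * (k:ℝ) ^ ((γ-1)/2 - γ) :=
    fun k => mul_nonneg hC0.le (Real.rpow_nonneg (Nat.cast_nonneg k) _)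
  have hfin : ∫⁻ ω, (f ω : ℝ≥0∞) ∂ℙ < ⊤ := by
    rw [hlint]
    refine lt_of_le_of_lt (ENNReal.tsum_le_tsum hterm) ?_
    rw [ENNReal.tsum_add]
    apply ENNReal.add_lt_top.mpr
    constructor
    · have h2 : ∑' k : ℕ, (if k < N then (1:ℝ≥0∞) else 0)
          = ∑ k ∈ Finset.range N, (if k < N then (1:ℝ≥0∞) else 0) :=
        tsum_eq_sum (fun k hk => if_neg (fun h => hk (Finset.mem_range.mpr h)))
      rw [h2]
      exact ENNReal.sum_lt_top.mpr (fun k _ => by split <;> simp)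
    · rw [← ENNReal.ofReal_tsum_of_nonneg hnn hsumm]
      exact ENNReal.ofReal_lt_top
  refine ⟨(measurable_from_top.comp hm).aestronglyMeasurable, ?_⟩
  rw [hasFiniteIntegral_iff_norm]
  have : ∀ ω, ENNReal.ofReal ‖((f ω : ℕ) : ℝ)‖ = ((f ω : ℕ) : ℝ≥0∞) := by
    intro ω
    rw [Real.norm_eq_abs, abs_of_nonneg (Nat.cast_nonneg _), ENNReal.ofReal_natCast]
  rwa [lintegral_congr this]


lemma aux_moment {Ω : Type*} [MeasureSpace Ω] [IsProbabilityMeasure (ℙ : Measure Ω)]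
    (ξ : ℕ → Ω → ℕ) (hmeas : ∀ i, Measurable (ξ i))
    (hindep : iIndepFun ξ ℙ)
    (hident : ∀ i, IdentDistrib (ξ i) (ξ 0) ℙ ℙ)
    (t : ℝ) (n k m₀ : ℕ) :
    ℙ {ω | m₀ ≤ ((range n).filter (fun i => t ≤ (ξ i ω : ℝ))).card} * (m₀.choose k : ℝ≥0∞)
      ≤ (n.choose k : ℝ≥0∞) * (ℙ {ω | t ≤ (ξ 0 ω : ℝ)}) ^ k := by
  set s : Set ℕ := {m : ℕ | t ≤ (m : ℝ)} with hs
  have hsm : MeasurableSet s := (Set.to_countable s).measurableSet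
  set A : ℕ → Set Ω := fun i => (ξ i) ⁻¹' s with hA
  have hAm : ∀ i, MeasurableSet (A i) := fun i => (hmeas i) hsm
  have hAp : ∀ i, ℙ (A i) = ℙ {ω | t ≤ (ξ 0 ω : ℝ)} :=
    fun i => (hident i).measure_mem_eq hsm
  set D : Ω → Finset ℕ := fun ω => (range n).filter (fun i => t ≤ (ξ i ω : ℝ)) with hD
  have hcard : Measurable (fun ω => (D ω).card) := by
    have h0 : (fun ω => (D ω).card)
        = fun ω => ∑ i ∈ range n, (if t ≤ (ξ i ω : ℝ) then 1 else 0) := by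
      funext ω
      exact Finset.card_filter _ _
    rw [h0]
    exact Finset.measurable_sum _
      (fun i _ => Measurable.ite ((hmeas i) hsm) measurable_const measurable_const)
  have hpoint : ∀ ω, ∑ S ∈ powersetCard k (range n), (⋂ i ∈ S, A i).indicator (fun _ => (1:ℝ≥0∞)) ω
      = ((D ω).card.choose k : ℝ≥0∞) := by
    intro ω
    have h1 : ∀ S ∈ powersetCard k (range n),
        (⋂ i ∈ S, A i).indicator (fun _ => (1:ℝ≥0∞)) ω
          = if ω ∈ ⋂ i ∈ S, A i then (1:ℝ≥0∞) else 0 :=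
      fun S _ => Set.indicator_apply _ _ _
    rw [Finset.sum_congr rfl h1, Finset.sum_boole]
    have hfe : (powersetCard k (range n)).filter (fun S => ω ∈ ⋂ i ∈ S, A i)
        = powersetCard k (D ω) := by
      ext S
      simp only [mem_filter, mem_powersetCard, Set.mem_iInter, hD]
      constructor
      · rintro ⟨⟨hsub, hcardS⟩, hin⟩
        exact ⟨fun i hi => mem_filter.mpr ⟨hsub hi, hin i hi⟩, hcardS⟩
      · rintro ⟨hsub, hcardS⟩
        exact ⟨⟨fun i hi => (mem_filter.mp (hsub hi)).1, hcardS⟩,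
          fun i hi => (mem_filter.mp (hsub hi)).2⟩
    rw [hfe, Finset.card_powersetCard]
  have hsum : ∑ S ∈ powersetCard k (range n), ℙ (⋂ i ∈ S, A i)
      = (n.choose k : ℝ≥0∞) * (ℙ {ω | t ≤ (ξ 0 ω : ℝ)}) ^ k := by
    have h1 : ∀ S ∈ powersetCard k (range n),
        ℙ (⋂ i ∈ S, A i) = (ℙ {ω | t ≤ (ξ 0 ω : ℝ)}) ^ k := by
      intro S hS
      obtain ⟨hsub, hcardS⟩ := mem_powersetCard.mp hS
      rw [hindep.meas_biInter (fun i _ => ⟨s, hsm, rfl⟩),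
        Finset.prod_congr rfl (fun i _ => hAp i), Finset.prod_const, hcardS]
    rw [Finset.sum_congr rfl h1, Finset.sum_const, Finset.card_powersetCard,
      Finset.card_range, nsmul_eq_mul]
  have hintm : ∀ S : Finset ℕ, MeasurableSet (⋂ i ∈ S, A i) :=
    fun S => MeasurableSet.iInter (fun i => MeasurableSet.iInter (fun _ => hAm i))
  calc ℙ {ω | m₀ ≤ (D ω).card} * (m₀.choose k : ℝ≥0∞)
      = ∫⁻ _ω in {ω | m₀ ≤ (D ω).card}, (m₀.choose k : ℝ≥0∞) ∂ℙ := by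
        rw [setLIntegral_const, mul_comm]
    _ ≤ ∫⁻ ω in {ω | m₀ ≤ (D ω).card}, ((D ω).card.choose k : ℝ≥0∞) ∂ℙ := by
        refine setLIntegral_mono ((measurable_from_top (f := fun m : ℕ => ((m.choose k : ℕ) : ℝ≥0∞))).comp hcard) ?_
        intro ω hω
        exact_mod_cast Nat.cast_le.mpr (Nat.choose_le_choose k hω)
    _ ≤ ∫⁻ ω, ((D ω).card.choose k : ℝ≥0∞) ∂ℙ := setLIntegral_le_lintegral _ _
    _ = ∫⁻ ω, ∑ S ∈ powersetCard k (range n), (⋂ i ∈ S, A i).indicator (fun _ => (1:ℝ≥0∞)) ω ∂ℙ :=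
        (lintegral_congr (fun ω => (hpoint ω).symm))
    _ = ∑ S ∈ powersetCard k (range n), ℙ (⋂ i ∈ S, A i) := by
        rw [lintegral_finset_sum _
          (fun S _ => measurable_const.indicator (hintm S))]
        exact Finset.sum_congr rfl (fun S _ => lintegral_indicator_one (hintm S))
    _ = (n.choose k : ℝ≥0∞) * (ℙ {ω | t ≤ (ξ 0 ω : ℝ)}) ^ k := hsum


set_option maxHeartbeats 2000000 in
/-- **Lemma (vertices of large degree).** For any `δ > 0` and `1 < α < γ`, the
probability that `|{i ≤ n : ξᵢ ≥ √(E[ξ] n / 4)}| ≤ n^{1 - γ/2 + δ}` is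
`1 - O(n^{1-α})`. -/
theorem few_large_degrees
    {Ω : Type*} [MeasureSpace Ω] [IsProbabilityMeasure (ℙ : Measure Ω)]
    (ξ : ℕ → Ω → ℕ) (hmeas : ∀ i, Measurable (ξ i))
    (hindep : iIndepFun ξ ℙ)
    (hident : ∀ i, IdentDistrib (ξ i) (ξ 0) ℙ ℙ)
    (hpos : ∀ i ω, 1 ≤ ξ i ω)
    (γ : ℝ) (hγ1 : 1 < γ) (hγ2 : γ < 2)
    (L : ℝ → ℝ)
    (hsv : ∀ t : ℝ, 0 < t → Tendsto (fun x => L (t * x) / L x) atTop (nhds 1))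
    (htail : ∀ x : ℝ, 0 < x →
      ℙ {ω | x < (ξ 0 ω : ℝ)} = ENNReal.ofReal (L x * x ^ (-γ)))
    (δ : ℝ) (hδ : 0 < δ) (α : ℝ) (hα1 : 1 < α) (hαγ : α < γ) :
    ∃ C : ℝ, ∀ n : ℕ, 1 ≤ n →
      (ℙ {ω | ¬ ((((range n).filter
            (fun i => Real.sqrt ((∫ ω', (ξ 0 ω' : ℝ) ∂ℙ) * n / 4) ≤ (ξ i ω : ℝ))).card : ℝ)
          ≤ (n : ℝ) ^ (1 - γ / 2 + δ))}).toReal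
        ≤ C * (n : ℝ) ^ ((1 : ℝ) - α) := by
  set δ' : ℝ := min δ (γ/2) with hδ'def
  have hδ'0 : 0 < δ' := lt_min hδ (by linarith)
  have hδ'γ : δ' - γ < 0 := by
    have := min_le_right δ (γ/2)
    have h0 : δ' ≤ γ/2 := this
    linarith
  have hδ'δ : δ' ≤ δ := min_le_left _ _
  have hexp0 : (0:ℝ) < 1 - γ/2 + δ' := by linarith
  obtain ⟨X₁, C₁, hX₁1, hC₁0, hbound₁⟩ :=
    aux_tail (ξ 0) γ hγ1 L hsv htail ((γ-1)/2) (by linarith)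
  have hint : Integrable (fun ω => (ξ 0 ω : ℝ)) ℙ :=
    aux_integrable (ξ 0) (hmeas 0) γ hγ1 X₁ C₁ hX₁1 hC₁0 hbound₁
  set μr : ℝ := ∫ ω', (ξ 0 ω' : ℝ) ∂ℙ with hμr
  have hμ1 : (1:ℝ) ≤ μr := by
    have h1 : ∫ _ω : Ω, (1:ℝ) ∂ℙ ≤ μr :=
      integral_mono (integrable_const 1) hint (fun ω => Nat.one_le_cast.mpr (hpos 0 ω))
    simpa using h1
  obtain ⟨X, C₂, hX1, hC₂0, hbound⟩ := aux_tail (ξ 0) γ hγ1 L hsv htail δ' hδ'0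
  set k₀ : ℕ := ⌈2 * (α - 1) / δ'⌉₊ + 1 with hk₀
  have hk₀R : 2 * (α - 1) / δ' ≤ (k₀:ℝ) := by
    have h2 := Nat.le_ceil (2 * (α - 1) / δ')
    rw [hk₀]
    push_cast
    linarith
  have hexp : -(k₀:ℝ) * (δ'/2) ≤ 1 - α := by
    have h2 : 2 * (α - 1) / δ' * (δ'/2) = α - 1 := by field_simp <;> ring
    have h3 := mul_le_mul_of_nonneg_right hk₀R (by positivity : (0:ℝ) ≤ δ'/2)
    rw [h2] at h3
    linarith
  have h1 : Tendsto (fun n : ℕ => Real.sqrt n / 4) atTop atTop := by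
    have hs : Tendsto (fun x : ℝ => Real.sqrt x) atTop atTop :=
      (tendsto_rpow_atTop (by norm_num : (0:ℝ) < 1/2)).congr
        (fun x => (Real.sqrt_eq_rpow x).symm)
    exact (hs.comp tendsto_natCast_atTop_atTop).atTop_div_const (by norm_num)
  have h2 : Tendsto (fun n : ℕ => (n:ℝ) ^ (1 - γ/2 + δ')) atTop atTop :=
    (tendsto_rpow_atTop hexp0).comp tendsto_natCast_atTop_atTop
  obtain ⟨N, hN⟩ := eventually_atTop.mp
    ((h1.eventually_ge_atTop X).and (h2.eventually_ge_atTop (2 * (k₀:ℝ) + 2)))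
  set C₄ : ℝ := C₂ * 4 ^ (γ - δ') with hC₄
  have hC₄0 : 0 < C₄ := mul_pos hC₂0 (Real.rpow_pos_of_pos (by norm_num) _)
  set C₅ : ℝ := (k₀.factorial : ℝ) * (2 * C₄) ^ k₀ with hC₅
  have hC₅0 : 0 < C₅ := by positivity
  refine ⟨max C₅ ((N:ℝ) ^ (α - 1)), fun n hn => ?_⟩
  have hn0 : (0:ℝ) < n := by exact_mod_cast Nat.lt_of_lt_of_le Nat.zero_lt_one hn
  have hn1 : (1:ℝ) ≤ n := by exact_mod_cast hn
  have hrpownn : (0:ℝ) ≤ (n:ℝ) ^ ((1:ℝ) - α) := Real.rpow_nonneg hn0.le _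
  by_cases hnN : N ≤ n
  swap
  · have hP1 : (ℙ {ω | ¬ ((((range n).filter
          (fun i => Real.sqrt (μr * n / 4) ≤ (ξ i ω : ℝ))).card : ℝ)
          ≤ (n : ℝ) ^ (1 - γ / 2 + δ))}).toReal ≤ 1 := by
      calc (ℙ _).toReal ≤ (1:ℝ≥0∞).toReal := ENNReal.toReal_mono ENNReal.one_ne_top prob_le_one
        _ = 1 := by simp
    have h3 : (1:ℝ) ≤ (N:ℝ) ^ (α - 1) * (n:ℝ) ^ ((1:ℝ) - α) := by
      have h4 : (n:ℝ) ^ (α - 1) ≤ (N:ℝ) ^ (α - 1) :=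
        Real.rpow_le_rpow hn0.le (by exact_mod_cast (le_of_not_ge hnN)) (by linarith)
      have h5 : (n:ℝ) ^ (α - 1) * (n:ℝ) ^ ((1:ℝ) - α) = 1 := by
        rw [← Real.rpow_add hn0]
        norm_num
      nlinarith [Real.rpow_nonneg (le_of_lt hn0) ((1:ℝ) - α)]
    calc (ℙ _).toReal ≤ 1 := hP1
      _ ≤ (N:ℝ) ^ (α - 1) * (n:ℝ) ^ ((1:ℝ) - α) := h3
      _ ≤ max C₅ ((N:ℝ) ^ (α - 1)) * (n:ℝ) ^ ((1:ℝ) - α) :=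
        mul_le_mul_of_nonneg_right (le_max_right _ _) hrpownn
  · obtain ⟨hsqrtX, hA2k⟩ := hN n hnN
    set t : ℝ := Real.sqrt (μr * n / 4) with ht
    have h6 : Real.sqrt n / 2 ≤ t := by
      have h7 : (Real.sqrt n / 2)^2 ≤ μr * n / 4 := by
        rw [div_pow, Real.sq_sqrt hn0.le]
        nlinarith
      exact (Real.le_sqrt (by positivity) (by nlinarith)).mpr h7
    have ht4 : Real.sqrt n / 4 ≤ t / 2 := by linarith
    have hsn0 : 0 < Real.sqrt n := Real.sqrt_pos.mpr hn0
    have ht20 : 0 < t / 2 := lt_of_lt_of_le (by positivity) ht4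
    have htX : X ≤ t / 2 := le_trans hsqrtX ht4
    set p := ℙ {ω | t ≤ (ξ 0 ω : ℝ)} with hp
    have hpb : p ≤ ENNReal.ofReal (C₂ * (t/2) ^ (δ' - γ)) := by
      refine le_trans (measure_mono ?_) (hbound (t/2) htX)
      intro ω hω
      simp only [Set.mem_setOf_eq] at hω ⊢
      linarith
    have hpR : p.toReal ≤ C₂ * (t/2) ^ (δ' - γ) :=
      ENNReal.toReal_le_of_le_ofReal (by positivity) hpb
    set q : ℝ := C₄ * (n:ℝ) ^ ((δ' - γ)/2) with hq
    have hpR2 : p.toReal ≤ q := by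
      have h8 : (t/2) ^ (δ'-γ) ≤ (Real.sqrt n / 4) ^ (δ'-γ) :=
        Real.rpow_le_rpow_of_nonpos (by positivity) ht4 (by linarith)
      have h9 : (Real.sqrt n / 4) ^ (δ'-γ) = 4 ^ (γ-δ') * (n:ℝ) ^ ((δ'-γ)/2) := by
        rw [Real.div_rpow (Real.sqrt_nonneg _) (by norm_num : (0:ℝ) ≤ 4),
          Real.sqrt_eq_rpow, ← Real.rpow_mul hn0.le,
          show (1/2) * (δ'-γ) = (δ'-γ)/2 from by ring,
          show (γ-δ') = -(δ'-γ) from by ring,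
          Real.rpow_neg (by norm_num : (0:ℝ) ≤ 4), div_eq_mul_inv, mul_comm]
      calc p.toReal ≤ C₂ * (t/2)^(δ'-γ) := hpR
        _ ≤ C₂ * (Real.sqrt n / 4)^(δ'-γ) := mul_le_mul_of_nonneg_left h8 hC₂0.le
        _ = q := by rw [h9, hq, hC₄]; ring
    set A : ℝ := (n:ℝ) ^ (1 - γ/2 + δ') with hAdef
    have hA2k' : 2*(k₀:ℝ) + 2 ≤ A := hA2k
    have hk₀nn : (0:ℝ) ≤ (k₀:ℝ) := Nat.cast_nonneg _
    have hA0 : 0 < A := by linarith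
    set m₀ : ℕ := ⌊A⌋₊ + 1 with hm₀
    have hAm₀ : A ≤ (m₀:ℝ) := by
      rw [hm₀]
      push_cast
      linarith [Nat.lt_floor_add_one A]
    have hbadsub : {ω | ¬ ((((range n).filter
          (fun i => t ≤ (ξ i ω : ℝ))).card : ℝ) ≤ A)}
        ⊆ {ω | m₀ ≤ ((range n).filter (fun i => t ≤ (ξ i ω : ℝ))).card} := by
      intro ω hω
      simp only [Set.mem_setOf_eq, not_le] at hω ⊢
      exact (Nat.floor_lt hA0.le).mpr hω
    have hkey := aux_moment ξ hmeas hindep hident t n k₀ m₀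
    have hb1 : ℙ {ω | ¬ ((((range n).filter
          (fun i => t ≤ (ξ i ω : ℝ))).card : ℝ) ≤ A)} * (m₀.choose k₀ : ℝ≥0∞)
        ≤ (n.choose k₀ : ℝ≥0∞) * p ^ k₀ :=
      le_trans (mul_le_mul_left (measure_mono hbadsub) _) hkey
    have hfin : (n.choose k₀ : ℝ≥0∞) * p ^ k₀ ≠ ⊤ :=
      ENNReal.mul_ne_top (ENNReal.natCast_ne_top _) (ENNReal.pow_ne_top (measure_ne_top ℙ _))
    set P : ℝ := (ℙ {ω | ¬ ((((range n).filter
          (fun i => t ≤ (ξ i ω : ℝ))).card : ℝ) ≤ A)}).toReal with hPdef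
    have hb2 : P * (m₀.choose k₀ : ℝ) ≤ (n.choose k₀ : ℝ) * p.toReal ^ k₀ := by
      have h11 := ENNReal.toReal_mono hfin hb1
      rwa [ENNReal.toReal_mul, ENNReal.toReal_mul, ENNReal.toReal_pow,
        ENNReal.toReal_natCast, ENNReal.toReal_natCast] at h11
    have hk₀m₀1 : k₀ ≤ m₀ + 1 := by
      have h12 : (k₀:ℝ) ≤ (m₀:ℝ) + 1 := by linarith
      exact_mod_cast h12
    have hsub : (A/2 : ℝ) ≤ ((m₀ + 1 - k₀ : ℕ) : ℝ) := by
      rw [Nat.cast_sub hk₀m₀1, Nat.cast_add_one]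
      linarith
    have hk0fac : (0:ℝ) < (k₀.factorial:ℝ) := by positivity
    have hpw : (A/2)^k₀ ≤ ((m₀ + 1 - k₀ : ℕ):ℝ)^k₀ :=
      pow_le_pow_left₀ (by positivity) hsub k₀
    have hchoose_low : (A/2) ^ k₀ / (k₀.factorial : ℝ) ≤ (m₀.choose k₀ : ℝ) := by
      refine le_trans ?_ (Nat.pow_le_choose k₀ m₀)
      gcongr
    have hchoose_up : (n.choose k₀ : ℝ) ≤ (n:ℝ) ^ k₀ := by
      exact_mod_cast Nat.choose_le_pow n k₀
    have hp0 : (0:ℝ) ≤ p.toReal := ENNReal.toReal_nonneg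
    have hq0 : (0:ℝ) ≤ q := by positivity
    have hP0 : (0:ℝ) ≤ P := ENNReal.toReal_nonneg
    have hstep : P * ((A/2) ^ k₀ / (k₀.factorial : ℝ)) ≤ (n:ℝ)^k₀ * q^k₀ := by
      calc P * ((A/2) ^ k₀ / (k₀.factorial : ℝ)) ≤ P * (m₀.choose k₀:ℝ) :=
            mul_le_mul_of_nonneg_left hchoose_low hP0
        _ ≤ (n.choose k₀:ℝ) * p.toReal ^ k₀ := hb2
        _ ≤ (n:ℝ)^k₀ * q^k₀ :=
            mul_le_mul hchoose_up (pow_le_pow_left₀ hp0 hpR2 k₀) (pow_nonneg hp0 _) (by positivity)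
    have hA20 : (0:ℝ) < (A/2)^k₀ / (k₀.factorial:ℝ) := by positivity
    have hPle : P ≤ (k₀.factorial:ℝ) * ((n:ℝ)*q / (A/2))^k₀ := by
      calc P ≤ ((n:ℝ)^k₀ * q^k₀) / ((A/2)^k₀/(k₀.factorial:ℝ)) :=
            (le_div_iff₀ hA20).mpr hstep
        _ = (k₀.factorial:ℝ) * ((n:ℝ)*q/(A/2))^k₀ := by
            rw [div_div_eq_mul_div, mul_comm _ (k₀.factorial:ℝ), mul_div_assoc,
              div_pow ((n:ℝ)*q) (A/2) k₀, mul_pow (n:ℝ) q k₀]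
    have hcomp : (n:ℝ)*q/(A/2) = (2*C₄) * (n:ℝ)^(-(δ'/2)) := by
      have e1 : (n:ℝ)^((1:ℝ) + (δ'-γ)/2) / (n:ℝ)^(1-γ/2+δ') = (n:ℝ)^(-(δ'/2)) := by
        rw [← Real.rpow_sub hn0]
        ring_nf
      calc (n:ℝ)*q/(A/2) = 2 * C₄ * ((n:ℝ)^((1:ℝ)+(δ'-γ)/2) / (n:ℝ)^(1-γ/2+δ')) := by
            rw [hq, hAdef, Real.rpow_add hn0 1 ((δ'-γ)/2), Real.rpow_one]
            field_simp <;> ring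
        _ = 2*C₄*(n:ℝ)^(-(δ'/2)) := by rw [e1]
    have hfin2 : ((n:ℝ)^(-(δ'/2)))^k₀ = (n:ℝ)^(-(k₀:ℝ)*(δ'/2)) := by
      rw [← Real.rpow_natCast ((n:ℝ)^(-(δ'/2))) k₀, ← Real.rpow_mul hn0.le]
      ring_nf
    have hfinalP : P ≤ max C₅ ((N:ℝ)^(α-1)) * (n:ℝ)^((1:ℝ)-α) := by
      calc P ≤ (k₀.factorial:ℝ) * ((n:ℝ)*q/(A/2))^k₀ := hPle
        _ = (k₀.factorial:ℝ) * ((2*C₄)^k₀ * (n:ℝ)^(-(k₀:ℝ)*(δ'/2))) := by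
            rw [hcomp, mul_pow, hfin2]
        _ = C₅ * (n:ℝ)^(-(k₀:ℝ)*(δ'/2)) := by rw [hC₅]; ring
        _ ≤ C₅ * (n:ℝ)^((1:ℝ)-α) :=
            mul_le_mul_of_nonneg_left (Real.rpow_le_rpow_of_exponent_le hn1 hexp) hC₅0.le
        _ ≤ max C₅ ((N:ℝ)^(α-1)) * (n:ℝ)^((1:ℝ)-α) :=
            mul_le_mul_of_nonneg_right (le_max_left _ _) hrpownn
    refine le_trans ?_ hfinalP
    rw [hPdef]
    refine ENNReal.toReal_mono (measure_ne_top _ _) (measure_mono ?_)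
    intro ω hω
    simp only [Set.mem_setOf_eq, not_le] at hω ⊢
    refine lt_of_le_of_lt ?_ hω
    rw [hAdef]
    exact Real.rpow_le_rpow_of_exponent_le hn1 (by linarith)
end

section
/- Let G be a finite simple graph with m edges and let t be the number of triangles in G. Then 3t ≤ Σ_v min(m, deg(v)²), where the sum is over all vertices v of G; equivalently, 3t ≤ m·|{v : deg(v)² ≥ m}| + Σ_{v : deg(v)² < m} deg(v)². -/
open Finset

/-- Turn an unordered pair into a two-element finset. -/
private def sym2ToFinset {V : Type*} [DecidableEq V] : Sym2 V → Finset V :=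
  Sym2.lift ⟨fun a b => {a, b}, fun a b => Finset.pair_comm a b⟩

private lemma sum_filter_card_eq {V : Type*} [Fintype V] [DecidableEq V]
    (S : Finset (Finset V)) (h3 : ∀ t ∈ S, t.card = 3) :
    ∑ v : V, (S.filter (fun t => v ∈ t)).card = 3 * S.card := by
  have : ∑ v : V, (S.filter (fun t => v ∈ t)).card
      = ∑ v : V, ∑ t ∈ S, (if v ∈ t then 1 else 0) := by
    refine Finset.sum_congr rfl fun v _ => ?_
    rw [Finset.card_filter]
  rw [this, Finset.sum_comm]
  have : ∀ t ∈ S, (∑ v : V, (if v ∈ t then 1 else 0)) = 3 := by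
    intro t ht
    rw [Finset.sum_ite_mem, Finset.univ_inter, Finset.sum_const, smul_eq_mul, mul_one, h3 t ht]
  rw [Finset.sum_congr rfl this, Finset.sum_const, smul_eq_mul, mul_comm]

/-- **Lemma (triangle bound).** Let `G` be a finite simple graph with `m` edges and
`t` triangles. Then `3t ≤ ∑_v min(m, deg(v)²)`. -/
theorem triangle_bound {V : Type*} [Fintype V] [DecidableEq V]
    (G : SimpleGraph V) [DecidableRel G.Adj] :
    3 * (G.cliqueFinset 3).card ≤
      ∑ v : V, min G.edgeFinset.card (G.degree v ^ 2) := by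
  classical
  set S := G.cliqueFinset 3 with hS
  have h3 : ∀ t ∈ S, t.card = 3 := fun t ht => (SimpleGraph.mem_cliqueFinset_iff.mp ht).2
  rw [← sum_filter_card_eq S h3]
  refine Finset.sum_le_sum fun v _ => ?_
  set T := S.filter (fun t => v ∈ t) with hT
  -- erase v is injective on T
  have hinj : Set.InjOn (fun (t : Finset V) => t.erase v) (T : Set (Finset V)) := by
    intro a ha b hb hab
    have hav : v ∈ a := (Finset.mem_filter.mp ha).2
    have hbv : v ∈ b := (Finset.mem_filter.mp hb).2
    simp only at hab; rw [← Finset.insert_erase hav, ← Finset.insert_erase hbv, hab]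
  have hcardT : T.card = (T.image (fun t => t.erase v)).card :=
    (Finset.card_image_of_injOn hinj).symm
  -- key facts about each element of the image
  have hmem : ∀ x ∈ T.image (fun t => t.erase v),
      x ∈ Finset.powersetCard 2 (G.neighborFinset v) ∧
      x ∈ G.edgeFinset.image sym2ToFinset := by
    intro x hx
    obtain ⟨t, ht, rfl⟩ := Finset.mem_image.mp hx
    obtain ⟨htS, hvt⟩ := Finset.mem_filter.mp ht
    have hclq := (SimpleGraph.mem_cliqueFinset_iff.mp htS).1
    have hc2 : (t.erase v).card = 2 := by
      rw [Finset.card_erase_of_mem hvt, h3 t htS]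
    obtain ⟨a, b, hab, he⟩ := Finset.card_eq_two.mp hc2
    have ha : a ∈ t.erase v := by rw [he]; simp
    have hb : b ∈ t.erase v := by rw [he]; simp
    have hat : a ∈ t := Finset.mem_of_mem_erase ha
    have hbt : b ∈ t := Finset.mem_of_mem_erase hb
    have hav : a ≠ v := Finset.ne_of_mem_erase ha
    have hbv : b ≠ v := Finset.ne_of_mem_erase hb
    have hAdjab : G.Adj a b := hclq hat hbt hab
    have hAdjva : G.Adj v a := (hclq hvt hat (Ne.symm hav)).symm.symm
    have hAdjvb : G.Adj v b := (hclq hvt hbt (Ne.symm hbv)).symm.symm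
    constructor
    · rw [Finset.mem_powersetCard]
      refine ⟨?_, hc2⟩
      intro x hx
      rw [he] at hx
      rcases Finset.mem_insert.mp hx with rfl | hx
      · exact G.mem_neighborFinset v x |>.mpr hAdjva
      · rw [Finset.mem_singleton.mp hx]
        exact G.mem_neighborFinset v b |>.mpr hAdjvb
    · refine Finset.mem_image.mpr ⟨s(a, b), ?_, ?_⟩
      · exact SimpleGraph.mem_edgeFinset.mpr hAdjab
      · rw [he]; rfl
  have hle1 : T.card ≤ G.edgeFinset.card := by
    rw [hcardT]
    calc (T.image (fun t => t.erase v)).card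
        ≤ (G.edgeFinset.image sym2ToFinset).card :=
          Finset.card_le_card (fun x hx => (hmem x hx).2)
      _ ≤ G.edgeFinset.card := Finset.card_image_le
  have hle2 : T.card ≤ G.degree v ^ 2 := by
    rw [hcardT]
    calc (T.image (fun t => t.erase v)).card
        ≤ (Finset.powersetCard 2 (G.neighborFinset v)).card :=
          Finset.card_le_card (fun x hx => (hmem x hx).1)
      _ = (G.degree v).choose 2 := by
          rw [Finset.card_powersetCard, SimpleGraph.card_neighborFinset_eq_degree]
      _ ≤ G.degree v ^ 2 := by
          rw [Nat.choose_two_right, pow_two]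
          calc G.degree v * (G.degree v - 1) / 2 ≤ G.degree v * (G.degree v - 1) :=
                Nat.div_le_self _ _
            _ ≤ G.degree v * G.degree v := Nat.mul_le_mul_left _ (Nat.sub_le _ _)
  exact le_min hle1 hle2
end

section
/- Fix δ and α with 1 < δ < α < γ and β with 0 < β < min{(2 − δ)/γ, 1/(2γ), (α − δ)/(γ(α − 1))}. Then with probability 1 − O(n^{1−δ}), Σ_{i=1}^n ξ_i · 1{ξ_i > n^β} ≤ n − √(2·E[ξ]·n). -/
open MeasureTheory ProbabilityTheory Filter Finset


lemma potter_bound {γ : ℝ} (hγ : 0 < γ) {L : ℝ → ℝ}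
    (hsv : ∀ t : ℝ, 0 < t → Tendsto (fun x => L (t * x) / L x) atTop (nhds 1))
    (hLpos : ∀ x : ℝ, 0 < x → 0 < L x)
    (hLbd : ∀ x : ℝ, 0 < x → L x ≤ x ^ γ)
    {ε : ℝ} (hε : 0 < ε) :
    ∃ C : ℝ, 0 < C ∧ ∃ X : ℝ, 1 ≤ X ∧ ∀ x : ℝ, X ≤ x → L x ≤ C * x ^ ε := by
  have h2e : (1:ℝ) < 2 ^ ε := Real.one_lt_rpow_iff_of_pos two_pos |>.2 (Or.inl ⟨one_lt_two, hε⟩)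
  have h2epos : (0:ℝ) < 2 ^ ε := lt_trans one_pos h2e
  have hev : ∀ᶠ x in atTop, L (2 * x) / L x < 2 ^ ε :=
    (hsv 2 two_pos).eventually_lt_const h2e
  obtain ⟨X0, hX0⟩ := eventually_atTop.mp hev
  set X : ℝ := max X0 1 with hXdef
  have hX1 : (1:ℝ) ≤ X := le_max_right _ _
  have hX0pos : (0:ℝ) < X := lt_of_lt_of_le one_pos hX1
  have hstep : ∀ x : ℝ, X ≤ x → L (2 * x) < 2 ^ ε * L x := by
    intro x hx
    have h1 : L (2 * x) / L x < 2 ^ ε := hX0 x (le_trans (le_max_left _ _) hx)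
    have h2 : 0 < L x := hLpos x (lt_of_lt_of_le hX0pos hx)
    calc L (2 * x) = L (2 * x) / L x * L x := by field_simp
    _ < 2 ^ ε * L x := mul_lt_mul_of_pos_right h1 h2
  have key : ∀ k : ℕ, ∀ x : ℝ, X ≤ x → x ≤ 2 ^ (k + 1) * X →
      L x ≤ (2 * X) ^ γ * (2 ^ ε) ^ k := by
    intro k
    induction k with
    | zero =>
      intro x hx hx2
      have h0 : 0 < x := lt_of_lt_of_le hX0pos hx
      have h1 : L x ≤ x ^ γ := hLbd x h0
      have h2 : x ^ γ ≤ (2 * X) ^ γ := by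
        apply Real.rpow_le_rpow h0.le _ hγ.le
        simpa using hx2
      simpa using h1.trans h2
    | succ k ih =>
      intro x hx hx2
      by_cases hcase : x ≤ 2 ^ (k + 1) * X
      · have h0 := ih x hx hcase
        have h1 : ((2:ℝ) ^ ε) ^ k ≤ (2 ^ ε) ^ (k + 1) :=
          pow_le_pow_right₀ h2e.le (Nat.le_succ k)
        nlinarith [Real.rpow_pos_of_pos (by linarith : (0:ℝ) < 2 * X) γ]
      · push_neg at hcase
        have hxX : X ≤ x / 2 := by
          have h2k : (2:ℝ) ≤ 2 ^ (k + 1) := by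
            calc (2:ℝ) = 2 ^ 1 := (pow_one 2).symm
            _ ≤ 2 ^ (k+1) := pow_le_pow_right₀ one_le_two (Nat.le_add_left 1 k)
          nlinarith
        have hxup : x / 2 ≤ 2 ^ (k + 1) * X := by
          have h3 : x ≤ 2 ^ (k + 1 + 1) * X := hx2
          have h22 : (2:ℝ) ^ (k + 1 + 1) = 2 * 2 ^ (k + 1) := by ring
          nlinarith
        have h1 : L x < 2 ^ ε * L (x / 2) := by
          have h := hstep (x / 2) hxX
          have hxx : 2 * (x / 2) = x := by ring
          rwa [hxx] at h
        have h2 := ih (x / 2) hxX hxup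
        have h3 : (2:ℝ) ^ ε * L (x / 2) ≤ (2 * X) ^ γ * (2 ^ ε) ^ (k + 1) := by
          calc (2:ℝ) ^ ε * L (x / 2) ≤ 2 ^ ε * ((2 * X) ^ γ * (2 ^ ε) ^ k) :=
                mul_le_mul_of_nonneg_left h2 h2epos.le
          _ = (2 * X) ^ γ * (2 ^ ε) ^ (k + 1) := by ring
        linarith
  refine ⟨(2 * X) ^ γ / X ^ ε, by positivity, X, hX1, fun x hx => ?_⟩
  have hxpos : 0 < x := lt_of_lt_of_le hX0pos hx
  have hdiv1 : (1:ℝ) ≤ x / X := (one_le_div hX0pos).2 hx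
  have hdivpos : (0:ℝ) < x / X := lt_of_lt_of_le one_pos hdiv1
  set k : ℕ := ⌊Real.logb 2 (x / X)⌋₊ with hk
  have hlb0 : 0 ≤ Real.logb 2 (x / X) := Real.logb_nonneg one_lt_two hdiv1
  have h2 : x / X = (2:ℝ) ^ Real.logb 2 (x / X) :=
    (Real.rpow_logb two_pos (by norm_num) hdivpos).symm
  have hxk : x ≤ 2 ^ (k + 1) * X := by
    have h1 : Real.logb 2 (x / X) < ((k + 1 : ℕ) : ℝ) := by
      push_cast
      exact Nat.lt_floor_add_one _
    have h3 : (2:ℝ) ^ Real.logb 2 (x / X) ≤ (2:ℝ) ^ (((k + 1 : ℕ)) : ℝ) :=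
      Real.rpow_le_rpow_of_exponent_le one_le_two h1.le
    rw [Real.rpow_natCast] at h3
    have h4 : x / X ≤ (2:ℝ) ^ (k + 1) := by rw [h2]; exact_mod_cast h3
    calc x = x / X * X := by field_simp
    _ ≤ 2 ^ (k + 1) * X := mul_le_mul_of_nonneg_right h4 hX0pos.le
  have hpow : ((2:ℝ) ^ ε) ^ k ≤ (x / X) ^ ε := by
    have e1 : ((2:ℝ) ^ ε) ^ k = (2:ℝ) ^ (ε * (k:ℝ)) := by
      rw [← Real.rpow_natCast ((2:ℝ) ^ ε) k, ← Real.rpow_mul (by norm_num : (0:ℝ) ≤ 2)]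
    have e2 : (2:ℝ) ^ (ε * (k:ℝ)) ≤ (2:ℝ) ^ (ε * Real.logb 2 (x / X)) :=
      Real.rpow_le_rpow_of_exponent_le one_le_two
        (mul_le_mul_of_nonneg_left (Nat.floor_le hlb0) hε.le)
    have e3 : (2:ℝ) ^ (ε * Real.logb 2 (x / X)) = (x / X) ^ ε := by
      rw [mul_comm, Real.rpow_mul (by norm_num : (0:ℝ) ≤ 2), ← h2]
    rw [e1, ← e3]; exact e2
  have hfin := (key k x hx hxk).trans
    (mul_le_mul_of_nonneg_left hpow (Real.rpow_nonneg (by linarith) γ))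
  have e4 : (2 * X) ^ γ * (x / X) ^ ε = (2 * X) ^ γ / X ^ ε * x ^ ε := by
    rw [Real.div_rpow hxpos.le hX0pos.le]; ring
  rw [e4] at hfin
  exact hfin

section
open Set
lemma moment_finite {Ω : Type*} [MeasureSpace Ω] [IsProbabilityMeasure (ℙ : Measure Ω)]
    {f : Ω → ℕ} (hm : Measurable f)
    {γ : ℝ} (hγ1 : 1 < γ) {L : ℝ → ℝ}
    (hsv : ∀ t : ℝ, 0 < t → Tendsto (fun x => L (t * x) / L x) atTop (nhds 1))
    (htail : ∀ x : ℝ, 0 < x → ℙ {ω | x < (f ω : ℝ)} = ENNReal.ofReal (L x * x ^ (-γ)))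
    {p : ℝ} (hp1 : 1 ≤ p) (hpγ : p < γ) :
    ∫⁻ ω, ENNReal.ofReal ((f ω : ℝ) ^ p) ∂ℙ < ⊤ := by
  have hp0 : 0 < p := lt_of_lt_of_le one_pos hp1
  have hγ0 : 0 < γ := lt_trans one_pos hγ1
  have hgm : Measurable fun ω => ((f ω : ℝ)) ^ p :=
    (Measurable.of_discrete (f := fun k : ℕ => ((k : ℝ)) ^ p)).comp hm
  have hgnn : ∀ ω, 0 ≤ ((f ω : ℝ)) ^ p := fun ω => Real.rpow_nonneg (Nat.cast_nonneg _) p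
  by_cases hb : ∀ x : ℝ, 0 < x → ℙ {ω | x < (f ω : ℝ)} ≠ 0
  · -- unbounded case
    have hLpos : ∀ x : ℝ, 0 < x → 0 < L x := by
      intro x hx
      have h1 : ENNReal.ofReal (L x * x ^ (-γ)) ≠ 0 := htail x hx ▸ hb x hx
      have h2 : 0 < L x * x ^ (-γ) := by
        by_contra hcon
        exact h1 (ENNReal.ofReal_eq_zero.2 (not_lt.1 hcon))
      by_contra hcon
      exact absurd (mul_nonpos_of_nonpos_of_nonneg (not_lt.1 hcon)
        (Real.rpow_nonneg hx.le _)) (not_le.2 h2)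
    have hLbd : ∀ x : ℝ, 0 < x → L x ≤ x ^ γ := by
      intro x hx
      have h1 : ENNReal.ofReal (L x * x ^ (-γ)) ≤ 1 := by
        rw [← htail x hx]; exact prob_le_one
      have h2 : L x * x ^ (-γ) ≤ 1 := ENNReal.ofReal_le_one.1 h1
      have h3 : (0:ℝ) < x ^ γ := Real.rpow_pos_of_pos hx γ
      have h4 : x ^ (-γ) * x ^ γ = 1 := by
        rw [← Real.rpow_add hx]; simp
      nlinarith [hLpos x hx]
    set ε : ℝ := (γ - p) / 2 with hεdef
    have hε : 0 < ε := by simp only [hεdef]; linarith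
    obtain ⟨C, hC, X, hX1, hCX⟩ := potter_bound hγ0 hsv hLpos hLbd hε
    have hX0 : (0:ℝ) < X := lt_of_lt_of_le one_pos hX1
    set q : ℝ := (γ - ε) / p with hqdef
    have hq1 : 1 < q := by
      rw [hqdef, lt_div_iff₀ hp0]
      simp only [hεdef]; linarith
    set A : ℝ := X ^ p with hAdef
    have hA1 : (1:ℝ) ≤ A := Real.one_le_rpow hX1 hp0.le
    have hA0 : (0:ℝ) < A := lt_of_lt_of_le one_pos hA1
    -- layer cake
    rw [lintegral_eq_lintegral_meas_lt ℙ (Eventually.of_forall hgnn) hgm.aemeasurable]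
    -- split the domain
    have hsplit : Ioi (0:ℝ) = Ioc 0 A ∪ Ioi A := (Ioc_union_Ioi_eq_Ioi hA0.le).symm
    rw [hsplit, lintegral_union measurableSet_Ioi Ioc_disjoint_Ioi_same]
    have hbd1 : ∫⁻ t in Ioc (0:ℝ) A, ℙ {a | t < (f a : ℝ) ^ p} ≤ ENNReal.ofReal A := by
      calc ∫⁻ t in Ioc (0:ℝ) A, ℙ {a | t < (f a : ℝ) ^ p}
          ≤ ∫⁻ _ in Ioc (0:ℝ) A, 1 := lintegral_mono fun t => prob_le_one
      _ = ENNReal.ofReal A := by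
          rw [setLIntegral_const, one_mul, Real.volume_Ioc]
          simp
    have hbd2 : ∫⁻ t in Ioi A, ℙ {a | t < (f a : ℝ) ^ p}
        ≤ ∫⁻ t in Ioi A, ENNReal.ofReal (C * t ^ (-q)) := by
      apply setLIntegral_mono (by fun_prop)
      intro t ht
      have htA : A < t := ht
      have ht0 : (0:ℝ) < t := lt_trans hA0 htA
      have hs0 : (0:ℝ) < t ^ p⁻¹ := Real.rpow_pos_of_pos ht0 _
      have hset : {a | t < (f a : ℝ) ^ p} = {a | t ^ p⁻¹ < (f a : ℝ)} := by
        ext a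
        exact (Real.rpow_inv_lt_iff_of_pos ht0.le (Nat.cast_nonneg _) hp0).symm
      have hsX : X ≤ t ^ p⁻¹ := by
        have : A ^ p⁻¹ ≤ t ^ p⁻¹ := Real.rpow_le_rpow hA0.le htA.le (inv_pos.2 hp0).le
        rwa [hAdef, ← Real.rpow_mul hX0.le, mul_inv_cancel₀ hp0.ne', Real.rpow_one] at this
      rw [hset, htail _ hs0]
      apply ENNReal.ofReal_le_ofReal
      have h5 : L (t ^ p⁻¹) ≤ C * (t ^ p⁻¹) ^ ε := hCX _ hsX
      have h6 : L (t ^ p⁻¹) * (t ^ p⁻¹) ^ (-γ) ≤ C * (t ^ p⁻¹) ^ ε * (t ^ p⁻¹) ^ (-γ) :=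
        mul_le_mul_of_nonneg_right h5 (Real.rpow_nonneg hs0.le _)
      have h7 : C * (t ^ p⁻¹) ^ ε * (t ^ p⁻¹) ^ (-γ) = C * t ^ (-q) := by
        rw [mul_assoc, ← Real.rpow_add hs0, ← Real.rpow_mul ht0.le]
        congr 2
        rw [hqdef]; field_simp; ring
      rwa [h7] at h6
    have hfin2 : ∫⁻ t in Ioi A, ENNReal.ofReal (C * t ^ (-q)) < ⊤ := by
      have hint : IntegrableOn (fun t : ℝ => C * t ^ (-q)) (Ioi A) :=
        (integrableOn_Ioi_rpow_of_lt (by linarith : -q < -1) hA0).const_mul C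
      have hnn : 0 ≤ᵐ[volume.restrict (Ioi A)] fun t : ℝ => C * t ^ (-q) := by
        refine (ae_restrict_iff' measurableSet_Ioi).2 (ae_of_all _ fun t ht => ?_)
        have ht0 : (0:ℝ) < t := lt_trans hA0 ht
        positivity
      rw [← ofReal_integral_eq_lintegral_ofReal hint hnn]
      exact ENNReal.ofReal_lt_top
    exact lt_of_le_of_lt (add_le_add hbd1 hbd2)
      (ENNReal.add_lt_top.2 ⟨ENNReal.ofReal_lt_top, hfin2⟩)
  · -- bounded case
    push_neg at hb
    obtain ⟨x0, hx0, hP⟩ := hb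
    have hae : ∀ᵐ ω ∂ℙ, (f ω : ℝ) ≤ x0 := by
      rw [ae_iff]
      convert hP using 2
      ext ω
      simp [not_le]
    calc ∫⁻ ω, ENNReal.ofReal ((f ω : ℝ) ^ p) ∂ℙ
        ≤ ∫⁻ _, ENNReal.ofReal (x0 ^ p) ∂ℙ := by
          apply lintegral_mono_ae
          filter_upwards [hae] with ω hω
          exact ENNReal.ofReal_le_ofReal (Real.rpow_le_rpow (Nat.cast_nonneg _) hω hp0.le)
    _ = ENNReal.ofReal (x0 ^ p) := by simp
    _ < ⊤ := ENNReal.ofReal_lt_top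

end

set_option maxHeartbeats 1000000 in
/-- **Lemma (sum of large degrees).** Fix `1 < δ < α < γ` and
`0 < β < min{(2-δ)/γ, 1/(2γ), (α-δ)/(γ(α-1))}`. Then with probability `1 - O(n^{1-δ})`,
`∑ᵢ ξᵢ · 1{ξᵢ > n^β} ≤ n - √(2 E[ξ] n)`. -/
theorem sum_large_degrees
    {Ω : Type*} [MeasureSpace Ω] [IsProbabilityMeasure (ℙ : Measure Ω)]
    (ξ : ℕ → Ω → ℕ) (hmeas : ∀ i, Measurable (ξ i))
    (hindep : iIndepFun ξ ℙ)
    (hident : ∀ i, IdentDistrib (ξ i) (ξ 0) ℙ ℙ)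
    (hpos : ∀ i ω, 1 ≤ ξ i ω)
    (γ : ℝ) (hγ1 : 1 < γ) (hγ2 : γ < 2)
    (L : ℝ → ℝ)
    (hsv : ∀ t : ℝ, 0 < t → Tendsto (fun x => L (t * x) / L x) atTop (nhds 1))
    (htail : ∀ x : ℝ, 0 < x →
      ℙ {ω | x < (ξ 0 ω : ℝ)} = ENNReal.ofReal (L x * x ^ (-γ)))
    (δ : ℝ) (hδ1 : 1 < δ)
    (α : ℝ) (hδα : δ < α) (hαγ : α < γ)
    (β : ℝ) (hβ0 : 0 < β) (hβ1 : β < (2 - δ) / γ) (hβ2 : β < 1 / (2 * γ))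
    (hβ3 : β < (α - δ) / (γ * (α - 1))) :
    ∃ C : ℝ, ∀ n : ℕ, 1 ≤ n →
      (ℙ {ω | ¬ ((∑ i ∈ range n,
            if (n : ℝ) ^ β < (ξ i ω : ℝ) then (ξ i ω : ℝ) else 0)
          ≤ (n : ℝ) - Real.sqrt (2 * (∫ ω', (ξ 0 ω' : ℝ) ∂ℙ) * n))}).toReal
        ≤ C * (n : ℝ) ^ ((1 : ℝ) - δ) := by
  have hγ0 : (0:ℝ) < γ := by linarith
  have hδγ : δ < γ := by linarith
  have hδ2 : δ < 2 := by linarith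
  -- parameters
  set θ : ℝ := (δ / γ + (2 - δ) / (2 - γ)) / 2 with hθdef
  have hθlb : δ / γ < θ := by
    rw [hθdef]
    have : δ / γ < (2 - δ) / (2 - γ) := by
      rw [div_lt_div_iff₀ hγ0 (by linarith)]
      nlinarith
    linarith
  have hθub : θ < (2 - δ) / (2 - γ) := by
    rw [hθdef]
    have : δ / γ < (2 - δ) / (2 - γ) := by
      rw [div_lt_div_iff₀ hγ0 (by linarith)]
      nlinarith
    linarith
  have hθ0 : 0 < θ := lt_trans (div_pos (by linarith) hγ0) hθlb
  set p : ℝ := max (max (δ / θ) (2 - (2 - δ) / θ)) ((1 + γ) / 2) with hpdef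
  have hp1 : 1 < p := by
    have : (1 + γ) / 2 ≤ p := le_max_right _ _
    linarith
  have hpγ : p < γ := by
    rw [hpdef]
    apply max_lt (max_lt _ _) (by linarith)
    · rw [div_lt_iff₀ hθ0]
      have := (div_lt_iff₀ hγ0).1 hθlb
      nlinarith
    · have h1 : (2 - γ) * θ < 2 - δ := by
        have := (lt_div_iff₀ (by linarith : (0:ℝ) < 2 - γ)).1 hθub
        linarith
      have h2 : 2 - γ < (2 - δ) / θ := (lt_div_iff₀ hθ0).2 (by nlinarith)
      linarith
  have hp2 : p < 2 := by linarith
  have hδθp : δ ≤ θ * p := by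
    have h1 : δ / θ ≤ p := le_trans (le_max_left _ _) (le_max_left _ _)
    calc δ = θ * (δ / θ) := by field_simp
    _ ≤ θ * p := mul_le_mul_of_nonneg_left h1 hθ0.le
  have hθ2p : θ * (2 - p) ≤ 2 - δ := by
    have h1 : 2 - (2 - δ) / θ ≤ p := le_trans (le_max_right _ _) (le_max_left _ _)
    have h2 : 2 - p ≤ (2 - δ) / θ := by linarith
    calc θ * (2 - p) ≤ θ * ((2 - δ) / θ) := mul_le_mul_of_nonneg_left h2 hθ0.le
    _ = 2 - δ := by field_simp
  -- moment of order p
  have hΛ : ∫⁻ ω, ENNReal.ofReal ((ξ 0 ω : ℝ) ^ p) ∂ℙ < ⊤ :=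
    moment_finite (hmeas 0) hγ1 hsv htail hp1.le hpγ
  set F : Ω → ℝ := fun ω => ((ξ 0 ω : ℝ)) ^ p with hFdef
  have hFmeas : Measurable F :=
    (Measurable.of_discrete (f := fun k : ℕ => ((k : ℝ)) ^ p)).comp (hmeas 0)
  have hFnn : ∀ ω, 0 ≤ F ω := fun ω => Real.rpow_nonneg (Nat.cast_nonneg _) p
  have hFint : Integrable F ℙ :=
    ⟨hFmeas.aestronglyMeasurable,
      (hasFiniteIntegral_iff_ofReal (ae_of_all _ hFnn)).2 hΛ⟩
  set K : ℝ := ∫ ω, F ω ∂ℙ with hKdef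
  have hKΛ : ENNReal.ofReal K = ∫⁻ ω, ENNReal.ofReal (F ω) ∂ℙ :=
    ofReal_integral_eq_lintegral_ofReal hFint (ae_of_all _ hFnn)
  have hξ1F : ∀ ω, ((ξ 0 ω : ℝ)) ≤ F ω := by
    intro ω
    have h1 : (1:ℝ) ≤ (ξ 0 ω : ℝ) := by exact_mod_cast hpos 0 ω
    calc ((ξ 0 ω : ℝ)) = ((ξ 0 ω : ℝ)) ^ (1:ℝ) := (Real.rpow_one _).symm
    _ ≤ F ω := Real.rpow_le_rpow_of_exponent_le h1 hp1.le
  have hξ0int : Integrable (fun ω => ((ξ 0 ω : ℝ))) ℙ := by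
    apply hFint.mono' ((Measurable.of_discrete (f := fun k : ℕ =>
      ((k : ℝ)))).comp (hmeas 0)).aestronglyMeasurable
    refine ae_of_all _ fun ω => ?_
    rw [Real.norm_eq_abs, abs_of_nonneg (Nat.cast_nonneg _)]
    exact hξ1F ω
  have hK1 : 1 ≤ K := by
    have := integral_mono (integrable_const (1:ℝ)) hFint
      (fun ω => le_trans (show (1:ℝ) ≤ (ξ 0 ω : ℝ) by exact_mod_cast hpos 0 ω) (hξ1F ω))
    simpa using this
  have hK0 : 0 < K := by linarith
  set μ : ℝ := ∫ ω', ((ξ 0 ω' : ℝ)) ∂ℙ with hμdef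
  have hμK : μ ≤ K := integral_mono hξ0int hFint hξ1F
  have hμ0 : 0 ≤ μ := integral_nonneg fun ω => Nat.cast_nonneg _
  -- choose the threshold for "large n"
  have hev : ∀ᶠ n : ℕ in atTop,
      8 * K ≤ (n:ℝ) ∧ 4 * K ≤ (n:ℝ) ^ (β * (p - 1)) := by
    have h1 : Tendsto (fun n : ℕ => (n:ℝ)) atTop atTop := tendsto_natCast_atTop_atTop
    have h2 : Tendsto (fun n : ℕ => (n:ℝ) ^ (β * (p - 1))) atTop atTop :=
      (tendsto_rpow_atTop (by nlinarith)).comp h1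
    exact (h1.eventually_ge_atTop (8 * K)).and (h2.eventually_ge_atTop (4 * K))
  obtain ⟨N0, hN0⟩ := eventually_atTop.mp hev
  refine ⟨max (17 * K) (((N0:ℝ) + 1) ^ (δ - 1)), fun n hn1 => ?_⟩
  have hn1' : (1:ℝ) ≤ (n:ℝ) := by exact_mod_cast hn1
  have hn0 : (0:ℝ) < (n:ℝ) := by linarith
  rcases lt_or_ge n N0 with hsmall | hbig
  · -- small n : trivial bound
    have h1 : (ℙ {ω | ¬ ((∑ i ∈ range n,
            if (n : ℝ) ^ β < (ξ i ω : ℝ) then (ξ i ω : ℝ) else 0)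
          ≤ (n : ℝ) - Real.sqrt (2 * μ * n))}).toReal ≤ 1 :=
      ENNReal.toReal_le_of_le_ofReal one_pos.le (by simpa using prob_le_one)
    have h2 : (n:ℝ) ^ (δ - 1) ≤ ((N0:ℝ) + 1) ^ (δ - 1) := by
      apply Real.rpow_le_rpow hn0.le _ (by linarith)
      have : (n:ℝ) ≤ (N0:ℝ) := by exact_mod_cast hsmall.le
      linarith
    have h3 : (1:ℝ) = (n:ℝ) ^ (δ - 1) * (n:ℝ) ^ ((1:ℝ) - δ) := by
      rw [← Real.rpow_add hn0]
      norm_num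
    calc (ℙ {ω | ¬ ((∑ i ∈ range n,
            if (n : ℝ) ^ β < (ξ i ω : ℝ) then (ξ i ω : ℝ) else 0)
          ≤ (n : ℝ) - Real.sqrt (2 * μ * n))}).toReal ≤ 1 := h1
    _ = (n:ℝ) ^ (δ - 1) * (n:ℝ) ^ ((1:ℝ) - δ) := h3
    _ ≤ max (17 * K) (((N0:ℝ) + 1) ^ (δ - 1)) * (n:ℝ) ^ ((1:ℝ) - δ) := by
        apply mul_le_mul_of_nonneg_right _ (Real.rpow_nonneg hn0.le _)
        exact le_trans h2 (le_max_right _ _)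
  · -- main case : n ≥ N0
    obtain ⟨hn8K, hn4K⟩ := hN0 n hbig
    set y : ℝ := (n:ℝ) ^ θ with hydef
    have hy1 : (1:ℝ) ≤ y := Real.one_le_rpow hn1' hθ0.le
    have hy0 : (0:ℝ) < y := by linarith
    set g : ℕ → ℝ := fun k => if (n:ℝ) ^ β < (k:ℝ) ∧ (k:ℝ) ≤ y then (k:ℝ) else 0 with hgdef
    have hgmeas : Measurable g := Measurable.of_discrete
    set T : ℕ → Ω → ℝ := fun i => g ∘ ξ i with hTdef
    have hTmeas : ∀ i, Measurable (T i) := fun i => hgmeas.comp (hmeas i)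
    have hT0 : ∀ i ω, 0 ≤ T i ω := by
      intro i ω
      simp only [hTdef, hgdef, Function.comp_apply]
      split
      · exact Nat.cast_nonneg _
      · exact le_refl 0
    have hTy : ∀ i ω, T i ω ≤ y := by
      intro i ω
      simp only [hTdef, hgdef, Function.comp_apply]
      split
      · exact (by assumption : _ ∧ _).2
      · linarith
    have hTid : ∀ i, IdentDistrib (T i) (T 0) ℙ ℙ := fun i => (hident i).comp hgmeas
    have hTmem : ∀ i, MemLp (T i) 2 ℙ := by
      intro i
      apply MemLp.of_bound (hTmeas i).aestronglyMeasurable y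
      refine ae_of_all _ fun ω => ?_
      rw [Real.norm_eq_abs, abs_of_nonneg (hT0 i ω)]
      exact hTy i ω
    have hTint : ∀ i, Integrable (T i) ℙ := fun i => (hTmem i).integrable one_le_two
    set W : Ω → ℝ := ∑ i ∈ range n, T i with hWdef
    have hWmem : MemLp W 2 ℙ := memLp_finsetSum' _ fun i _ => hTmem i
    -- mean of T 0
    have hT0F : ∀ ω, T 0 ω ≤ (n:ℝ) ^ (β * (1 - p)) * F ω := by
      intro ω
      have hb0 : (0:ℝ) < (n:ℝ) ^ β := Real.rpow_pos_of_pos hn0 β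
      simp only [hTdef, hgdef, Function.comp_apply]
      split_ifs with hcase
      · obtain ⟨ha, -⟩ := hcase
        have hx0 : (0:ℝ) < (ξ 0 ω : ℝ) := lt_trans hb0 ha
        calc ((ξ 0 ω : ℝ)) = ((ξ 0 ω : ℝ)) ^ ((1 - p) + p) := by
              rw [sub_add_cancel, Real.rpow_one]
        _ = ((ξ 0 ω : ℝ)) ^ (1 - p) * ((ξ 0 ω : ℝ)) ^ p := Real.rpow_add hx0 _ _
        _ ≤ (n:ℝ) ^ (β * (1 - p)) * F ω := by
              apply mul_le_mul_of_nonneg_right _ (Real.rpow_nonneg hx0.le p)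
              have h2 := Real.rpow_le_rpow_of_nonpos hb0 ha.le
                (by linarith : 1 - p ≤ 0)
              rwa [← Real.rpow_mul hn0.le] at h2
      · have : 0 ≤ (n:ℝ) ^ (β * (1 - p)) * F ω := by
          have := hFnn ω
          positivity
        linarith
    have hET0 : ∫ ω, T 0 ω ∂ℙ ≤ (n:ℝ) ^ (β * (1 - p)) * K := by
      have := integral_mono (hTint 0) (hFint.const_mul _) hT0F
      rwa [integral_const_mul] at this
    have hmean : ∫ ω, W ω ∂ℙ ≤ (n:ℝ) / 4 := by
      have h1 : ∫ ω, W ω ∂ℙ = ∑ i ∈ range n, ∫ ω, T i ω ∂ℙ := by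
        simp only [hWdef, Finset.sum_apply]
        exact integral_finset_sum _ fun i _ => hTint i
      have h2 : ∀ i ∈ range n, ∫ ω, T i ω ∂ℙ = ∫ ω, T 0 ω ∂ℙ := fun i _ =>
        (hTid i).integral_eq
      have h3 : ∫ ω, W ω ∂ℙ = (n:ℝ) * ∫ ω, T 0 ω ∂ℙ := by
        rw [h1, Finset.sum_congr rfl h2, Finset.sum_const, card_range, nsmul_eq_mul]
      have hD0 : (0:ℝ) < (n:ℝ) ^ (β * (p - 1)) := Real.rpow_pos_of_pos hn0 _
      have h4 : (n:ℝ) ^ (β * (1 - p)) * K ≤ 1 / 4 := by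
        have e : (n:ℝ) ^ (β * (1 - p)) = ((n:ℝ) ^ (β * (p - 1)))⁻¹ := by
          rw [← Real.rpow_neg hn0.le]
          ring_nf
        rw [e, inv_mul_eq_div, div_le_div_iff₀ hD0 (by norm_num)]
        linarith
      have h5 : ∫ ω, T 0 ω ∂ℙ ≤ 1 / 4 := hET0.trans h4
      rw [h3]
      nlinarith
    -- variance bound
    have hVar : variance W ℙ ≤ (n:ℝ) * (y ^ ((2:ℝ) - p) * K) := by
      have hpair : Set.Pairwise ↑(range n) fun i j => IndepFun (T i) (T j) ℙ :=
        fun i _ j _ hij => (hindep.indepFun hij).comp hgmeas hgmeas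
      have h1 : variance W ℙ = ∑ i ∈ range n, variance (T i) ℙ :=
        IndepFun.variance_sum (fun i _ => hTmem i) hpair
      have h2 : ∀ i ∈ range n, variance (T i) ℙ = variance (T 0) ℙ := fun i _ =>
        (hTid i).variance_eq
      have hT2 : ∀ ω, (T 0 ω) ^ 2 ≤ y ^ ((2:ℝ) - p) * F ω := by
        intro ω
        simp only [hTdef, hgdef, Function.comp_apply]
        split_ifs with hcase
        · obtain ⟨ha, hb⟩ := hcase
          have hb0 : (0:ℝ) < (n:ℝ) ^ β := Real.rpow_pos_of_pos hn0 β
          have hx0 : (0:ℝ) < (ξ 0 ω : ℝ) := lt_trans hb0 ha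
          calc ((ξ 0 ω : ℝ)) ^ 2 = ((ξ 0 ω : ℝ)) ^ ((2:ℝ)) := (Real.rpow_two _).symm
          _ = ((ξ 0 ω : ℝ)) ^ ((2 - p) + p) := by norm_num
          _ = ((ξ 0 ω : ℝ)) ^ ((2:ℝ) - p) * ((ξ 0 ω : ℝ)) ^ p := Real.rpow_add hx0 _ _
          _ ≤ y ^ ((2:ℝ) - p) * F ω := by
                apply mul_le_mul_of_nonneg_right _ (Real.rpow_nonneg hx0.le p)
                exact Real.rpow_le_rpow hx0.le hb (by linarith)
        · have h0 : 0 ≤ y ^ ((2:ℝ) - p) * F ω := by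
            have := hFnn ω
            positivity
          simpa using h0
      have h3 : variance (T 0) ℙ ≤ y ^ ((2:ℝ) - p) * K := by
        rw [variance_eq_sub (hTmem 0)]
        have h4 : (∫ ω, (T 0 ω) ^ 2 ∂ℙ) ≤ y ^ ((2:ℝ) - p) * K := by
          have := integral_mono ((hTmem 0).integrable_sq) (hFint.const_mul _) hT2
          rwa [integral_const_mul] at this
        have h5 : (0:ℝ) ≤ (∫ ω, T 0 ω ∂ℙ) ^ 2 := sq_nonneg _
        simp only [Pi.pow_apply]
        linarith
      calc variance W ℙ = ∑ i ∈ range n, variance (T i) ℙ := h1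
      _ = (n:ℝ) * variance (T 0) ℙ := by
          rw [Finset.sum_congr rfl h2, Finset.sum_const, card_range, nsmul_eq_mul]
      _ ≤ (n:ℝ) * (y ^ ((2:ℝ) - p) * K) := by
          apply mul_le_mul_of_nonneg_left h3 hn0.le
    -- threshold bound
    have hshalf : (n:ℝ) / 2 ≤ (n:ℝ) - Real.sqrt (2 * μ * n) := by
      have h1 : Real.sqrt (2 * μ * n) ≤ (n:ℝ) / 2 := by
        have h2 : 2 * μ * n ≤ ((n:ℝ) / 2) ^ 2 := by nlinarith
        calc Real.sqrt (2 * μ * n) ≤ Real.sqrt (((n:ℝ) / 2) ^ 2) := Real.sqrt_le_sqrt h2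
        _ = (n:ℝ) / 2 := Real.sqrt_sq (by linarith)
      linarith
    -- event inclusion
    have hsub : {ω | ¬ ((∑ i ∈ range n,
            if (n : ℝ) ^ β < (ξ i ω : ℝ) then (ξ i ω : ℝ) else 0)
          ≤ (n : ℝ) - Real.sqrt (2 * μ * n))} ⊆
        (⋃ i ∈ range n, {ω | y < (ξ i ω : ℝ)}) ∪
        {ω | (n:ℝ) / 4 ≤ |W ω - ∫ ω', W ω' ∂ℙ|} := by
      intro ω hω
      simp only [Set.mem_setOf_eq] at hω
      rw [Set.mem_union]
      by_contra hc
      push_neg at hc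
      obtain ⟨hc1, hc2⟩ := hc
      simp only [Set.mem_iUnion, Set.mem_setOf_eq, not_exists] at hc1
      simp only [Set.mem_setOf_eq, not_le] at hc2
      apply hω
      have hSW : (∑ i ∈ range n,
          if (n:ℝ) ^ β < (ξ i ω : ℝ) then ((ξ i ω : ℝ)) else 0) = W ω := by
        rw [hWdef, Finset.sum_apply]
        apply Finset.sum_congr rfl
        intro i hi
        have hiy : (ξ i ω : ℝ) ≤ y := le_of_not_gt (hc1 i hi)
        simp only [hTdef, hgdef, Function.comp_apply]
        by_cases hcase : (n:ℝ) ^ β < (ξ i ω : ℝ)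
        · rw [if_pos hcase, if_pos ⟨hcase, hiy⟩]
        · rw [if_neg hcase, if_neg fun h => hcase h.1]
      rw [hSW]
      have h6 := le_abs_self (W ω - ∫ ω', W ω' ∂ℙ)
      have h7 := abs_lt.1 hc2
      linarith [h7.2, hmean, hshalf]
    -- probability of the union
    have hU : ℙ (⋃ i ∈ range n, {ω | y < (ξ i ω : ℝ)}) ≤
        ENNReal.ofReal (K * (n:ℝ) ^ ((1:ℝ) - δ)) := by
      have hyp0 : (0:ℝ) < y ^ p := Real.rpow_pos_of_pos hy0 p
      have hAeq : ∀ i, ℙ {ω | y < (ξ i ω : ℝ)} = ℙ {ω | y < (ξ 0 ω : ℝ)} := by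
        intro i
        have h := (hident i).measure_mem_eq
          (s := {k : ℕ | y < (k : ℝ)}) MeasurableSet.of_discrete
        exact h
      have hMar : ℙ {ω | y < (ξ 0 ω : ℝ)} ≤ ENNReal.ofReal K / ENNReal.ofReal (y ^ p) := by
        have h1 := meas_ge_le_lintegral_div (μ := ℙ)
          (f := fun ω => ENNReal.ofReal (F ω)) hFmeas.ennreal_ofReal.aemeasurable
          (ε := ENNReal.ofReal (y ^ p)) (ne_of_gt (ENNReal.ofReal_pos.2 hyp0))
          ENNReal.ofReal_ne_top
        refine le_trans (measure_mono ?_) (le_trans h1 ?_)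
        · intro ω hω
          simp only [Set.mem_setOf_eq] at hω ⊢
          exact ENNReal.ofReal_le_ofReal (Real.rpow_le_rpow hy0.le hω.le
            (by linarith : (0:ℝ) ≤ p))
        · rw [← hKΛ]
      have hreal : (n:ℝ) * (K / y ^ p) ≤ K * (n:ℝ) ^ ((1:ℝ) - δ) := by
        have e1 : y ^ p = (n:ℝ) ^ (θ * p) := by
          rw [hydef, ← Real.rpow_mul hn0.le]
        have e2 : (n:ℝ) * (K / (n:ℝ) ^ (θ * p)) = K * (n:ℝ) ^ ((1:ℝ) - θ * p) := by
          rw [Real.rpow_sub hn0, Real.rpow_one]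
          ring
        have e3 : (n:ℝ) ^ ((1:ℝ) - θ * p) ≤ (n:ℝ) ^ ((1:ℝ) - δ) :=
          Real.rpow_le_rpow_of_exponent_le hn1' (by linarith)
        rw [e1, e2]
        exact mul_le_mul_of_nonneg_left e3 hK0.le
      calc ℙ (⋃ i ∈ range n, {ω | y < (ξ i ω : ℝ)})
          ≤ ∑ i ∈ range n, ℙ {ω | y < (ξ i ω : ℝ)} := measure_biUnion_finset_le _ _
      _ = (n : ℕ) • ℙ {ω | y < (ξ 0 ω : ℝ)} := by
          rw [Finset.sum_congr rfl fun i _ => hAeq i, Finset.sum_const, card_range]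
      _ = ENNReal.ofReal ((n:ℝ)) * ℙ {ω | y < (ξ 0 ω : ℝ)} := by
          rw [nsmul_eq_mul, ENNReal.ofReal_natCast]
      _ ≤ ENNReal.ofReal ((n:ℝ)) * (ENNReal.ofReal K / ENNReal.ofReal (y ^ p)) :=
          mul_le_mul_right hMar _
      _ = ENNReal.ofReal ((n:ℝ) * (K / y ^ p)) := by
          rw [← ENNReal.ofReal_div_of_pos hyp0, ← ENNReal.ofReal_mul hn0.le]
      _ ≤ ENNReal.ofReal (K * (n:ℝ) ^ ((1:ℝ) - δ)) := ENNReal.ofReal_le_ofReal hreal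
    -- Chebyshev
    have hCh : ℙ {ω | (n:ℝ) / 4 ≤ |W ω - ∫ ω', W ω' ∂ℙ|} ≤
        ENNReal.ofReal (16 * K * (n:ℝ) ^ ((1:ℝ) - δ)) := by
      have hc4 : (0:ℝ) < (n:ℝ) / 4 := by linarith
      have h1 := meas_ge_le_variance_div_sq (μ := ℙ) hWmem hc4
      refine le_trans h1 (ENNReal.ofReal_le_ofReal ?_)
      have e1 : y ^ ((2:ℝ) - p) = (n:ℝ) ^ (θ * (2 - p)) := by
        rw [hydef, ← Real.rpow_mul hn0.le]
      have hD0 : (0:ℝ) < (n:ℝ) ^ (θ * (2 - p)) := Real.rpow_pos_of_pos hn0 _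
      have e2 : (n:ℝ) * ((n:ℝ) ^ (θ * (2 - p)) * K) / ((n:ℝ) / 4) ^ 2 =
          16 * K * ((n:ℝ) ^ (θ * (2 - p) - 1)) := by
        rw [Real.rpow_sub hn0, Real.rpow_one]
        field_simp
        ring
      have e3 : (n:ℝ) ^ (θ * (2 - p) - 1) ≤ (n:ℝ) ^ ((1:ℝ) - δ) :=
        Real.rpow_le_rpow_of_exponent_le hn1' (by linarith)
      calc variance W ℙ / ((n:ℝ) / 4) ^ 2
          ≤ (n:ℝ) * (y ^ ((2:ℝ) - p) * K) / ((n:ℝ) / 4) ^ 2 := by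
            gcongr
      _ = 16 * K * ((n:ℝ) ^ (θ * (2 - p) - 1)) := by rw [e1, e2]
      _ ≤ 16 * K * (n:ℝ) ^ ((1:ℝ) - δ) := by nlinarith [hK0]
    have hfinal : ℙ {ω | ¬ ((∑ i ∈ range n,
            if (n : ℝ) ^ β < (ξ i ω : ℝ) then (ξ i ω : ℝ) else 0)
          ≤ (n : ℝ) - Real.sqrt (2 * μ * n))} ≤
        ENNReal.ofReal (17 * K * (n:ℝ) ^ ((1:ℝ) - δ)) := by
      calc ℙ {ω | ¬ ((∑ i ∈ range n,
            if (n : ℝ) ^ β < (ξ i ω : ℝ) then (ξ i ω : ℝ) else 0)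
          ≤ (n : ℝ) - Real.sqrt (2 * μ * n))} ≤
          ℙ ((⋃ i ∈ range n, {ω | y < (ξ i ω : ℝ)}) ∪
            {ω | (n:ℝ) / 4 ≤ |W ω - ∫ ω', W ω' ∂ℙ|}) := measure_mono hsub
      _ ≤ ℙ (⋃ i ∈ range n, {ω | y < (ξ i ω : ℝ)}) +
          ℙ {ω | (n:ℝ) / 4 ≤ |W ω - ∫ ω', W ω' ∂ℙ|} := measure_union_le _ _
      _ ≤ ENNReal.ofReal (K * (n:ℝ) ^ ((1:ℝ) - δ)) +
          ENNReal.ofReal (16 * K * (n:ℝ) ^ ((1:ℝ) - δ)) := add_le_add hU hCh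
      _ = ENNReal.ofReal (17 * K * (n:ℝ) ^ ((1:ℝ) - δ)) := by
          rw [← ENNReal.ofReal_add (by positivity) (by positivity)]
          ring_nf
    calc (ℙ {ω | ¬ ((∑ i ∈ range n,
            if (n : ℝ) ^ β < (ξ i ω : ℝ) then (ξ i ω : ℝ) else 0)
          ≤ (n : ℝ) - Real.sqrt (2 * μ * n))}).toReal ≤
        17 * K * (n:ℝ) ^ ((1:ℝ) - δ) :=
        ENNReal.toReal_le_of_le_ofReal (by positivity) hfinal
    _ ≤ max (17 * K) (((N0:ℝ) + 1) ^ (δ - 1)) * (n:ℝ) ^ ((1:ℝ) - δ) :=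
        mul_le_mul_of_nonneg_right (le_max_left _ _) (Real.rpow_nonneg hn0.le _)
end

section
/- A sequence of non-negative integers d_1 ≥ d_2 ≥ … ≥ d_n is the degree sequence of some finite simple graph on n vertices if and only if (1) d_1 + … + d_n is even, and (2) for every k with 1 ≤ k ≤ n, Σ_{i=1}^k d_i ≤ k(k−1) + Σ_{i=k+1}^n min(d_i, k). -/
open Finset

lemma fin_filter_sum (n : ℕ) (p : ℕ → Prop) [DecidablePred p] (g : ℕ → ℕ) :
    ∑ v ∈ (univ : Finset (Fin n)).filter (fun v => p v.val), g v.val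
      = ∑ i ∈ (range n).filter p, g i := by
  rw [Finset.sum_filter, Finset.sum_filter,
    Fin.sum_univ_eq_sum_range (fun i => if p i then g i else 0)]

section Necessity
variable {n : ℕ} (G : SimpleGraph (Fin n)) [DecidableRel G.Adj]

lemma nec_even (d : ℕ → ℕ) (hdeg : ∀ i : Fin n, G.degree i = d i) :
    Even (∑ i ∈ range n, d i) := by
  have h1 : ∑ i ∈ range n, d i = ∑ v : Fin n, G.degree v := by
    rw [← Fin.sum_univ_eq_sum_range]
    exact Finset.sum_congr rfl (fun v _ => (hdeg v).symm)
  rw [h1, SimpleGraph.sum_degrees_eq_twice_card_edges]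
  exact even_two_mul _

lemma nec_ineq (d : ℕ → ℕ) (hdeg : ∀ i : Fin n, G.degree i = d i)
    (k : ℕ) (hk1 : 1 ≤ k) (hkn : k ≤ n) :
    ∑ i ∈ range k, d i ≤ k * (k - 1) + ∑ i ∈ Finset.Ico k n, min (d i) k := by
  classical
  set S : Finset (Fin n) := univ.filter (fun v => v.val < k) with hS
  set Sc : Finset (Fin n) := univ.filter (fun v => ¬ v.val < k) with hSc
  have hrk : (range n).filter (· < k) = range k := by
    ext i; simp; omega
  have hrk' : (range n).filter (fun i => ¬ i < k) = Ico k n := by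
    ext i; simp; omega
  have hcard : S.card = k := by
    have h := fin_filter_sum n (· < k) (fun _ => 1)
    rw [hrk] at h
    simp only [Finset.sum_const, smul_eq_mul, mul_one, Finset.card_range] at h
    rw [hS]
    exact h
  have hLHS : ∑ i ∈ range k, d i = ∑ v ∈ S, G.degree v := by
    have := fin_filter_sum n (· < k) d
    rw [hrk] at this
    rw [← this, hS]
    exact Finset.sum_congr rfl (fun v _ => (hdeg v).symm)
  have hsplit : ∀ v : Fin n, G.degree v
      = (G.neighborFinset v ∩ S).card + (G.neighborFinset v \ S).card := by
    intro v
    rw [Finset.card_inter_add_card_sdiff]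
    rfl
  have hinner : ∀ v ∈ S, (G.neighborFinset v ∩ S).card ≤ k - 1 := by
    intro v hv
    have hsub : G.neighborFinset v ∩ S ⊆ S.erase v := by
      intro w hw
      simp only [Finset.mem_inter, SimpleGraph.mem_neighborFinset] at hw
      exact Finset.mem_erase.mpr ⟨fun h => G.ne_of_adj hw.1 h.symm, hw.2⟩
    calc (G.neighborFinset v ∩ S).card ≤ (S.erase v).card := Finset.card_le_card hsub
      _ = k - 1 := by rw [Finset.card_erase_of_mem hv, hcard]
  have hswap : ∑ v ∈ S, (G.neighborFinset v \ S).card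
      = ∑ w ∈ Sc, (G.neighborFinset w ∩ S).card := by
    have h1 : ∀ v, (G.neighborFinset v \ S).card
        = ∑ w ∈ Sc, if G.Adj v w then 1 else 0 := by
      intro v
      rw [← Finset.sum_filter, ← Finset.card_eq_sum_ones]
      congr 1
      ext w
      simp only [Finset.mem_sdiff, SimpleGraph.mem_neighborFinset, hS, hSc,
        Finset.mem_filter, Finset.mem_univ, true_and]
      tauto
    have h2 : ∀ w, (G.neighborFinset w ∩ S).card
        = ∑ v ∈ S, if G.Adj w v then 1 else 0 := by
      intro w
      rw [← Finset.sum_filter, ← Finset.card_eq_sum_ones]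
      congr 1
      ext v
      simp only [Finset.mem_inter, SimpleGraph.mem_neighborFinset, Finset.mem_filter]
      tauto
    rw [Finset.sum_congr rfl (fun v _ => h1 v), Finset.sum_comm,
      Finset.sum_congr rfl (fun w _ => h2 w)]
    apply Finset.sum_congr rfl
    intro w _
    apply Finset.sum_congr rfl
    intro v _
    simp [G.adj_comm]
  have houter : ∀ w ∈ Sc, (G.neighborFinset w ∩ S).card ≤ min (d w.val) k := by
    intro w _
    apply le_min
    · calc (G.neighborFinset w ∩ S).card ≤ (G.neighborFinset w).card :=
        Finset.card_le_card Finset.inter_subset_left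
      _ = d w.val := hdeg w
    · calc (G.neighborFinset w ∩ S).card ≤ S.card :=
        Finset.card_le_card Finset.inter_subset_right
      _ = k := hcard
  have hRHS : ∑ w ∈ Sc, min (d w.val) k = ∑ i ∈ Ico k n, min (d i) k := by
    have := fin_filter_sum n (fun i => ¬ i < k) (fun i => min (d i) k)
    rw [hrk'] at this
    exact this
  calc ∑ i ∈ range k, d i
      = ∑ v ∈ S, ((G.neighborFinset v ∩ S).card + (G.neighborFinset v \ S).card) := by
        rw [hLHS]; exact Finset.sum_congr rfl (fun v _ => hsplit v)
    _ = ∑ v ∈ S, (G.neighborFinset v ∩ S).card + ∑ v ∈ S, (G.neighborFinset v \ S).card :=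
        Finset.sum_add_distrib
    _ ≤ k * (k-1) + ∑ w ∈ Sc, (G.neighborFinset w ∩ S).card := by
        rw [hswap]
        apply Nat.add_le_add_right
        calc ∑ v ∈ S, (G.neighborFinset v ∩ S).card ≤ ∑ v ∈ S, (k-1) :=
            Finset.sum_le_sum hinner
          _ = k * (k-1) := by rw [Finset.sum_const, hcard, smul_eq_mul]
    _ ≤ k * (k-1) + ∑ i ∈ Ico k n, min (d i) k := by
        apply Nat.add_le_add_left
        rw [← hRHS]
        exact Finset.sum_le_sum houter

end Necessity

lemma shiftIco (f : ℕ → ℕ) (p q : ℕ) :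
    ∑ j ∈ Ico p q, f (j+1) = ∑ i ∈ Ioc p q, f i := by
  have h : Ioc p q = Ico (p+1) (q+1) := by ext i; simp
  rw [h, Finset.sum_Ico_eq_sum_range, Finset.sum_Ico_eq_sum_range]
  have h2 : q + 1 - (p+1) = q - p := by omega
  rw [h2]
  exact Finset.sum_congr rfl fun j _ => by congr 1; omega

lemma shiftRange (f : ℕ → ℕ) (q : ℕ) :
    ∑ j ∈ range q, f (j+1) = ∑ i ∈ Ioc 0 q, f i := by
  rw [← shiftIco f 0 q]
  rw [Finset.range_eq_Ico]

lemma sum_sub_cancel' {s : Finset ℕ} {f g : ℕ → ℕ} (h : ∀ i ∈ s, g i ≤ f i) :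
    ∑ i ∈ s, (f i - g i) + ∑ i ∈ s, g i = ∑ i ∈ s, f i := by
  rw [← Finset.sum_add_distrib]
  exact Finset.sum_congr rfl (fun i hi => Nat.sub_add_cancel (h i hi))

lemma anti_of_adj {f : ℕ → ℕ} {N : ℕ} (h : ∀ j, j + 1 < N → f (j+1) ≤ f j) :
    ∀ i j, i ≤ j → j < N → f j ≤ f i := by
  intro i j
  induction j with
  | zero =>
    intro hij _
    have : i = 0 := by omega
    subst this; exact le_refl _
  | succ p IH =>
    intro hij hjN
    rcases Nat.eq_or_lt_of_le hij with rfl | hlt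
    · exact le_refl _
    · exact le_trans (h p hjN) (IH (by omega) (by omega))

lemma downward_eq_Ioc {N : ℕ} {A : Finset ℕ} (hsub : A ⊆ Ioc 0 N)
    (hdc : ∀ i j, 0 < j → j ≤ i → i ∈ A → j ∈ A) :
    A = Ioc 0 A.card := by
  have hsub2 : Ioc 0 A.card ⊆ A := by
    intro j hj
    simp only [Finset.mem_Ioc] at hj
    by_contra hjA
    have hA : A ⊆ Ioc 0 (j-1) := by
      intro i hi
      have hi' := hsub hi
      simp only [Finset.mem_Ioc] at hi' ⊢
      refine ⟨hi'.1, ?_⟩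
      by_contra hij
      exact hjA (hdc i j (by omega) (by omega) hi)
    have := Finset.card_le_card hA
    rw [Nat.card_Ioc] at this
    omega
  have hcard : (Ioc 0 A.card).card = A.card := by rw [Nat.card_Ioc]; omega
  exact (Finset.eq_of_subset_of_card_le hsub2 (le_of_eq hcard.symm)).symm

lemma lemU (f : ℕ → ℕ) (N k : ℕ) (hsorted : ∀ i j, i ≤ j → j < N → f j ≤ f i)
    (hk2 : 2 ≤ k) (hkN : k ≤ N) (hsmall : f (k-1) ≤ k-1)
    (hprev : ∑ j ∈ range (k-1), f j ≤ (k-1)*((k-1)-1) + ∑ j ∈ Ico (k-1) N, min (f j) (k-1)) :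
    ∑ j ∈ range k, f j ≤ k*(k-1) + ∑ j ∈ Ico k N, min (f j) k := by
  obtain ⟨p, rfl⟩ : ∃ p, k = p + 1 := ⟨k - 1, by omega⟩
  simp only [Nat.add_sub_cancel] at hsmall hprev ⊢
  have hpN : p < N := by omega
  rw [Finset.sum_eq_sum_Ico_succ_bot hpN] at hprev
  have hfp : min (f p) p = f p := by omega
  rw [hfp] at hprev
  have htail : ∀ j ∈ Ico (p+1) N, min (f j) p = min (f j) (p+1) := by
    intro j hj
    simp only [Finset.mem_Ico] at hj
    have : f j ≤ f p := hsorted p j (by omega) hj.2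
    omega
  rw [Finset.sum_congr rfl htail] at hprev
  rw [Finset.sum_range_succ]
  have key : p*(p-1) + 2 * f p ≤ (p+1)*p := by
    rcases Nat.eq_zero_or_pos p with rfl | hp
    · simp at hsmall; omega
    · obtain ⟨s, rfl⟩ : ∃ s, p = s + 1 := ⟨p - 1, by omega⟩
      simp only [Nat.add_sub_cancel]
      nlinarith [hsmall]
  omega

def chi (T : Finset ℕ) (i : ℕ) : ℕ := if i ∈ T then 1 else 0

lemma chi_le_one (T : Finset ℕ) (i : ℕ) : chi T i ≤ 1 := by
  unfold chi; split <;> omega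

lemma chi_of_mem {T : Finset ℕ} {i : ℕ} (h : i ∈ T) : chi T i = 1 := by
  simp [chi, h]

lemma chi_of_not_mem {T : Finset ℕ} {i : ℕ} (h : i ∉ T) : chi T i = 0 := by
  simp [chi, h]

section CaseLemmas

variable {N : ℕ} {d : ℕ → ℕ} {m v a b g : ℕ} {T : Finset ℕ}

/-- Case (i): k < v. -/
lemma caseI
    (hsort : ∀ i j, i ≤ j → j < N+1 → d j ≤ d i)
    (hmd : d 0 = m) (hvd : d m = v) (hm1 : 1 ≤ m) (hmN : m ≤ N)
    (hv1 : 1 ≤ v) (ham : a < m) (hmb : m ≤ b) (hbN : b ≤ N)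
    (hg : g = b - (m - a))
    (hT : T = Ioc 0 a ∪ Ioc g b)
    (char_b : ∀ i, 0 < i → i ≤ N → (v ≤ d i ↔ i ≤ b))
    (k : ℕ) (hk1 : 1 ≤ k) (hkv : k < v) :
    ∑ i ∈ Ioc 0 k, (d i - chi T i) ≤ k*(k-1) + ∑ i ∈ Ioc k N, min (d i - chi T i) k := by
  have hvm : v ≤ m := by have h := hsort 0 m (Nat.zero_le m) (by omega); omega
  have hkb : k < b := by omega
  have hkN : k ≤ N := by omega
  -- RHS lower bound
  have hRHS : (b - k) * k ≤ ∑ i ∈ Ioc k N, min (d i - chi T i) k := by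
    have hsub : Ioc k b ⊆ Ioc k N := by
      intro i hi; simp only [Finset.mem_Ioc] at hi ⊢; omega
    have hpt : ∀ i ∈ Ioc k b, min (d i - chi T i) k = k := by
      intro i hi
      simp only [Finset.mem_Ioc] at hi
      have hdv : v ≤ d i := (char_b i (by omega) (by omega)).mpr hi.2
      have := chi_le_one T i
      omega
    calc (b - k) * k = ∑ _i ∈ Ioc k b, k := by rw [Finset.sum_const, Nat.card_Ioc, smul_eq_mul]
      _ = ∑ i ∈ Ioc k b, min (d i - chi T i) k := (Finset.sum_congr rfl hpt).symm
      _ ≤ ∑ i ∈ Ioc k N, min (d i - chi T i) k :=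
          Finset.sum_le_sum_of_subset hsub
  by_cases hbm : b = m
  · have hLHS : ∑ i ∈ Ioc 0 k, (d i - chi T i) ≤ k * (m - 1) := by
      have hpt : ∀ i ∈ Ioc 0 k, d i - chi T i ≤ m - 1 := by
        intro i hi
        simp only [Finset.mem_Ioc] at hi
        have hdi : d i ≤ m := by have h := hsort 0 i (Nat.zero_le i) (by omega); omega
        have hiT : i ∈ T := by
          rw [hT, Finset.mem_union, Finset.mem_Ioc, Finset.mem_Ioc]
          by_cases hia : i ≤ a
          · left; exact ⟨hi.1, hia⟩
          · right; constructor <;> omega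
        rw [chi_of_mem hiT]
        omega
      calc ∑ i ∈ Ioc 0 k, (d i - chi T i) ≤ ∑ _i ∈ Ioc 0 k, (m-1) := Finset.sum_le_sum hpt
        _ = k * (m-1) := by rw [Finset.sum_const, Nat.card_Ioc, smul_eq_mul, Nat.sub_zero]
    have harith : k * (m - 1) = k*(k-1) + (b-k)*k := by
      have h1 : m - 1 = (k-1) + (m - k) := by omega
      rw [h1, Nat.mul_add]
      have h2 : (b-k)*k = k*(m-k) := by rw [hbm, Nat.mul_comm]
      omega
    omega
  · have hLHS : ∑ i ∈ Ioc 0 k, (d i - chi T i) ≤ k * m := by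
      have hpt : ∀ i ∈ Ioc 0 k, d i - chi T i ≤ m := by
        intro i hi
        simp only [Finset.mem_Ioc] at hi
        have hdi : d i ≤ m := by have h := hsort 0 i (Nat.zero_le i) (by omega); omega
        omega
      calc ∑ i ∈ Ioc 0 k, (d i - chi T i) ≤ ∑ _i ∈ Ioc 0 k, m := Finset.sum_le_sum hpt
        _ = k * m := by rw [Finset.sum_const, Nat.card_Ioc, smul_eq_mul, Nat.sub_zero]
    have harith : k * m ≤ k*(k-1) + (b-k)*k := by
      have h1 : b - 1 = (k-1) + (b - k) := by omega
      have h2 : k * m ≤ k * (b-1) := Nat.mul_le_mul_left k (by omega)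
      rw [h1, Nat.mul_add] at h2
      have h3 : k * (b-k) = (b-k)*k := Nat.mul_comm _ _
      omega
    omega

end CaseLemmas

section CaseLemmas2
variable {N : ℕ} {d : ℕ → ℕ} {m v a b g : ℕ} {T : Finset ℕ}

/-- Case (ii): v ≤ k ≤ a. -/
lemma caseII
    (hEGk1 : ∑ i ∈ range (k+1), d i ≤ (k+1) * ((k+1)-1) + ∑ i ∈ Ico (k+1) (N+1), min (d i) (k+1))
    (hmd : d 0 = m) (hm1 : 1 ≤ m) (ham : a < m)
    (hTsub : T ⊆ Ioc 0 N) (hTcard : T.card = m)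
    (hTv : ∀ i ∈ T, v ≤ d i) (hv1 : 1 ≤ v)
    (hT : T = Ioc 0 a ∪ Ioc g b)
    (char_a : ∀ i, 0 < i → i ≤ N → (v < d i ↔ i ≤ a))
    (haN : a ≤ N)
    (hvk : v ≤ k) (hka : k ≤ a) :
    ∑ i ∈ Ioc 0 k, (d i - chi T i) ≤ k*(k-1) + ∑ i ∈ Ioc k N, min (d i - chi T i) k := by
  have hk1 : 1 ≤ k := le_trans hv1 hvk
  have hkN : k ≤ N := le_trans hka haN
  have hsubT : Ioc 0 k ⊆ T := by
    intro i hi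
    simp only [Finset.mem_Ioc] at hi
    rw [hT, Finset.mem_union, Finset.mem_Ioc]
    left; exact ⟨hi.1, by omega⟩
  have hchiIoc : ∑ i ∈ Ioc 0 k, chi T i = k := by
    calc ∑ i ∈ Ioc 0 k, chi T i = ∑ _i ∈ Ioc 0 k, 1 :=
        Finset.sum_congr rfl (fun i hi => chi_of_mem (hsubT hi))
      _ = k := by rw [Finset.sum_const, Nat.card_Ioc, smul_eq_mul, Nat.sub_zero, Nat.mul_one]
  have hLHS : ∑ i ∈ Ioc 0 k, (d i - chi T i) + k = ∑ i ∈ Ioc 0 k, d i := by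
    have h := sum_sub_cancel' (s := Ioc 0 k) (f := d) (g := chi T)
      (fun i hi => le_trans (chi_le_one T i) (le_trans hv1 (hTv i (hsubT hi))))
    rw [hchiIoc] at h
    exact h
  -- rewrite the EG inequality at k+1
  rw [Finset.sum_range_succ'] at hEGk1
  rw [shiftRange (fun i => d i) k] at hEGk1
  have hIco : Ico (k+1) (N+1) = Ioc k N := by ext i; simp
  rw [hIco] at hEGk1
  simp only [Nat.add_sub_cancel] at hEGk1
  -- pointwise bound on the tail
  have hpt : ∀ i ∈ Ioc k N, min (d i) (k+1) ≤ min (d i - chi T i) k + chi T i := by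
    intro i hi
    simp only [Finset.mem_Ioc] at hi
    by_cases hiT : i ∈ T
    · rw [chi_of_mem hiT]
      have := hTv i hiT
      omega
    · rw [chi_of_not_mem hiT]
      have hdik : d i ≤ k := by
        by_contra hcon
        have hvd : v < d i := by omega
        have hia : i ≤ a := (char_a i (by omega) hi.2).mp hvd
        exact hiT (by rw [hT, Finset.mem_union, Finset.mem_Ioc]; left; exact ⟨by omega, hia⟩)
      omega
  have hsum1 : ∑ i ∈ Ioc k N, min (d i) (k+1)
      ≤ ∑ i ∈ Ioc k N, min (d i - chi T i) k + ∑ i ∈ Ioc k N, chi T i := by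
    rw [← Finset.sum_add_distrib]
    exact Finset.sum_le_sum hpt
  have hchiN : ∑ i ∈ Ioc 0 N, chi T i = m := by
    unfold chi
    rw [Finset.sum_ite_mem, Finset.inter_eq_right.mpr hTsub, ← hTcard,
      Finset.card_eq_sum_ones]
  have hchisplit : ∑ i ∈ Ioc 0 k, chi T i + ∑ i ∈ Ioc k N, chi T i = ∑ i ∈ Ioc 0 N, chi T i :=
    Finset.sum_Ioc_consecutive _ (Nat.zero_le k) hkN
  have hmul : (k+1)*k = k*(k-1) + 2*k := by
    obtain ⟨s, rfl⟩ : ∃ s, k = s + 1 := ⟨k - 1, by omega⟩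
    simp only [Nat.add_sub_cancel]
    ring
  rw [hmd] at hEGk1
  omega

end CaseLemmas2

lemma keyIII (A Z Y X : ℕ) (h : 1 ≤ A ∨ 1 ≤ Z) :
    A*(A+Z+Y) + (1+Z)*(A+1+Z) ≤ (A+1+Z)*(A+Z) + (X*(A+1+Z) + (1+Z+Y)*(A+Z)) := by
  rcases h with h | h
  · obtain ⟨w, rfl⟩ : ∃ w, A = w + 1 := ⟨A-1, by omega⟩
    nlinarith
  · obtain ⟨w, rfl⟩ : ∃ w, Z = w + 1 := ⟨Z-1, by omega⟩
    nlinarith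

section CaseLemmas3
variable {N : ℕ} {d : ℕ → ℕ} {m v a b g : ℕ} {T : Finset ℕ}

/-- Case (iii): v ≤ k, a < k, and d k - χ k ≥ k. -/
lemma caseIII
    (hsort : ∀ i j, i ≤ j → j < N+1 → d j ≤ d i)
    (heven : Even (∑ i ∈ range (N+1), d i))
    (hmd : d 0 = m) (hvd : d m = v) (hm1 : 1 ≤ m) (hmN : m ≤ N)
    (hv1 : 1 ≤ v) (ham : a < m) (hmb : m ≤ b) (hbN : b ≤ N)
    (hg : g = b - (m - a))
    (hT : T = Ioc 0 a ∪ Ioc g b)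
    (char_a : ∀ i, 0 < i → i ≤ N → (v < d i ↔ i ≤ a))
    (char_b : ∀ i, 0 < i → i ≤ N → (v ≤ d i ↔ i ≤ b))
    (k : ℕ) (hvk : v ≤ k) (hak : a < k) (hkN : k ≤ N)
    (hbig : k ≤ d k - chi T k) :
    ∑ i ∈ Ioc 0 k, (d i - chi T i) ≤ k*(k-1) + ∑ i ∈ Ioc k N, min (d i - chi T i) k := by
  have hvm : v ≤ m := by have h := hsort 0 m (Nat.zero_le m) (by omega); omega
  have hk1 : 1 ≤ k := by omega
  have hag : a ≤ g := by omega
  have hdkv : d k ≤ v := by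
    have h := (char_a k (by omega) hkN)
    omega
  have hkT : k ∉ T := by
    intro h
    rw [chi_of_mem h] at hbig
    omega
  rw [chi_of_not_mem hkT] at hbig
  have hveqk : v = k := by omega
  have hdkk : d k = k := by omega
  have hkb : k ≤ b := (char_b k (by omega) hkN).mp (by omega)
  have hkg : k ≤ g := by
    by_contra hcon
    exact hkT (by rw [hT, Finset.mem_union, Finset.mem_Ioc, Finset.mem_Ioc]; right; omega)
  have hbg : b - g = m - a := by omega
  -- characterize chi and d on the various intervals
  have hnotT_gap : ∀ i, a < i → i ≤ g → i ∉ T := by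
    intro i h1 h2 hiT
    rw [hT, Finset.mem_union, Finset.mem_Ioc, Finset.mem_Ioc] at hiT
    omega
  have hd_eq_k : ∀ i, a < i → i ≤ b → d i = k := by
    intro i h1 h2
    have hle := (char_a i (by omega) (by omega))
    have hge := (char_b i (by omega) (by omega)).mpr h2
    omega
  -- LHS split
  have hLsplit : ∑ i ∈ Ioc 0 a, (d i - chi T i) + ∑ i ∈ Ioc a k, (d i - chi T i)
      = ∑ i ∈ Ioc 0 k, (d i - chi T i) :=
    Finset.sum_Ioc_consecutive _ (Nat.zero_le a) (le_of_lt hak)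
  have hS1 : ∑ i ∈ Ioc 0 a, (d i - chi T i) ≤ a * (m - 1) := by
    have hpt : ∀ i ∈ Ioc 0 a, d i - chi T i ≤ m - 1 := by
      intro i hi
      simp only [Finset.mem_Ioc] at hi
      have hiT : i ∈ T := by
        rw [hT, Finset.mem_union, Finset.mem_Ioc]; left; exact hi
      have hdi : d i ≤ m := by have h := hsort 0 i (Nat.zero_le i) (by omega); omega
      have hdv : v ≤ d i := le_of_lt ((char_a i (by omega) (by omega)).mpr hi.2)
      rw [chi_of_mem hiT]
      omega
    calc ∑ i ∈ Ioc 0 a, (d i - chi T i) ≤ ∑ _i ∈ Ioc 0 a, (m-1) := Finset.sum_le_sum hpt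
      _ = a * (m-1) := by rw [Finset.sum_const, Nat.card_Ioc, smul_eq_mul, Nat.sub_zero]
  have hS2 : ∑ i ∈ Ioc a k, (d i - chi T i) = (k - a) * k := by
    have hpt : ∀ i ∈ Ioc a k, d i - chi T i = k := by
      intro i hi
      simp only [Finset.mem_Ioc] at hi
      rw [chi_of_not_mem (hnotT_gap i hi.1 (by omega)), hd_eq_k i hi.1 (by omega)]
      omega
    rw [Finset.sum_congr rfl hpt, Finset.sum_const, Nat.card_Ioc, smul_eq_mul]
  -- RHS split
  have hRsplit1 : ∑ i ∈ Ioc k g, min (d i - chi T i) k + ∑ i ∈ Ioc g N, min (d i - chi T i) k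
      = ∑ i ∈ Ioc k N, min (d i - chi T i) k :=
    Finset.sum_Ioc_consecutive _ hkg (by omega)
  have hRsplit2 : ∑ i ∈ Ioc g b, min (d i - chi T i) k + ∑ i ∈ Ioc b N, min (d i - chi T i) k
      = ∑ i ∈ Ioc g N, min (d i - chi T i) k :=
    Finset.sum_Ioc_consecutive _ (by omega) hbN
  have hR1 : ∑ i ∈ Ioc k g, min (d i - chi T i) k = (g - k) * k := by
    have hpt : ∀ i ∈ Ioc k g, min (d i - chi T i) k = k := by
      intro i hi
      simp only [Finset.mem_Ioc] at hi
      rw [chi_of_not_mem (hnotT_gap i (by omega) hi.2), hd_eq_k i (by omega) (by omega)]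
      omega
    rw [Finset.sum_congr rfl hpt, Finset.sum_const, Nat.card_Ioc, smul_eq_mul]
  have hR2 : ∑ i ∈ Ioc g b, min (d i - chi T i) k = (b - g) * (k-1) := by
    have hpt : ∀ i ∈ Ioc g b, min (d i - chi T i) k = k - 1 := by
      intro i hi
      simp only [Finset.mem_Ioc] at hi
      have hiT : i ∈ T := by
        rw [hT, Finset.mem_union, Finset.mem_Ioc, Finset.mem_Ioc]; right; exact hi
      rw [chi_of_mem hiT, hd_eq_k i (by omega) hi.2]
      omega
    rw [Finset.sum_congr rfl hpt, Finset.sum_const, Nat.card_Ioc, smul_eq_mul]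
  have hR3 : ∑ i ∈ Ioc b N, min (d i - chi T i) k = ∑ i ∈ Ioc b N, d i := by
    apply Finset.sum_congr rfl
    intro i hi
    simp only [Finset.mem_Ioc] at hi
    have hiT : i ∉ T := by
      rw [hT, Finset.mem_union, Finset.mem_Ioc, Finset.mem_Ioc]
      omega
    have hdi : d i < v := by
      have h := char_b i (by omega) (by omega)
      omega
    rw [chi_of_not_mem hiT]
    omega
  set R := ∑ i ∈ Ioc b N, d i with hRdef
  by_cases hcrit : a = 0 ∧ k = 1
  · -- small case : needs parity
    obtain ⟨ha0, hk1'⟩ := hcrit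
    have hS1' : ∑ i ∈ Ioc 0 a, (d i - chi T i) = 0 := by
      rw [ha0]; simp
    have p1 : (k-a)*k = 1 := by rw [ha0, hk1']
    have p2 : (g-k)*k = g - 1 := by rw [hk1', Nat.mul_one]
    have p3 : (b-g)*(k-1) = 0 := by rw [hk1']; simp
    have p4 : k*(k-1) = 0 := by rw [hk1']
    by_cases hgge : 2 ≤ g
    · omega
    · -- g = 1, b = m + 1 : parity forces R ≥ 1
      have hg1 : g = 1 := by omega
      have hbm1 : b = m + 1 := by omega
      have hdone : ∀ i, 0 < i → i ≤ b → d i = 1 := by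
        intro i h1 h2
        have := hd_eq_k i (by omega) h2
        omega
      have htot : ∑ i ∈ range (N+1), d i = m + (b + R) := by
        rw [Finset.sum_range_succ', shiftRange (fun i => d i) N]
        have hsplitN : ∑ i ∈ Ioc 0 b, d i + ∑ i ∈ Ioc b N, d i = ∑ i ∈ Ioc 0 N, d i :=
          Finset.sum_Ioc_consecutive _ (Nat.zero_le b) hbN
        have hb1 : ∑ i ∈ Ioc 0 b, d i = b := by
          have hpt : ∀ i ∈ Ioc 0 b, d i = 1 := by
            intro i hi
            simp only [Finset.mem_Ioc] at hi
            exact hdone i hi.1 hi.2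
          rw [Finset.sum_congr rfl hpt, Finset.sum_const, Nat.card_Ioc, smul_eq_mul,
            Nat.sub_zero, Nat.mul_one]
        rw [hmd]
        omega
      rcases heven with ⟨c, hc⟩
      rw [htot] at hc
      omega
  · -- main arithmetic case
    have hcrit' : 1 ≤ a ∨ a + 2 ≤ k := by
      rcases Nat.eq_zero_or_pos a with rfl | hpos
      · right
        rcases Nat.lt_or_ge k 2 with h2 | h2
        · exact absurd ⟨rfl, by omega⟩ hcrit
        · omega
      · left; exact hpos
    have harith : a * (m-1) + (k-a)*k ≤ k*(k-1) + ((g-k)*k + (b-g)*(k-1)) := by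
      obtain ⟨z, hz⟩ : ∃ z, k = a + 1 + z := ⟨k - a - 1, by omega⟩
      obtain ⟨y, hy⟩ : ∃ y, m = k + y := ⟨m - k, by omega⟩
      obtain ⟨x, hx⟩ : ∃ x, g = k + x := ⟨g - k, by omega⟩
      have e1 : m - 1 = a + z + y := by omega
      have e2 : k - a = 1 + z := by omega
      have e3 : k - 1 = a + z := by omega
      have e4 : g - k = x := by omega
      have e5 : b - g = m - a := hbg
      have e6 : m - a = 1 + z + y := by omega
      rw [e1, e2, e3, e4, e5, e6, hz]
      exact keyIII a z y x (by omega)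
    omega

end CaseLemmas3

lemma reduction (N : ℕ) (d : ℕ → ℕ)
    (hsort : ∀ i j, i ≤ j → j < N+1 → d j ≤ d i)
    (heven : Even (∑ i ∈ range (N+1), d i))
    (hEG : ∀ k, 1 ≤ k → k ≤ N+1 →
      ∑ i ∈ range k, d i ≤ k * (k-1) + ∑ i ∈ Ico k (N+1), min (d i) k)
    (hm : 1 ≤ d 0) :
    ∃ T : Finset ℕ, T ⊆ Ioc 0 N ∧ T.card = d 0 ∧ (∀ i ∈ T, 1 ≤ d i) ∧
      (∀ i j, i ≤ j → j < N → (d (j+1) - chi T (j+1)) ≤ (d (i+1) - chi T (i+1))) ∧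
      Even (∑ j ∈ range N, (d (j+1) - chi T (j+1))) ∧
      (∀ k, 1 ≤ k → k ≤ N →
        ∑ j ∈ range k, (d (j+1) - chi T (j+1)) ≤
          k * (k-1) + ∑ j ∈ Ico k N, min (d (j+1) - chi T (j+1)) k) := by
  classical
  obtain ⟨m, hmd⟩ : ∃ m, d 0 = m := ⟨d 0, rfl⟩
  have hm1 : 1 ≤ m := by omega
  -- m ≤ N
  have hEG1 := hEG 1 (le_refl 1) (by omega)
  rw [Finset.sum_range_one] at hEG1
  have hmN : m ≤ N := by
    have h2 : ∑ i ∈ Ico 1 (N+1), min (d i) 1 ≤ ∑ _i ∈ Ico 1 (N+1), 1 :=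
      Finset.sum_le_sum (fun i _ => min_le_right _ _)
    rw [Finset.sum_const, Nat.card_Ico, smul_eq_mul] at h2
    omega
  obtain ⟨v, hvd⟩ : ∃ v, d m = v := ⟨d m, rfl⟩
  have hvm : v ≤ m := by have h := hsort 0 m (Nat.zero_le m) (by omega); omega
  -- v ≥ 1
  have hv1 : 1 ≤ v := by
    by_contra hv0
    have hIcosplit : ∑ i ∈ Ico 1 m, min (d i) 1 + ∑ i ∈ Ico m (N+1), min (d i) 1
        = ∑ i ∈ Ico 1 (N+1), min (d i) 1 :=
      Finset.sum_Ico_consecutive _ (by omega) (by omega)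
    have hz : ∑ i ∈ Ico m (N+1), min (d i) 1 = 0 := by
      apply Finset.sum_eq_zero
      intro i hi
      simp only [Finset.mem_Ico] at hi
      have h := hsort m i hi.1 hi.2
      omega
    have hone : ∑ i ∈ Ico 1 m, min (d i) 1 ≤ m - 1 := by
      calc ∑ i ∈ Ico 1 m, min (d i) 1 ≤ ∑ _i ∈ Ico 1 m, 1 :=
          Finset.sum_le_sum (fun i _ => min_le_right _ _)
        _ = m - 1 := by rw [Finset.sum_const, Nat.card_Ico, smul_eq_mul, Nat.mul_one]
    omega
  -- the sets A and B and their cardinalities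
  obtain ⟨a, hadef⟩ : ∃ a, ((Ioc 0 N).filter (fun i => v < d i)).card = a := ⟨_, rfl⟩
  obtain ⟨b, hbdef⟩ : ∃ b, ((Ioc 0 N).filter (fun i => v ≤ d i)).card = b := ⟨_, rfl⟩
  have hAeq : (Ioc 0 N).filter (fun i => v < d i) = Ioc 0 a := by
    rw [← hadef]
    apply downward_eq_Ioc (Finset.filter_subset _ _)
    intro i j hj0 hji hi
    simp only [Finset.mem_filter, Finset.mem_Ioc] at hi ⊢
    have h := hsort j i hji (by omega)
    exact ⟨⟨hj0, by omega⟩, by omega⟩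
  have hBeq : (Ioc 0 N).filter (fun i => v ≤ d i) = Ioc 0 b := by
    rw [← hbdef]
    apply downward_eq_Ioc (Finset.filter_subset _ _)
    intro i j hj0 hji hi
    simp only [Finset.mem_filter, Finset.mem_Ioc] at hi ⊢
    have h := hsort j i hji (by omega)
    exact ⟨⟨hj0, by omega⟩, by omega⟩
  have char_a : ∀ i, 0 < i → i ≤ N → (v < d i ↔ i ≤ a) := by
    intro i h0 hN
    constructor
    · intro h
      have : i ∈ (Ioc 0 N).filter (fun i => v < d i) := by
        simp only [Finset.mem_filter, Finset.mem_Ioc]; exact ⟨⟨h0, hN⟩, h⟩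
      rw [hAeq, Finset.mem_Ioc] at this; exact this.2
    · intro h
      have : i ∈ Ioc 0 a := Finset.mem_Ioc.mpr ⟨h0, h⟩
      rw [← hAeq, Finset.mem_filter] at this; exact this.2
  have char_b : ∀ i, 0 < i → i ≤ N → (v ≤ d i ↔ i ≤ b) := by
    intro i h0 hN
    constructor
    · intro h
      have : i ∈ (Ioc 0 N).filter (fun i => v ≤ d i) := by
        simp only [Finset.mem_filter, Finset.mem_Ioc]; exact ⟨⟨h0, hN⟩, h⟩
      rw [hBeq, Finset.mem_Ioc] at this; exact this.2
    · intro h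
      have : i ∈ Ioc 0 b := Finset.mem_Ioc.mpr ⟨h0, h⟩
      rw [← hBeq, Finset.mem_filter] at this; exact this.2
  have haN : a ≤ N := by
    have := Finset.card_filter_le (Ioc 0 N) (fun i => v < d i)
    rw [hadef, Nat.card_Ioc] at this; omega
  have hbN : b ≤ N := by
    have := Finset.card_filter_le (Ioc 0 N) (fun i => v ≤ d i)
    rw [hbdef, Nat.card_Ioc] at this; omega
  have ham : a < m := by
    have h := char_a m (by omega) hmN
    omega
  have hmb : m ≤ b := by
    have h := char_b m (by omega) hmN
    omega
  obtain ⟨g, hg⟩ : ∃ g, b - (m - a) = g := ⟨_, rfl⟩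
  have hag : a ≤ g := by omega
  have hgb : g ≤ b := by omega
  set T : Finset ℕ := Ioc 0 a ∪ Ioc g b with hT
  have hTsub : T ⊆ Ioc 0 N := by
    apply Finset.union_subset
    · exact Finset.Ioc_subset_Ioc (le_refl 0) haN
    · exact Finset.Ioc_subset_Ioc (Nat.zero_le g) hbN
  have hTcard : T.card = m := by
    rw [hT, Finset.card_union_of_disjoint, Nat.card_Ioc, Nat.card_Ioc]
    · omega
    · rw [Finset.disjoint_left]
      intro i hi hi2
      simp only [Finset.mem_Ioc] at hi hi2
      omega
  have hTv : ∀ i ∈ T, v ≤ d i := by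
    intro i hi
    rw [hT, Finset.mem_union, Finset.mem_Ioc, Finset.mem_Ioc] at hi
    rcases hi with ⟨h0, hia⟩ | ⟨hgi, hib⟩
    · exact le_of_lt ((char_a i h0 (by omega)).mpr hia)
    · exact (char_b i (by omega) (by omega)).mpr hib
  -- adjacent monotonicity of the reduced sequence
  have hadj : ∀ j, j + 1 < N → d (j+1+1) - chi T (j+1+1) ≤ d (j+1) - chi T (j+1) := by
    intro j hj
    show d (j+2) - chi T (j+2) ≤ d (j+1) - chi T (j+1)
    have hsorted2 := hsort (j+1) (j+2) (by omega) (by omega)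
    by_cases h2 : (j+2) ∈ T
    · rw [chi_of_mem h2]
      have := chi_le_one T (j+1)
      omega
    · rw [chi_of_not_mem h2]
      by_cases h1 : (j+1) ∈ T
      · rw [chi_of_mem h1]
        rw [hT, Finset.mem_union, Finset.mem_Ioc, Finset.mem_Ioc] at h1 h2
        rcases h1 with ⟨h0, hja⟩ | ⟨hgj, hjb⟩
        · -- j+1 ≤ a, j+2 ∉ T hence d (j+2) ≤ v < d (j+1)
          have hlt : v < d (j+1) := (char_a (j+1) (by omega) (by omega)).mpr hja
          have hle : ¬ v < d (j+2) := by
            intro hcon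
            have := (char_a (j+2) (by omega) (by omega)).mp hcon
            omega
          omega
        · -- g < j+1 ≤ b, j+2 ∉ T hence j+2 > b and d (j+2) < v ≤ d (j+1)
          have hge : v ≤ d (j+1) := (char_b (j+1) (by omega) (by omega)).mpr hjb
          have hlt : ¬ v ≤ d (j+2) := by
            intro hcon
            have := (char_b (j+2) (by omega) (by omega)).mp hcon
            omega
          omega
      · rw [chi_of_not_mem h1]
        omega
  have hesorted : ∀ i j, i ≤ j → j < N → d (j+1) - chi T (j+1) ≤ d (i+1) - chi T (i+1) :=
    anti_of_adj (f := fun j => d (j+1) - chi T (j+1)) hadj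
  have hchiIoc : ∑ i ∈ Ioc 0 N, chi T i = m := by
    unfold chi
    rw [Finset.sum_ite_mem, Finset.inter_eq_right.mpr hTsub, ← hTcard,
      Finset.card_eq_sum_ones]
  have hchiR : ∑ j ∈ range N, chi T (j+1) = m := by
    rw [shiftRange (chi T) N]; exact hchiIoc
  have hsub : ∑ j ∈ range N, (d (j+1) - chi T (j+1)) + ∑ j ∈ range N, chi T (j+1)
      = ∑ j ∈ range N, d (j+1) := by
    apply sum_sub_cancel'
    intro j _
    by_cases hjT : (j+1) ∈ T
    · rw [chi_of_mem hjT]; exact le_trans hv1 (hTv _ hjT)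
    · rw [chi_of_not_mem hjT]; omega
  have htot : ∑ i ∈ range (N+1), d i = ∑ j ∈ range N, d (j+1) + d 0 :=
    Finset.sum_range_succ' d N
  refine ⟨T, hTsub, by rw [hTcard, hmd], fun i hi => le_trans hv1 (hTv i hi), hesorted, ?_, ?_⟩
  · -- evenness
    rcases heven with ⟨c, hc⟩
    refine ⟨c - m, ?_⟩
    omega
  · -- the Erdős–Gallai inequalities for the reduced sequence
    intro k
    induction k using Nat.strong_induction_on with
    | _ k IH =>
      intro hk1 hkN
      by_cases hsmall : d (k-1+1) - chi T (k-1+1) ≤ k - 1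
      · rcases Nat.eq_or_lt_of_le hk1 with h1 | h2
        · -- k = 1
          rw [← h1]
          rw [← h1] at hsmall
          simp only [Finset.sum_range_one] at *
          have hsmall' : d 1 - chi T 1 ≤ 0 := hsmall
          have hz : d 1 - chi T 1 = 0 := by omega
          show d 1 - chi T 1 ≤ _
          rw [hz]
          exact Nat.zero_le _
        · exact lemU (fun j => d (j+1) - chi T (j+1)) N k hesorted (by omega) hkN hsmall
            (IH (k-1) (by omega) (by omega) (by omega))
      · have hconv1 : ∑ j ∈ range k, (d (j+1) - chi T (j+1)) = ∑ i ∈ Ioc 0 k, (d i - chi T i) :=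
          shiftRange (fun i => d i - chi T i) k
        have hconv2 : ∑ j ∈ Ico k N, min (d (j+1) - chi T (j+1)) k
            = ∑ i ∈ Ioc k N, min (d i - chi T i) k :=
          shiftIco (fun i => min (d i - chi T i) k) k N
        rw [hconv1, hconv2]
        have hke : k - 1 + 1 = k := by omega
        rw [hke] at hsmall
        have hbig : k ≤ d k - chi T k := by omega
        rcases lt_or_ge k v with hkv | hvk
        · exact caseI hsort hmd hvd hm1 hmN hv1 ham hmb hbN hg.symm hT char_b k hk1 hkv
        · rcases le_or_gt k a with hka | hak
          · exact caseII (hEG (k+1) (by omega) (by omega)) hmd hm1 ham hTsub hTcard hTv hv1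
              hT char_a haN hvk hka
          · exact caseIII hsort heven hmd hvd hm1 hmN hv1 ham hmb hbN hg.symm hT char_a char_b
              k hvk hak hkN hbig

def coneAdj (N : ℕ) (G' : SimpleGraph (Fin N)) (T : Finset ℕ) (x y : Fin (N+1)) : Prop :=
  (x = 0 ∧ y ≠ 0 ∧ y.val ∈ T) ∨ (y = 0 ∧ x ≠ 0 ∧ x.val ∈ T) ∨
  (∃ (hx : x ≠ 0) (hy : y ≠ 0), G'.Adj (x.pred hx) (y.pred hy))

lemma degree_eq_sum {n : ℕ} (G : SimpleGraph (Fin n)) [DecidableRel G.Adj] (v : Fin n) :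
    G.degree v = ∑ w : Fin n, if G.Adj v w then 1 else 0 := by
  rw [← SimpleGraph.card_neighborFinset_eq_degree, SimpleGraph.neighborFinset_eq_filter,
    Finset.card_filter]

lemma cone (N : ℕ) (G' : SimpleGraph (Fin N)) (inst : DecidableRel G'.Adj)
    (T : Finset ℕ) (hT : T ⊆ Ioc 0 N) :
    ∃ (G : SimpleGraph (Fin (N+1))) (_ : DecidableRel G.Adj),
      G.degree 0 = T.card ∧ ∀ j : Fin N, G.degree j.succ = G'.degree j + chi T (j.val + 1) := by
  classical
  have hsymm : Symmetric (coneAdj N G' T) := by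
    intro x y h
    unfold coneAdj at h ⊢
    rcases h with h | h | ⟨hx, hy, h⟩
    · exact Or.inr (Or.inl h)
    · exact Or.inl h
    · exact Or.inr (Or.inr ⟨hy, hx, G'.adj_symm h⟩)
  have hirr : Irreflexive (coneAdj N G' T) := by
    intro x h
    unfold coneAdj at h
    rcases h with ⟨h1, h2, _⟩ | ⟨h1, h2, _⟩ | ⟨hx, hy, h⟩
    · exact h2 h1
    · exact h2 h1
    · exact G'.irrefl h
  set G : SimpleGraph (Fin (N+1)) := ⟨coneAdj N G' T, ⟨hsymm⟩, ⟨hirr⟩⟩ with hG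
  refine ⟨G, Classical.decRel _, ?_, ?_⟩
  · -- degree of the apex
    rw [degree_eq_sum, Fin.sum_univ_succ]
    have h00 : (if (G).Adj 0 0 then 1 else 0) = 0 := if_neg (G.irrefl)
    rw [h00, zero_add]
    have hstep : ∀ j : Fin N,
        (if (G).Adj 0 j.succ then 1 else 0)
          = chi T (j.val + 1) := by
      intro j
      have hiff : coneAdj N G' T 0 j.succ ↔ (j.val + 1) ∈ T := by
        unfold coneAdj
        constructor
        · rintro (⟨_, _, h⟩ | ⟨h, _, _⟩ | ⟨hx, _, _⟩)
          · rwa [Fin.val_succ] at h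
          · exact absurd h (Fin.succ_ne_zero j)
          · exact absurd rfl hx
        · intro h
          exact Or.inl ⟨rfl, Fin.succ_ne_zero j, by rwa [Fin.val_succ]⟩
      rw [chi]
      exact if_congr hiff rfl rfl
    rw [Finset.sum_congr rfl (fun j _ => hstep j)]
    rw [Fin.sum_univ_eq_sum_range (fun i => chi T (i+1)) N, shiftRange (chi T) N]
    unfold chi
    rw [Finset.sum_ite_mem, Finset.inter_eq_right.mpr hT, Finset.card_eq_sum_ones]
  · -- degrees of the other vertices
    intro j
    rw [degree_eq_sum, Fin.sum_univ_succ]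
    have h0 : (if (G).Adj j.succ 0 then 1 else 0)
        = chi T (j.val + 1) := by
      have hiff : coneAdj N G' T j.succ 0 ↔ (j.val + 1) ∈ T := by
        unfold coneAdj
        constructor
        · rintro (⟨h, _, _⟩ | ⟨_, _, h⟩ | ⟨_, hy, _⟩)
          · exact absurd h (Fin.succ_ne_zero j)
          · rwa [Fin.val_succ] at h
          · exact absurd rfl hy
        · intro h
          exact Or.inr (Or.inl ⟨rfl, Fin.succ_ne_zero j, by rwa [Fin.val_succ]⟩)
      rw [chi]
      exact if_congr hiff rfl rfl
    have hstep : ∀ i : Fin N,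
        (if (G).Adj j.succ i.succ then 1 else 0)
          = (if G'.Adj j i then 1 else 0) := by
      intro i
      have hiff : coneAdj N G' T j.succ i.succ ↔ G'.Adj j i := by
        unfold coneAdj
        constructor
        · rintro (⟨h, _, _⟩ | ⟨h, _, _⟩ | ⟨hx, hy, h⟩)
          · exact absurd h (Fin.succ_ne_zero j)
          · exact absurd h (Fin.succ_ne_zero i)
          · rwa [Fin.pred_succ, Fin.pred_succ] at h
        · intro h
          exact Or.inr (Or.inr ⟨Fin.succ_ne_zero j, Fin.succ_ne_zero i, by
            rwa [Fin.pred_succ, Fin.pred_succ]⟩)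
      exact if_congr hiff rfl rfl
    rw [h0, Finset.sum_congr rfl (fun i _ => hstep i), ← degree_eq_sum]
    omega

lemma suff : ∀ (n : ℕ) (d : ℕ → ℕ),
    (∀ i j, i ≤ j → j < n → d j ≤ d i) →
    Even (∑ i ∈ range n, d i) →
    (∀ k, 1 ≤ k → k ≤ n → ∑ i ∈ range k, d i ≤ k * (k-1) + ∑ i ∈ Ico k n, min (d i) k) →
    ∃ (G : SimpleGraph (Fin n)) (_ : DecidableRel G.Adj), ∀ i : Fin n, G.degree i = d i := by
  intro n
  induction n with
  | zero =>
    intro d _ _ _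
    exact ⟨⊥, Classical.decRel _, fun i => i.elim0⟩
  | succ N IH =>
    intro d hsort heven hEG
    by_cases hd0 : d 0 = 0
    · have hz : ∀ i : Fin (N+1), d i.val = 0 := fun i => by
        have := hsort 0 i.val (Nat.zero_le _) i.isLt; omega
      refine ⟨⊥, Classical.decRel _, fun i => ?_⟩
      rw [degree_eq_sum]
      simp [SimpleGraph.bot_adj, hz i]
    · obtain ⟨T, hTsub, hTcard, hT1, hTsort, hTeven, hTEG⟩ :=
        reduction N d hsort heven hEG (by omega)
      obtain ⟨G', inst', hdeg'⟩ := IH (fun j => d (j+1) - chi T (j+1)) hTsort hTeven hTEG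
      obtain ⟨G, instG, hdeg0, hdegs⟩ := cone N G' inst' T hTsub
      refine ⟨G, instG, fun i => ?_⟩
      rcases Fin.eq_zero_or_eq_succ i with rfl | ⟨j, rfl⟩
      · rw [hdeg0, hTcard]
        rfl
      · rw [hdegs j, hdeg' j]
        show d (j.val + 1) - chi T (j.val + 1) + chi T (j.val + 1) = d ((j.succ : Fin (N+1)).val)
        rw [Fin.val_succ]
        by_cases hmem : (j.val + 1) ∈ T
        · rw [chi_of_mem hmem]
          exact Nat.sub_add_cancel (hT1 _ hmem)
        · rw [chi_of_not_mem hmem]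
          omega

/-- **Theorem (Erdős–Gallai).** A non-increasing sequence of non-negative integers
`d₁ ≥ d₂ ≥ … ≥ dₙ` is the degree sequence of some finite simple graph on `n` vertices
if and only if (1) `d₁ + … + dₙ` is even, and (2) for every `1 ≤ k ≤ n`,
`∑_{i=1}^k dᵢ ≤ k(k-1) + ∑_{i=k+1}^n min(dᵢ, k)`. -/
theorem erdos_gallai (n : ℕ) (d : ℕ → ℕ)
    (hsort : ∀ i j, i ≤ j → j < n → d j ≤ d i) :
    (∃ (G : SimpleGraph (Fin n)) (_ : DecidableRel G.Adj),
        ∀ i : Fin n, G.degree i = d i) ↔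
      (Even (∑ i ∈ range n, d i) ∧
        ∀ k, 1 ≤ k → k ≤ n →
          ∑ i ∈ range k, d i ≤ k * (k - 1) + ∑ i ∈ Finset.Ico k n, min (d i) k) := by
  constructor
  · rintro ⟨G, inst, hdeg⟩
    exact ⟨nec_even G d hdeg, fun k hk1 hkn => nec_ineq G d hdeg k hk1 hkn⟩
  · rintro ⟨heven, hEG⟩
    exact suff n d hsort heven hEG
end

section
/- Let L be a positive measurable slowly varying function that is locally bounded on [x₀, ∞) for some x₀ ≥ 0, and let α < −1. Then ∫_x^∞ t^α L(t) dt is finite for all sufficiently large x and ∫_x^∞ t^α L(t) dt ~ −(α + 1)^{−1} x^{α+1} L(x) as x → ∞, i.e., the ratio of the two sides tends to 1. -/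
open MeasureTheory Filter

theorem karamata_aux_uct (h : ℝ → ℝ) (hm : Measurable h)
    (hpt : ∀ u : ℝ, Tendsto (fun y => h (y + u) - h y) atTop (nhds 0))
    (ε : ℝ) (hε : 0 < ε) :
    ∃ Y : ℝ, ∀ y, Y ≤ y → ∀ u ∈ Set.Icc (0:ℝ) 1, |h (y + u) - h y| ≤ ε := by
  by_contra hcon
  push_neg at hcon
  choose y hy u hu hval using fun n : ℕ => hcon n
  have hytop : Tendsto y atTop atTop :=
    tendsto_atTop_mono hy tendsto_natCast_atTop_atTop
  have hyutop : Tendsto (fun n => y n + u n) atTop atTop :=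
    tendsto_atTop_mono (fun n => le_add_of_nonneg_right (hu n).1) hytop
  have measS : ∀ (z : ℕ → ℝ) (N : ℕ), MeasurableSet
      {v : ℝ | v ∈ Set.Icc (0:ℝ) 2 ∧ ∀ n, N ≤ n → |h (z n + v) - h (z n)| ≤ ε/4} := by
    intro z N
    have heq : {v : ℝ | v ∈ Set.Icc (0:ℝ) 2 ∧ ∀ n, N ≤ n → |h (z n + v) - h (z n)| ≤ ε/4}
        = Set.Icc (0:ℝ) 2 ∩ ⋂ n, ⋂ _ : N ≤ n, {v : ℝ | |h (z n + v) - h (z n)| ≤ ε/4} := by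
      ext v
      simp [Set.mem_setOf_eq, Set.mem_inter_iff, Set.mem_iInter]
    rw [heq]
    refine measurableSet_Icc.inter (MeasurableSet.iInter fun n => MeasurableSet.iInter fun _ => ?_)
    exact measurableSet_le
      ((hm.comp (measurable_const.add measurable_id)).sub measurable_const).abs measurable_const
  have key : ∀ z : ℕ → ℝ, Tendsto z atTop atTop → ∃ N : ℕ, ENNReal.ofReal (7/4) <
      volume {v : ℝ | v ∈ Set.Icc (0:ℝ) 2 ∧ ∀ n, N ≤ n → |h (z n + v) - h (z n)| ≤ ε/4} := by
    intro z hz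
    set S : ℕ → Set ℝ := fun N =>
      {v : ℝ | v ∈ Set.Icc (0:ℝ) 2 ∧ ∀ n, N ≤ n → |h (z n + v) - h (z n)| ≤ ε/4} with hS
    have hmono : Monotone S := fun N M hNM v hv => ⟨hv.1, fun n hn => hv.2 n (hNM.trans hn)⟩
    have hunion : ⋃ N, S N = Set.Icc (0:ℝ) 2 := by
      ext v
      constructor
      · rintro ⟨_, ⟨N, rfl⟩, hv⟩
        exact hv.1
      · intro hv
        have hvt : Tendsto (fun n => h (z n + v) - h (z n)) atTop (nhds 0) := by
          have := (hpt v).comp hz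
          exact this
        have : ∀ᶠ n in atTop, |h (z n + v) - h (z n)| ≤ ε/4 := by
          have h4 : 0 < ε/4 := by linarith
          filter_upwards [(NormedAddCommGroup.tendsto_nhds_zero.mp hvt) (ε/4) h4] with n hn
          simpa [Real.norm_eq_abs] using hn.le
        obtain ⟨N, hN⟩ := eventually_atTop.mp this
        exact Set.mem_iUnion.mpr ⟨N, hv, fun n hn => hN n hn⟩
    have hvol : Tendsto (fun N => volume (S N)) atTop (nhds (volume (Set.Icc (0:ℝ) 2))) := by
      rw [← hunion]
      exact tendsto_measure_iUnion_atTop hmono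
    have h2 : volume (Set.Icc (0:ℝ) 2) = ENNReal.ofReal 2 := by
      rw [Real.volume_Icc]
      norm_num
    rw [h2] at hvol
    have hlt : ENNReal.ofReal (7/4) < ENNReal.ofReal 2 :=
      (ENNReal.ofReal_lt_ofReal_iff (by norm_num)).mpr (by norm_num)
    exact (hvol.eventually (eventually_gt_nhds hlt)).exists
  obtain ⟨N₁, hN₁⟩ := key y hytop
  obtain ⟨N₂, hN₂⟩ := key (fun n => y n + u n) hyutop
  set n := max N₁ N₂ with hn
  set A : Set ℝ :=
    {v : ℝ | v ∈ Set.Icc (0:ℝ) 2 ∧ ∀ m, N₁ ≤ m → |h (y m + v) - h (y m)| ≤ ε/4} with hA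
  set B : Set ℝ :=
    {v : ℝ | v ∈ Set.Icc (0:ℝ) 2 ∧ ∀ m, N₂ ≤ m → |h (y m + u m + v) - h (y m + u m)| ≤ ε/4} with hB
  set C : Set ℝ := (fun v => v + (-u n)) ⁻¹' B with hC
  have hmeasB : MeasurableSet B := measS _ _
  have hmeasC : MeasurableSet C := (measurable_add_const (-u n)) hmeasB
  have hvolC : volume C = volume B := measure_preimage_add_right volume (-u n) B
  have hsub : A ∪ C ⊆ Set.Icc (0:ℝ) 3 := by
    rintro v (hv | hv)
    · exact ⟨hv.1.1, hv.1.2.trans (by norm_num)⟩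
    · have h1 : v + (-u n) ∈ Set.Icc (0:ℝ) 2 := hv.1
      have h2 := (hu n).1
      have h3 := (hu n).2
      constructor
      · linarith [h1.1]
      · linarith [h1.2]
    
  have hvolU : volume (A ∪ C) ≤ ENNReal.ofReal 3 := by
    calc volume (A ∪ C) ≤ volume (Set.Icc (0:ℝ) 3) := measure_mono hsub
    _ = ENNReal.ofReal 3 := by rw [Real.volume_Icc]; norm_num
  have hinter : (A ∩ C).Nonempty := by
    rw [Set.nonempty_iff_ne_empty]
    intro hempty
    have := measure_union_add_inter A hmeasC (μ := volume)
    rw [hempty, measure_empty, add_zero, hvolC] at this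
    have hgt : ENNReal.ofReal (7/2) < volume A + volume B := by
      calc ENNReal.ofReal (7/2) = ENNReal.ofReal (7/4) + ENNReal.ofReal (7/4) := by
            rw [← ENNReal.ofReal_add (by norm_num) (by norm_num)]; norm_num
      _ < volume A + volume B := ENNReal.add_lt_add hN₁ hN₂
    rw [← this] at hgt
    have hle : ENNReal.ofReal (7/2) ≤ ENNReal.ofReal 3 := hgt.le.trans hvolU
    have := (ENNReal.ofReal_le_ofReal_iff (by norm_num)).mp hle
    linarith
  obtain ⟨v, hvA, hvC⟩ := hinter
  have h1 : |h (y n + v) - h (y n)| ≤ ε/4 := hvA.2 n (le_max_left _ _)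
  have h2 : |h (y n + u n + (v + -u n)) - h (y n + u n)| ≤ ε/4 := hvC.2 n (le_max_right _ _)
  have h3 : y n + u n + (v + -u n) = y n + v := by ring
  rw [h3] at h2
  have h4 : |h (y n + u n) - h (y n)| ≤ ε/2 := by
    calc |h (y n + u n) - h (y n)|
        ≤ |h (y n + u n) - h (y n + v)| + |h (y n + v) - h (y n)| := abs_sub_le _ _ _
      _ ≤ ε/4 + ε/4 := add_le_add (by rw [abs_sub_comm]; exact h2) h1
      _ = ε/2 := by ring
  linarith [hval n, h4]


theorem karamata_aux_potter (h : ℝ → ℝ) (hm : Measurable h)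
    (hpt : ∀ u : ℝ, Tendsto (fun y => h (y + u) - h y) atTop (nhds 0))
    (δ : ℝ) (hδ : 0 < δ) :
    ∃ Y : ℝ, ∀ y, Y ≤ y → ∀ u, 0 ≤ u → |h (y + u) - h y| ≤ δ * (u + 1) := by
  obtain ⟨Y, hY⟩ := karamata_aux_uct h hm hpt δ hδ
  have claim : ∀ n : ℕ, ∀ y, Y ≤ y → ∀ u, 0 ≤ u → u ≤ (n : ℝ) + 1 →
      |h (y + u) - h y| ≤ δ * ((n : ℝ) + 1) := by
    intro n
    induction n with
    | zero =>
      intro y hy u hu0 hu1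
      have := hY y hy u ⟨hu0, by simpa using hu1⟩
      simpa using this.trans (by norm_num)
    | succ n ih =>
      intro y hy u hu0 hu2
      by_cases hu1 : u ≤ (n : ℝ) + 1
      · have := ih y hy u hu0 hu1
        push_cast
        push_cast at this
        nlinarith
      · push_neg at hu1
        have ha := hY (y + (u - 1)) (by linarith [Nat.cast_nonneg (α := ℝ) n]) 1
          ⟨zero_le_one, le_refl 1⟩
        have hb := ih y hy (u - 1) (by linarith [Nat.cast_nonneg (α := ℝ) n])
          (by push_cast at hu2 ⊢; linarith)
        have h3 : y + (u - 1) + 1 = y + u := by ring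
        rw [h3] at ha
        have hcomb : |h (y + u) - h y| ≤ δ + δ * ((n : ℝ) + 1) := by
          calc |h (y + u) - h y|
              ≤ |h (y + u) - h (y + (u - 1))| + |h (y + (u - 1)) - h y| := abs_sub_le _ _ _
            _ ≤ δ + δ * ((n : ℝ) + 1) := add_le_add ha hb
        push_cast
        linarith
  refine ⟨Y, fun y hy u hu => ?_⟩
  have h1 : (⌊u⌋₊ : ℝ) ≤ u := Nat.floor_le hu
  have h2 : u ≤ (⌊u⌋₊ : ℝ) + 1 := (Nat.lt_floor_add_one u).le
  have h3 := claim ⌊u⌋₊ y hy u hu h2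
  nlinarith


/-- **Karamata's theorem, part 2.** Let `L` be a positive measurable slowly varying
function, locally bounded on `[x₀, ∞)` for some `x₀ ≥ 0`, and let `α < -1`. Then
`∫_x^∞ t^α L(t) dt` is finite for all sufficiently large `x` and
`∫_x^∞ t^α L(t) dt ~ -(α+1)⁻¹ x^{α+1} L(x)` as `x → ∞`. -/
theorem karamata_tail
    (L : ℝ → ℝ) (hLmeas : Measurable L) (hLpos : ∀ x : ℝ, 0 < x → 0 < L x)
    (hsv : ∀ t : ℝ, 0 < t → Tendsto (fun x => L (t * x) / L x) atTop (nhds 1))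
    (x₀ : ℝ) (hx₀ : 0 ≤ x₀)
    (hLbd : ∀ a b : ℝ, x₀ ≤ a → ∃ M : ℝ, ∀ x ∈ Set.Icc a b, 0 < x → L x ≤ M)
    (α : ℝ) (hα : α < -1) :
    (∀ᶠ x : ℝ in atTop, IntegrableOn (fun t => t ^ α * L t) (Set.Ioi x)) ∧
    Tendsto (fun x : ℝ =>
        (∫ t in Set.Ioi x, t ^ α * L t) / (-(α + 1)⁻¹ * x ^ (α + 1) * L x))
      atTop (nhds 1) := by
  classical
  set δ : ℝ := (-1 - α) / 2 with hδdef
  have hδ : 0 < δ := by rw [hδdef]; linarith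
  have hαδ : α + δ < -1 := by rw [hδdef]; linarith
  set h : ℝ → ℝ := fun y => Real.log (L (Real.exp y)) with hhdef
  have hm : Measurable h := Real.measurable_log.comp (hLmeas.comp Real.measurable_exp)
  have hpt : ∀ u : ℝ, Tendsto (fun y => h (y + u) - h y) atTop (nhds 0) := by
    intro u
    have h1 := (hsv (Real.exp u) (Real.exp_pos u)).comp Real.tendsto_exp_atTop
    have h2 := h1.log one_ne_zero
    rw [Real.log_one] at h2
    refine h2.congr fun y => ?_
    have e1 : Real.exp u * Real.exp y = Real.exp (y + u) := by
      rw [← Real.exp_add]; ring_nf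
    simp only [Function.comp]
    rw [Real.log_div (hLpos _ (mul_pos (Real.exp_pos u) (Real.exp_pos y))).ne'
      (hLpos _ (Real.exp_pos y)).ne', e1]
  obtain ⟨Y, hY⟩ := karamata_aux_potter h hm hpt δ hδ
  set X : ℝ := max (Real.exp Y) 1 with hXdef
  have hX1 : (1:ℝ) ≤ X := le_max_right _ _
  have hLbound : ∀ x, X ≤ x → ∀ t, 1 ≤ t → L (x * t) ≤ Real.exp δ * t ^ δ * L x := by
    intro x hx t ht
    have hxpos : 0 < x := lt_of_lt_of_le one_pos (hX1.trans hx)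
    have htpos : 0 < t := lt_of_lt_of_le one_pos ht
    have hy : Y ≤ Real.log x :=
      (Real.le_log_iff_exp_le hxpos).mpr ((le_max_left _ _).trans hx)
    have hu0 : 0 ≤ Real.log t := Real.log_nonneg ht
    have hb := hY (Real.log x) hy (Real.log t) hu0
    have hb2 : h (Real.log x + Real.log t) - h (Real.log x) ≤ δ * (Real.log t + 1) :=
      (le_abs_self _).trans hb
    have hid1 : h (Real.log x + Real.log t) = Real.log (L (x * t)) := by
      rw [hhdef]
      simp only []
      rw [Real.exp_add, Real.exp_log hxpos, Real.exp_log htpos]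
    have hid2 : h (Real.log x) = Real.log (L x) := by
      rw [hhdef]
      simp only []
      rw [Real.exp_log hxpos]
    rw [hid1, hid2] at hb2
    have hLxt : 0 < L (x * t) := hLpos _ (mul_pos hxpos htpos)
    have hLx : 0 < L x := hLpos _ hxpos
    have hkey := Real.exp_le_exp.mpr hb2
    rw [Real.exp_sub, Real.exp_log hLxt, Real.exp_log hLx] at hkey
    have hrpow : t ^ δ = Real.exp (δ * Real.log t) := by
      rw [Real.rpow_def_of_pos htpos, mul_comm]
    have hexp : Real.exp (δ * (Real.log t + 1)) = Real.exp δ * t ^ δ := by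
      rw [hrpow, ← Real.exp_add]; ring_nf
    rw [div_le_iff₀ hLx] at hkey
    calc L (x * t) ≤ Real.exp (δ * (Real.log t + 1)) * L x := hkey
      _ = Real.exp δ * t ^ δ * L x := by rw [hexp]
  have hInt : ∀ x, X ≤ x → IntegrableOn (fun t => t ^ α * L t) (Set.Ioi x) := by
    intro x hx
    have hxpos : 0 < x := lt_of_lt_of_le one_pos (hX1.trans hx)
    have hmeasf : AEStronglyMeasurable (fun t => t ^ α * L t)
        (volume.restrict (Set.Ioi x)) := by
      refine AEStronglyMeasurable.mul ?_ (hLmeas.aestronglyMeasurable.restrict)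
      refine ContinuousOn.aestronglyMeasurable (fun t ht => ?_) measurableSet_Ioi
      exact (Real.continuousAt_rpow_const t α
        (Or.inl (ne_of_gt (hxpos.trans ht)))).continuousWithinAt
    refine Integrable.mono'
      (((integrableOn_Ioi_rpow_of_lt hαδ hxpos).const_mul
        (Real.exp δ * x ^ (-δ) * L x))) hmeasf ?_
    rw [ae_restrict_iff' measurableSet_Ioi]
    refine Eventually.of_forall fun t ht => ?_
    have htx : x < t := ht
    have htpos : 0 < t := hxpos.trans htx
    have hdiv1 : 1 ≤ t / x := (one_le_div hxpos).mpr htx.le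
    have hLt : L t ≤ Real.exp δ * (t / x) ^ δ * L x := by
      have := hLbound x hx (t / x) hdiv1
      rwa [mul_div_cancel₀ _ hxpos.ne'] at this
    have hLtpos : 0 < L t := hLpos t htpos
    have hrw : (t / x) ^ δ = t ^ δ * x ^ (-δ) := by
      rw [Real.div_rpow htpos.le hxpos.le, Real.rpow_neg hxpos.le, div_eq_mul_inv]
    have hnorm : ‖t ^ α * L t‖ = t ^ α * L t := by
      rw [Real.norm_eq_abs, abs_of_nonneg (mul_nonneg (Real.rpow_nonneg htpos.le α) hLtpos.le)]
    rw [hnorm]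
    have hrpowstep : t ^ (α + δ) = t ^ α * t ^ δ := Real.rpow_add htpos α δ
    have h1 : t ^ α * L t ≤ t ^ α * (Real.exp δ * (t ^ δ * x ^ (-δ)) * L x) := by
      refine mul_le_mul_of_nonneg_left ?_ (Real.rpow_nonneg htpos.le α)
      rw [← hrw]; exact hLt
    calc t ^ α * L t ≤ t ^ α * (Real.exp δ * (t ^ δ * x ^ (-δ)) * L x) := h1
      _ = Real.exp δ * x ^ (-δ) * L x * t ^ (α + δ) := by rw [hrpowstep]; ring
  set c : ℝ := -(α + 1)⁻¹ with hcdef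
  have hc : 0 < c := by
    rw [hcdef, neg_pos]
    exact inv_lt_zero.mpr (by linarith)
  have hintval : (∫ s in Set.Ioi (1:ℝ), s ^ α) = c := by
    rw [integral_Ioi_rpow_of_lt hα one_pos, Real.one_rpow, hcdef]
    field_simp
  set F : ℝ → ℝ := fun x => ∫ s in Set.Ioi (1:ℝ), s ^ α * (L (x * s) / L x) with hFdef
  have hF : Tendsto F atTop (nhds c) := by
    rw [← hintval]
    refine tendsto_integral_filter_of_dominated_convergence
      (fun s => Real.exp δ * s ^ (α + δ)) ?_ ?_ ?_ ?_
    · refine Eventually.of_forall fun x => ?_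
      refine AEStronglyMeasurable.mul ?_
        (((hLmeas.comp (measurable_id.const_mul x)).div_const (L x)).aestronglyMeasurable.restrict)
      refine ContinuousOn.aestronglyMeasurable (fun s hs => ?_) measurableSet_Ioi
      exact (Real.continuousAt_rpow_const s α
        (Or.inl (ne_of_gt (lt_trans one_pos hs)))).continuousWithinAt
    · filter_upwards [eventually_ge_atTop X] with x hx
      rw [ae_restrict_iff' measurableSet_Ioi]
      refine Eventually.of_forall fun s hs => ?_
      have hs1 : (1:ℝ) < s := hs
      have hspos : 0 < s := one_pos.trans hs1
      have hxpos : 0 < x := lt_of_lt_of_le one_pos (hX1.trans hx)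
      have hLx : 0 < L x := hLpos x hxpos
      have hLxs : 0 < L (x * s) := hLpos _ (mul_pos hxpos hspos)
      have hdivle : L (x * s) / L x ≤ Real.exp δ * s ^ δ := by
        rw [div_le_iff₀ hLx]
        exact hLbound x hx s hs1.le
      have hnorm : ‖s ^ α * (L (x * s) / L x)‖ = s ^ α * (L (x * s) / L x) := by
        rw [Real.norm_eq_abs, abs_of_nonneg (mul_nonneg (Real.rpow_nonneg hspos.le α)
          (div_nonneg hLxs.le hLx.le))]
      rw [hnorm]
      calc s ^ α * (L (x * s) / L x) ≤ s ^ α * (Real.exp δ * s ^ δ) :=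
          mul_le_mul_of_nonneg_left hdivle (Real.rpow_nonneg hspos.le α)
        _ = Real.exp δ * s ^ (α + δ) := by rw [Real.rpow_add hspos]; ring
    · exact (integrableOn_Ioi_rpow_of_lt hαδ one_pos).const_mul _
    · rw [ae_restrict_iff' measurableSet_Ioi]
      refine Eventually.of_forall fun s hs => ?_
      have hspos : (0:ℝ) < s := lt_trans one_pos hs
      have h1 : Tendsto (fun x => L (x * s) / L x) atTop (nhds 1) := by
        refine (hsv s hspos).congr fun x => ?_
        rw [mul_comm]
      have h2 := h1.const_mul (s ^ α)
      rwa [mul_one] at h2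
  have heq : ∀ᶠ x in atTop, (∫ t in Set.Ioi x, t ^ α * L t) / (c * x ^ (α + 1) * L x)
      = F x / c := by
    filter_upwards [eventually_ge_atTop X] with x hx
    have hxpos : 0 < x := lt_of_lt_of_le one_pos (hX1.trans hx)
    have hLx : 0 < L x := hLpos x hxpos
    have hsubst : (∫ s in Set.Ioi (1:ℝ), (x * s) ^ α * L (x * s))
        = x⁻¹ * ∫ t in Set.Ioi x, t ^ α * L t := by
      simpa using integral_comp_mul_left_Ioi (fun t => t ^ α * L t) 1 hxpos
    have e1 : (∫ s in Set.Ioi (1:ℝ), (x * s) ^ α * L (x * s))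
        = (x ^ α * L x) * F x := by
      rw [hFdef]
      simp only []
      rw [← integral_const_mul]
      refine setIntegral_congr_fun measurableSet_Ioi fun s hs => ?_
      have hspos : (0:ℝ) < s := lt_trans one_pos hs
      rw [Real.mul_rpow hxpos.le hspos.le]
      field_simp
    rw [e1] at hsubst
    have e2 : (∫ t in Set.Ioi x, t ^ α * L t) = x ^ (α + 1) * L x * F x := by
      have h3 := congrArg (fun r => x * r) hsubst
      rw [← mul_assoc x x⁻¹ _, mul_inv_cancel₀ hxpos.ne', one_mul] at h3
      rw [← h3, Real.rpow_add_one hxpos.ne']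
      ring
    rw [e2]
    have hne : x ^ (α + 1) * L x ≠ 0 :=
      (mul_pos (Real.rpow_pos_of_pos hxpos _) hLx).ne'
    rw [show x ^ (α + 1) * L x * F x = (x ^ (α + 1) * L x) * F x from by ring,
      show c * x ^ (α + 1) * L x = (x ^ (α + 1) * L x) * c from by ring]
    exact mul_div_mul_left _ _ hne
  constructor
  · filter_upwards [eventually_ge_atTop X] with x hx
    exact hInt x hx
  · have hratio : Tendsto (fun x => F x / c) atTop (nhds 1) := by
      have h4 := hF.div_const c
      rwa [div_self hc.ne'] at h4
    refine hratio.congr' ?_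
    filter_upwards [heq] with x hx
    exact hx.symm
end

section
/- Let L be a positive measurable slowly varying function. Then for every c > 0, L(x) = o(x^c) as x → ∞, i.e., L(x)/x^c → 0 as x → ∞. -/
open Filter MeasureTheory Set

/-- Given a measurable `h : ℝ → ℝ` with `h (u+t) - h u → 0` (as `u → ∞`) for each fixed `t`,
the increments are eventually uniformly small over steps `t ∈ [0,1]`. -/
lemma sv_step_bound (h : ℝ → ℝ) (hmeas : Measurable h)
    (hshift : ∀ t : ℝ, Tendsto (fun u => h (u + t) - h u) atTop (nhds 0))
    (ε : ℝ) (hε : 0 < ε) :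
    ∃ A : ℝ, ∀ u ≥ A, ∀ t ∈ Icc (0:ℝ) 1, |h (u + t) - h u| ≤ ε := by
  classical
  set B : ℝ → Set ℝ := fun u => {s ∈ Icc (0:ℝ) 2 | ε/2 < |h (u + s) - h u|} with hB
  have hBsub : ∀ u, B u ⊆ Icc (0:ℝ) 2 := fun u s hs => hs.1
  have hBmeas : ∀ u, MeasurableSet (B u) := by
    intro u
    have h1 : Measurable fun s : ℝ => |h (u + s) - h u| :=
      ((hmeas.comp (measurable_const.add measurable_id)).sub measurable_const).abs
    exact measurableSet_Icc.inter (measurableSet_lt measurable_const h1)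
  -- the measure of the bad set tends to 0
  have htend : Tendsto (fun u => (volume (B u)).toReal) atTop (nhds 0) := by
    have key : Tendsto (fun u => ∫ s, (B u).indicator (fun _ => (1:ℝ)) s) atTop
        (nhds (∫ _ : ℝ, (0:ℝ))) := by
      apply tendsto_integral_filter_of_dominated_convergence
        ((Icc (0:ℝ) 2).indicator fun _ => (1:ℝ))
      · exact Eventually.of_forall fun u =>
          (measurable_const.indicator (hBmeas u)).aestronglyMeasurable
      · refine Eventually.of_forall fun u => Eventually.of_forall fun s => ?_
        by_cases hs : s ∈ B u
        · rw [Set.indicator_of_mem hs, Set.indicator_of_mem (hBsub u hs)]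
          simp
        · rw [Set.indicator_of_notMem hs]
          simp only [norm_zero]
          exact Set.indicator_nonneg (fun _ _ => zero_le_one) s
      · exact (integrable_indicator_iff measurableSet_Icc).2
          (integrableOn_const measure_Icc_lt_top.ne (by simp))
      · refine Eventually.of_forall fun s => ?_
        by_cases hs : s ∈ Icc (0:ℝ) 2
        · have h1 : ∀ᶠ u in atTop, (h (u + s) - h u) ∈ Metric.ball (0:ℝ) (ε/2) :=
            (hshift s) (Metric.ball_mem_nhds 0 (half_pos hε))
          have h2 : ∀ᶠ u in atTop, (B u).indicator (fun _ => (1:ℝ)) s = 0 := by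
            filter_upwards [h1] with u hu
            rw [Metric.mem_ball, Real.dist_eq, sub_zero] at hu
            refine Set.indicator_of_notMem (fun hmem => ?_) _
            exact absurd hmem.2 (not_lt.2 (le_of_lt hu))
          exact Tendsto.congr' (h2.mono fun u hu => hu.symm) tendsto_const_nhds
        · have : ∀ u, (B u).indicator (fun _ => (1:ℝ)) s = 0 := fun u =>
            Set.indicator_of_notMem (fun hmem => hs (hBsub u hmem)) _
          simp only [this] 
          exact tendsto_const_nhds
    have heq : ∀ u, ∫ s, (B u).indicator (fun _ => (1:ℝ)) s = (volume (B u)).toReal := by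
      intro u
      exact integral_indicator_one (hBmeas u)
    simpa [heq, integral_zero] using key
  have hsmall : ∀ᶠ u in atTop, (volume (B u)).toReal < 1/4 :=
    htend (Iio_mem_nhds (by norm_num : (0:ℝ) < 1/4))
  obtain ⟨A, hA⟩ := eventually_atTop.1 hsmall
  refine ⟨A, fun u hu t ht => ?_⟩
  have hBfin : ∀ w, volume (B w) ≠ ⊤ := by
    intro w
    exact ne_top_of_le_ne_top (by simp [Real.volume_Icc]) (measure_mono (hBsub w))
  have hBu : volume (B u) < ENNReal.ofReal (1/4) :=
    (ENNReal.lt_ofReal_iff_toReal_lt (hBfin u)).2 (hA u hu)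
  have hvA : A ≤ u + t := le_trans hu (le_add_of_nonneg_right ht.1)
  have hBv : volume (B (u + t)) < ENNReal.ofReal (1/4) :=
    (ENNReal.lt_ofReal_iff_toReal_lt (hBfin _)).2 (hA (u + t) hvA)
  -- find a common good point
  have key : ∃ s, s ∈ Icc t 2 ∧ s ∉ B u ∧ s - t ∉ B (u + t) := by
    by_contra hcon
    push_neg at hcon
    have hsub : Icc t 2 ⊆ B u ∪ (fun s => s - t) ⁻¹' (B (u + t)) := by
      intro s hs
      by_cases h1 : s ∈ B u
      · exact Or.inl h1
      · exact Or.inr (hcon s hs h1)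
    have h1 : volume (Icc t 2) ≤ volume (B u) + volume ((fun s : ℝ => s - t) ⁻¹' (B (u + t))) :=
      (measure_mono hsub).trans (measure_union_le _ _)
    have h2 : volume ((fun s : ℝ => s - t) ⁻¹' (B (u + t))) = volume (B (u + t)) := by
      simp only [sub_eq_add_neg]
      exact measure_preimage_add_right volume (-t) (B (u + t))
    rw [h2, Real.volume_Icc] at h1
    have h3 : volume (B u) + volume (B (u + t)) < ENNReal.ofReal (1/4) + ENNReal.ofReal (1/4) :=
      ENNReal.add_lt_add hBu hBv
    have h4 : ENNReal.ofReal (1/4) + ENNReal.ofReal (1/4) ≤ ENNReal.ofReal (2 - t) := by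
      rw [← ENNReal.ofReal_add (by norm_num) (by norm_num)]
      exact ENNReal.ofReal_le_ofReal (by linarith [ht.2])
    exact absurd (h1.trans_lt (h3.trans_le h4)) (lt_irrefl _)
  obtain ⟨s, hs, hsu, hsv'⟩ := key
  have hs1 : s ∈ Icc (0:ℝ) 2 := ⟨ht.1.trans hs.1, hs.2⟩
  have hs2 : s - t ∈ Icc (0:ℝ) 2 := ⟨sub_nonneg.2 hs.1, by linarith [hs.2, ht.1]⟩
  have e1 : |h (u + s) - h u| ≤ ε/2 := by
    by_contra hx
    push_neg at hx
    exact hsu ⟨hs1, hx⟩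
  have e2 : |h ((u + t) + (s - t)) - h (u + t)| ≤ ε/2 := by
    by_contra hx
    push_neg at hx
    exact hsv' ⟨hs2, hx⟩
  have harg : (u + t) + (s - t) = u + s := by ring
  rw [harg] at e2
  have hdecomp : h (u + t) - h u = (h (u + s) - h u) - (h (u + s) - h (u + t)) := by ring
  rw [hdecomp]
  calc |(h (u + s) - h u) - (h (u + s) - h (u + t))|
      ≤ |h (u + s) - h u| + |h (u + s) - h (u + t)| := abs_sub _ _
    _ ≤ ε/2 + ε/2 := add_le_add e1 e2
    _ = ε := by ring

/-- Sub-linear growth: under the same hypotheses, `h u - c·u → -∞` for every `c > 0`. -/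
lemma sv_sub_linear (h : ℝ → ℝ) (hmeas : Measurable h)
    (hshift : ∀ t : ℝ, Tendsto (fun u => h (u + t) - h u) atTop (nhds 0))
    (c : ℝ) (hc : 0 < c) :
    Tendsto (fun u => h u - c * u) atTop atBot := by
  obtain ⟨A, hA⟩ := sv_step_bound h hmeas hshift (c/2) (half_pos hc)
  have chain : ∀ n : ℕ, ∀ w, A ≤ w → w ≤ A + n → |h w - h A| ≤ (c/2) * n := by
    intro n
    induction n with
    | zero =>
      intro w h1 h2
      have : w = A := le_antisymm (by simpa using h2) h1
      simp [this]
    | succ n ih =>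
      intro w h1 h2
      set u := max A (w - 1) with hu
      have hu1 : A ≤ u := le_max_left _ _
      have hu2 : u ≤ A + n := by
        push_cast at h2
        exact max_le (le_add_of_nonneg_right n.cast_nonneg) (by linarith)
      have huw : u ≤ w := max_le h1 (by linarith)
      have ht : w - u ∈ Icc (0:ℝ) 1 := by
        constructor
        · linarith
        · have : w - 1 ≤ u := le_max_right _ _
          linarith
      have e1 := hA u hu1 (w - u) ht
      have harg : u + (w - u) = w := by ring
      rw [harg] at e1
      have e2 := ih u hu1 hu2
      have e3 : |h w - h A| ≤ |h w - h u| + |h u - h A| := abs_sub_le _ _ _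
      push_cast
      linarith
  have upper : ∀ w ≥ A, h w ≤ h A + (c/2) * (w - A + 1) := by
    intro w hw
    have hn : w ≤ A + ⌈w - A⌉₊ := by
      have := Nat.le_ceil (w - A)
      linarith
    have hb := chain ⌈w - A⌉₊ w hw hn
    have hcast : (⌈w - A⌉₊ : ℝ) ≤ w - A + 1 :=
      le_of_lt (Nat.ceil_lt_add_one (sub_nonneg.2 hw))
    have h1 := (abs_le.1 hb).2
    have h2 : (c/2) * (⌈w - A⌉₊ : ℝ) ≤ (c/2) * (w - A + 1) :=
      mul_le_mul_of_nonneg_left hcast (half_pos hc).le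
    linarith
  have hlin : Tendsto (fun w : ℝ => (h A + (c/2) * (1 - A)) - (c/2) * w) atTop atBot := by
    have h1 : Tendsto (fun w : ℝ => (c/2) * w) atTop atTop :=
      Tendsto.const_mul_atTop (half_pos hc) tendsto_id
    have h2 : Tendsto (fun w : ℝ => -((c/2) * w)) atTop atBot :=
      tendsto_neg_atTop_atBot.comp h1
    simpa [sub_eq_add_neg] using tendsto_atBot_add_const_left atTop (h A + (c/2) * (1 - A)) h2
  apply tendsto_atBot_mono' atTop _ hlin
  filter_upwards [eventually_ge_atTop A] with w hw
  have := upper w hw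
  nlinarith [this]

/-- **Slowly varying functions grow slower than any power.** Let `L` be a positive
measurable slowly varying function. Then for every `c > 0`, `L(x) = o(x^c)` as
`x → ∞`, i.e. `L(x)/x^c → 0`. -/
theorem slowly_varying_little_o
    (L : ℝ → ℝ) (hLmeas : Measurable L) (hLpos : ∀ x : ℝ, 0 < x → 0 < L x)
    (hsv : ∀ t : ℝ, 0 < t → Tendsto (fun x => L (t * x) / L x) atTop (nhds 1))
    (c : ℝ) (hc : 0 < c) :
    Tendsto (fun x : ℝ => L x / x ^ c) atTop (nhds 0) := by
  set h : ℝ → ℝ := fun u => Real.log (L (Real.exp u)) with hdef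
  have hmeas : Measurable h := (hLmeas.comp Real.measurable_exp).log
  have hshift : ∀ t : ℝ, Tendsto (fun u => h (u + t) - h u) atTop (nhds 0) := by
    intro t
    have h1 : Tendsto (fun u : ℝ => L (Real.exp t * Real.exp u) / L (Real.exp u)) atTop
        (nhds 1) := (hsv (Real.exp t) (Real.exp_pos t)).comp Real.tendsto_exp_atTop
    have h2 : Tendsto Real.log (nhds 1) (nhds 0) := by
      have := (Real.continuousAt_log one_ne_zero).tendsto
      simpa using this
    have h3 := h2.comp h1
    apply h3.congr
    intro u
    have hnum : (0:ℝ) < L (Real.exp t * Real.exp u) :=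
      hLpos _ (mul_pos (Real.exp_pos t) (Real.exp_pos u))
    have hden : (0:ℝ) < L (Real.exp u) := hLpos _ (Real.exp_pos u)
    simp only [Function.comp_apply, hdef]
    rw [Real.log_div hnum.ne' hden.ne', ← Real.exp_add, add_comm t u]
  have hsub := sv_sub_linear h hmeas hshift c hc
  have hlog : Tendsto (fun x : ℝ => h (Real.log x) - c * Real.log x) atTop atBot :=
    hsub.comp Real.tendsto_log_atTop
  have hexp : Tendsto (fun x : ℝ => Real.exp (h (Real.log x) - c * Real.log x)) atTop
      (nhds 0) := Real.tendsto_exp_atBot.comp hlog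
  apply hexp.congr'
  filter_upwards [eventually_ge_atTop (1:ℝ)] with x hx
  have hx0 : (0:ℝ) < x := lt_of_lt_of_le zero_lt_one hx
  have hL : (0:ℝ) < L x := hLpos x hx0
  have h1 : h (Real.log x) = Real.log (L x) := by
    simp only [hdef, Real.exp_log hx0]
  rw [h1, Real.exp_sub, Real.exp_log hL, Real.rpow_def_of_pos hx0, mul_comm c (Real.log x)]
end
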